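/- arXiv:2008.08792 — 10 statements merged into one kernel-verified Lean document; each statement's English description precedes it below -/
import Mathlib

section
/- Let F be a family of k-element subsets of [n], let r be a positive integer, and let x ≠ y be elements of [n] with |F(x)| ≥ |F(y)|. If F has no matching of size r, then the shifted family S_{x,y}(F) also has no matching of size r. -/
/-- `F` is a family of `k`-element subsets of `[n] = {1, …, n}`. -/
def IsFamily (n k : ℕ) (F : Finset (Finset ℕ)) : Prop :=
  ∀ A ∈ F, A ⊆ Finset.Icc 1 n ∧ A.card = k

/-- `M` is a matching in the family `F`: a collection of pairwise disjoint members of `F`. -/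
def IsMatchingIn (F M : Finset (Finset ℕ)) : Prop :=
  M ⊆ F ∧ (M : Set (Finset ℕ)).PairwiseDisjoint id

/-- The collection `M` covers the set `B`. -/
def Covers (M : Finset (Finset ℕ)) (B : Finset ℕ) : Prop :=
  B ⊆ M.biUnion id

/-- `F` has a perfect matching: a matching covering all of `[n]`. -/
def HasPerfectMatching (n : ℕ) (F : Finset (Finset ℕ)) : Prop :=
  ∃ M, IsMatchingIn F M ∧ Covers M (Finset.Icc 1 n)

/-- `B` is a blocking set of `F` (with `s = n / k`): a subset of `[n]` of size at most `s`
that is not covered by any matching in `F` of size `|B|`. -/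
def IsBlockingSet (n s : ℕ) (F : Finset (Finset ℕ)) (B : Finset ℕ) : Prop :=
  B ⊆ Finset.Icc 1 n ∧ B.card ≤ s ∧
    ¬ ∃ M, IsMatchingIn F M ∧ M.card = B.card ∧ Covers M B
/-- `F(x)`: the family of all sets `G` with `x ∉ G` and `G ∪ {x} ∈ F`. -/
def shadeAt (F : Finset (Finset ℕ)) (x : ℕ) : Finset (Finset ℕ) :=
  (F.filter (fun A => x ∈ A)).image (fun A => A.erase x)

/-- The shift `S_{x,y}` applied to a single set `A` of the family `F`. -/
def shiftSet (F : Finset (Finset ℕ)) (x y : ℕ) (A : Finset ℕ) : Finset ℕ :=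
  if y ∈ A ∧ x ∉ A ∧ insert x (A.erase y) ∉ F then insert x (A.erase y) else A

/-- The shifted family `S_{x,y}(F)`. -/
def shiftFam (F : Finset (Finset ℕ)) (x y : ℕ) : Finset (Finset ℕ) :=
  F.image (shiftSet F x y)

/-- `F` is shifted on `Y`: `|F(x)|` is non-increasing in `x` over `Y`, and no meaningful
shift `S_{x,y}` with `x, y ∈ Y` can be performed on `F`. -/
def ShiftedOn (F : Finset (Finset ℕ)) (Y : Finset ℕ) : Prop :=
  (∀ x ∈ Y, ∀ y ∈ Y, x ≤ y → (shadeAt F y).card ≤ (shadeAt F x).card) ∧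
    ∀ x ∈ Y, ∀ y ∈ Y, x ≠ y → (shadeAt F y).card ≤ (shadeAt F x).card →
      shiftFam F x y = F

/-- Fact 2.1: Shifting preserves the absence of a matching of size `r`:
if `F` has no matching of size `r`, then neither does `S_{x,y}(F)`. -/
theorem statement5 (n k r : ℕ) (hr : 1 ≤ r) (F : Finset (Finset ℕ))
    (hF : IsFamily n k F) (x y : ℕ) (hx : x ∈ Finset.Icc 1 n) (hy : y ∈ Finset.Icc 1 n)
    (hxy : x ≠ y) (hshade : (shadeAt F y).card ≤ (shadeAt F x).card)
    (hnomatch : ¬ ∃ M : Finset (Finset ℕ), IsMatchingIn F M ∧ M.card = r) :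
    ¬ ∃ M : Finset (Finset ℕ), IsMatchingIn (shiftFam F x y) M ∧ M.card = r := by
  rintro ⟨M, ⟨hMF, hMdisj⟩, hMcard⟩
  apply hnomatch
  by_cases hall : ∀ A ∈ M, A ∈ F
  · exact ⟨M, ⟨fun A hA => hall A hA, hMdisj⟩, hMcard⟩
  push_neg at hall
  obtain ⟨A, hAM, hAF⟩ := hall
  obtain ⟨D, hDF, hDA⟩ := Finset.mem_image.mp (hMF hAM)
  unfold shiftSet at hDA
  by_cases hcond : y ∈ D ∧ x ∉ D ∧ insert x (D.erase y) ∉ F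
  swap
  · rw [if_neg hcond] at hDA; exact absurd (hDA ▸ hDF) hAF
  rw [if_pos hcond] at hDA
  obtain ⟨hyD, hxD, _⟩ := hcond
  have hxA : x ∈ A := hDA ▸ Finset.mem_insert_self x _
  have hyA : y ∉ A := by
    rw [← hDA]; simp [Finset.mem_insert, Ne.symm hxy]
  have hdisjM : ∀ C ∈ M, ∀ C' ∈ M, C ≠ C' → Disjoint C C' := by
    intro C hC C' hC' h
    exact hMdisj (Finset.mem_coe.mpr hC) (Finset.mem_coe.mpr hC') h
  have hother : ∀ C ∈ M, C ≠ A → C ∈ F ∧ x ∉ C := by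
    intro C hCM hCA
    have hxC : x ∉ C := fun hxC =>
      Finset.disjoint_left.mp (hdisjM A hAM C hCM (Ne.symm hCA)) hxA hxC
    obtain ⟨E, hEF, hEC⟩ := Finset.mem_image.mp (hMF hCM)
    unfold shiftSet at hEC
    split_ifs at hEC
    · exact absurd (hEC ▸ Finset.mem_insert_self x _) hxC
    · exact ⟨hEC ▸ hEF, hxC⟩
  have hC'F : ∀ C ∈ M, C ≠ A → y ∈ C → insert x (C.erase y) ∈ F := by
    intro C hCM hCA hyC
    by_contra hC'
    obtain ⟨hCF, hxC⟩ := hother C hCM hCA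
    obtain ⟨E, hEF, hEC⟩ := Finset.mem_image.mp (hMF hCM)
    unfold shiftSet at hEC
    split_ifs at hEC with h
    · exact hxC (hEC ▸ Finset.mem_insert_self x _)
    · subst hEC; exact h ⟨hyC, hxC, hC'⟩
  have hDsub : ∀ z ∈ D, z = y ∨ z ∈ A := by
    intro z hz
    rcases eq_or_ne z y with h | h
    · exact Or.inl h
    · exact Or.inr (hDA ▸ Finset.mem_insert_of_mem (Finset.mem_erase.mpr ⟨h, hz⟩))
  by_cases hyC : ∃ C ∈ M, C ≠ A ∧ y ∈ C
  · -- some other member C contains y; swap x and y between A and C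
    obtain ⟨C, hCM, hCA, hyCmem⟩ := hyC
    obtain ⟨hCF, hxC⟩ := hother C hCM hCA
    set C' : Finset ℕ := insert x (C.erase y) with hC'def
    have hC'mem : C' ∈ F := hC'F C hCM hCA hyCmem
    have hxC' : x ∈ C' := Finset.mem_insert_self x _
    have hyC' : y ∉ C' := by simp [hC'def, Finset.mem_insert, Ne.symm hxy]
    have hC'sub : ∀ z ∈ C', z = x ∨ z ∈ C := by
      intro z hz
      rcases Finset.mem_insert.mp hz with h | h
      · exact Or.inl h
      · exact Or.inr (Finset.mem_of_mem_erase h)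
    -- properties of remaining members
    have hrest : ∀ E ∈ (M.erase A).erase C, E ∈ M ∧ E ≠ A ∧ E ≠ C := by
      intro E hE
      obtain ⟨hEC, hEA, hEM⟩ : E ≠ C ∧ E ≠ A ∧ E ∈ M := by
        obtain ⟨h1, h2⟩ := Finset.mem_erase.mp hE
        obtain ⟨h3, h4⟩ := Finset.mem_erase.mp h2
        exact ⟨h1, h3, h4⟩
      exact ⟨hEM, hEA, hEC⟩
    have hyE : ∀ E ∈ (M.erase A).erase C, y ∉ E := by
      intro E hE hyE
      obtain ⟨hEM, _, hEC⟩ := hrest E hE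
      exact Finset.disjoint_left.mp (hdisjM C hCM E hEM (Ne.symm hEC)) hyCmem hyE
    have hxE : ∀ E ∈ (M.erase A).erase C, x ∉ E := by
      intro E hE
      obtain ⟨hEM, hEA, _⟩ := hrest E hE
      exact (hother E hEM hEA).2
    have hdisjDE : ∀ E ∈ (M.erase A).erase C, Disjoint D E := by
      intro E hE
      obtain ⟨hEM, hEA, _⟩ := hrest E hE
      rw [Finset.disjoint_left]
      intro z hzD hzE
      rcases hDsub z hzD with h | h
      · exact hyE E hE (h ▸ hzE)
      · exact Finset.disjoint_left.mp (hdisjM A hAM E hEM (Ne.symm hEA)) h hzE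
    have hdisjC'E : ∀ E ∈ (M.erase A).erase C, Disjoint C' E := by
      intro E hE
      obtain ⟨hEM, _, hEC⟩ := hrest E hE
      rw [Finset.disjoint_left]
      intro z hzC' hzE
      rcases hC'sub z hzC' with h | h
      · exact hxE E hE (h ▸ hzE)
      · exact Finset.disjoint_left.mp (hdisjM C hCM E hEM (Ne.symm hEC)) h hzE
    have hdisjDC' : Disjoint D C' := by
      rw [Finset.disjoint_left]
      intro z hzD hzC'
      rcases hDsub z hzD with h | h
      · exact hyC' (h ▸ hzC')
      · rcases hC'sub z hzC' with h2 | h2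
        · exact hxD (h2 ▸ hzD)
        · exact Finset.disjoint_left.mp
            (hdisjM A hAM C hCM (Ne.symm hCA)) h h2
    refine ⟨insert D (insert C' ((M.erase A).erase C)), ⟨?_, ?_⟩, ?_⟩
    · intro E hE
      rcases Finset.mem_insert.mp hE with h | h
      · exact h ▸ hDF
      rcases Finset.mem_insert.mp h with h2 | h2
      · exact h2 ▸ hC'mem
      · exact (hother E (hrest E h2).1 (hrest E h2).2.1).1
    · rw [Finset.coe_insert, Finset.coe_insert]
      have base : ((((M.erase A).erase C) : Finset (Finset ℕ)) :
          Set (Finset ℕ)).PairwiseDisjoint id := by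
        apply hMdisj.subset
        intro E hE
        exact Finset.mem_coe.mpr (hrest E (Finset.mem_coe.mp hE)).1
      have step1 : (insert C' (((M.erase A).erase C) : Set (Finset ℕ))).PairwiseDisjoint id :=
        base.insert (fun E hE _ => hdisjC'E E (Finset.mem_coe.mp hE))
      exact step1.insert (by
        intro E hE _
        rcases hE with h | h
        · exact h ▸ hdisjDC'
        · exact hdisjDE E (Finset.mem_coe.mp h))
    · have hCM' : C ∈ M.erase A := Finset.mem_erase.mpr ⟨hCA, hCM⟩
      have hC'notin : C' ∉ (M.erase A).erase C := fun h => hxE C' h hxC'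
      have hDnotin : D ∉ insert C' ((M.erase A).erase C) := by
        intro h
        rcases Finset.mem_insert.mp h with h2 | h2
        · exact hyC' (h2 ▸ hyD)
        · exact hyE D h2 hyD
      rw [Finset.card_insert_of_notMem hDnotin,
        Finset.card_insert_of_notMem hC'notin,
        Finset.card_erase_of_mem hCM', Finset.card_erase_of_mem hAM, hMcard]
      have h2r : 2 ≤ r := by
        rw [← hMcard]
        exact Finset.one_lt_card.mpr ⟨A, hAM, C, hCM, Ne.symm hCA⟩
      omega
  · -- no other member contains y; replace A by D
    push_neg at hyC
    have hyE : ∀ E ∈ M.erase A, y ∉ E := by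
      intro E hE
      obtain ⟨hEA, hEM⟩ := Finset.mem_erase.mp hE
      exact hyC E hEM hEA
    have hdisjDE : ∀ E ∈ M.erase A, Disjoint D E := by
      intro E hE
      obtain ⟨hEA, hEM⟩ := Finset.mem_erase.mp hE
      rw [Finset.disjoint_left]
      intro z hzD hzE
      rcases hDsub z hzD with h | h
      · exact hyE E hE (h ▸ hzE)
      · exact Finset.disjoint_left.mp (hdisjM A hAM E hEM (Ne.symm hEA)) h hzE
    refine ⟨insert D (M.erase A), ⟨?_, ?_⟩, ?_⟩
    · intro E hE
      rcases Finset.mem_insert.mp hE with h | h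
      · exact h ▸ hDF
      · obtain ⟨hEA, hEM⟩ := Finset.mem_erase.mp h
        exact (hother E hEM hEA).1
    · rw [Finset.coe_insert]
      have base : (((M.erase A) : Finset (Finset ℕ)) :
          Set (Finset ℕ)).PairwiseDisjoint id := by
        apply hMdisj.subset
        intro E hE
        exact Finset.mem_coe.mpr (Finset.mem_erase.mp (Finset.mem_coe.mp hE)).2
      exact base.insert (fun E hE _ => hdisjDE E (Finset.mem_coe.mp hE))
    · have hDnotin : D ∉ M.erase A := fun h => hyE D h hyD
      rw [Finset.card_insert_of_notMem hDnotin, Finset.card_erase_of_mem hAM, hMcard]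
      omega
end

section
/- Let F be a family of k-element subsets of [n] and let x ≠ y be elements of [n] with |F(x)| ≥ |F(y)|. If F′ = S_{x,y}(F) is a meaningful shift of F (that is, F′ ≠ F), then Σ_{i=1}^{n} |F′(i)|² > Σ_{i=1}^{n} |F(i)|². -/
lemma shade_card_eq (G : Finset (Finset ℕ)) (i : ℕ) :
    (shadeAt G i).card = (G.filter (fun A => i ∈ A)).card := by
  unfold shadeAt
  apply Finset.card_image_of_injOn
  intro A hA B hB h
  simp only [Finset.coe_filter, Set.mem_setOf_eq] at hA hB
  rw [← Finset.insert_erase hA.2, ← Finset.insert_erase hB.2]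
  exact congrArg (insert i) h

lemma shift_injOn (F : Finset (Finset ℕ)) (x y : ℕ) (hxy : x ≠ y) :
    ∀ A ∈ F, ∀ B ∈ F, shiftSet F x y A = shiftSet F x y B → A = B := by
  intro A hA B hB h
  unfold shiftSet at h
  by_cases pA : y ∈ A ∧ x ∉ A ∧ insert x (A.erase y) ∉ F <;>
    by_cases pB : y ∈ B ∧ x ∉ B ∧ insert x (B.erase y) ∉ F
  · rw [if_pos pA, if_pos pB] at h
    have hAB : A.erase y = B.erase y := by
      have hxA : x ∉ A.erase y := fun h' => pA.2.1 (Finset.mem_of_mem_erase h')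
      have hxB : x ∉ B.erase y := fun h' => pB.2.1 (Finset.mem_of_mem_erase h')
      have h2 := congrArg (fun S => Finset.erase S x) h
      simpa [Finset.erase_insert hxA, Finset.erase_insert hxB] using h2
    calc A = insert y (A.erase y) := (Finset.insert_erase pA.1).symm
      _ = insert y (B.erase y) := by rw [hAB]
      _ = B := Finset.insert_erase pB.1
  · rw [if_pos pA, if_neg pB] at h
    rw [← h] at hB
    exact absurd hB pA.2.2
  · rw [if_neg pA, if_pos pB] at h
    rw [h] at hA
    exact absurd hA pB.2.2
  · rw [if_neg pA, if_neg pB] at h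
    exact h

lemma filter_image_eq (G : Finset (Finset ℕ)) (f : Finset ℕ → Finset ℕ)
    (p : Finset ℕ → Prop) [DecidablePred p] :
    (G.image f).filter p = (G.filter (fun A => p (f A))).image f := by
  ext B
  simp only [Finset.mem_filter, Finset.mem_image]
  constructor
  · rintro ⟨⟨A, hA, rfl⟩, h⟩; exact ⟨A, ⟨hA, h⟩, rfl⟩
  · rintro ⟨A, ⟨hA, h⟩, rfl⟩; exact ⟨⟨A, hA, rfl⟩, h⟩

lemma shade_shift_card (F : Finset (Finset ℕ)) (x y : ℕ) (hxy : x ≠ y) (i : ℕ) :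
    (shadeAt (shiftFam F x y) i).card
      = (F.filter (fun A => i ∈ shiftSet F x y A)).card := by
  rw [shade_card_eq, shiftFam, filter_image_eq]
  exact Finset.card_image_of_injOn fun A hA B hB h =>
    shift_injOn F x y hxy A (Finset.mem_filter.mp hA).1 B (Finset.mem_filter.mp hB).1 h

/-- Fact 2.2: If `F' = S_{x,y}(F)` is a meaningful shift of `F`
(i.e. `F' ≠ F`), then `Σ_{i=1}^n |F'(i)|² > Σ_{i=1}^n |F(i)|²`. -/
theorem statement6 (n k : ℕ) (F : Finset (Finset ℕ)) (hF : IsFamily n k F)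
    (x y : ℕ) (hx : x ∈ Finset.Icc 1 n) (hy : y ∈ Finset.Icc 1 n) (hxy : x ≠ y)
    (hshade : (shadeAt F y).card ≤ (shadeAt F x).card)
    (hmeaningful : shiftFam F x y ≠ F) :
    ∑ i ∈ Finset.Icc 1 n, (shadeAt F i).card ^ 2 <
      ∑ i ∈ Finset.Icc 1 n, (shadeAt (shiftFam F x y) i).card ^ 2 := by
  classical
  set P : Finset ℕ → Prop := fun A => y ∈ A ∧ x ∉ A ∧ insert x (A.erase y) ∉ F with hP
  have hSdef : ∀ A, shiftSet F x y A = if P A then insert x (A.erase y) else A := by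
    intro A; rfl
  set D := F.filter P with hD
  -- m ≥ 1
  have hm : 1 ≤ D.card := by
    rcases Finset.eq_empty_or_nonempty D with hDe | hDn
    · exfalso
      apply hmeaningful
      have : ∀ A ∈ F, shiftSet F x y A = A := by
        intro A hA
        have : ¬ P A := by
          intro hPA
          have : A ∈ D := Finset.mem_filter.mpr ⟨hA, hPA⟩
          simp [hDe] at this
        rw [hSdef, if_neg this]
      calc shiftFam F x y = F.image id := Finset.image_congr fun A hA => this A hA
        _ = F := Finset.image_id
    · exact Finset.card_pos.mpr hDn
  -- card at i ∉ {x, y} unchanged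
  have hne : ∀ i, i ≠ x → i ≠ y →
      (shadeAt (shiftFam F x y) i).card = (shadeAt F i).card := by
    intro i hix hiy
    rw [shade_shift_card F x y hxy i, shade_card_eq]
    congr 1
    apply Finset.filter_congr
    intro A _
    rw [hSdef]
    by_cases hPA : P A
    · simp [if_pos hPA, Finset.mem_insert, hix, Finset.mem_erase, hiy]
    · simp [if_neg hPA]
  -- card at x increases by m
  have hcx : (shadeAt (shiftFam F x y) x).card = (shadeAt F x).card + D.card := by
    rw [shade_shift_card F x y hxy x, shade_card_eq]
    have h1 : F.filter (fun A => x ∈ shiftSet F x y A)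
        = F.filter (fun A => x ∈ A) ∪ D := by
      rw [hD, ← Finset.filter_or]
      apply Finset.filter_congr
      intro A hA
      rw [hSdef]
      by_cases hPA : P A
      · rw [if_pos hPA]
        exact ⟨fun _ => Or.inr hPA, fun _ => Finset.mem_insert_self x _⟩
      · rw [if_neg hPA]
        constructor
        · exact Or.inl
        · rintro (h | h)
          · exact h
          · exact absurd h hPA
    have hdis : Disjoint (F.filter (fun A => x ∈ A)) D :=
      Finset.disjoint_left.mpr fun A hA hAD =>
        ((Finset.mem_filter.mp hAD).2).2.1 (Finset.mem_filter.mp hA).2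
    rw [h1, Finset.card_union_of_disjoint hdis]
  -- card at y decreases by m
  have hDsub : D ⊆ F.filter (fun A => y ∈ A) := by
    intro A hA
    rw [hD, Finset.mem_filter] at hA
    exact Finset.mem_filter.mpr ⟨hA.1, hA.2.1⟩
  have hcy : (shadeAt (shiftFam F x y) y).card + D.card = (shadeAt F y).card := by
    rw [shade_shift_card F x y hxy y, shade_card_eq]
    have h1 : F.filter (fun A => y ∈ shiftSet F x y A)
        = F.filter (fun A => y ∈ A) \ D := by
      rw [hD, Finset.sdiff_eq_filter, Finset.filter_filter]
      apply Finset.filter_congr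
      intro A hA
      rw [hSdef]
      by_cases hPA : P A
      · rw [if_pos hPA]
        constructor
        · intro h
          rcases Finset.mem_insert.mp h with h | h
          · exact absurd h.symm hxy
          · exact absurd h (Finset.notMem_erase y A)
        · rintro ⟨_, hnd⟩
          exact absurd (Finset.mem_filter.mpr ⟨hA, hPA⟩) hnd
      · rw [if_neg hPA]
        exact ⟨fun h => ⟨h, fun hd => hPA (Finset.mem_filter.mp hd).2⟩, fun h => h.1⟩
    rw [h1, Finset.card_sdiff_of_subset hDsub]
    exact Nat.sub_add_cancel (Finset.card_le_card hDsub)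
  -- assemble
  have hy' : y ∈ (Finset.Icc 1 n).erase x := Finset.mem_erase.mpr ⟨hxy.symm, hy⟩
  rw [← Finset.add_sum_erase _ _ hx, ← Finset.add_sum_erase _ _ hx,
    ← Finset.add_sum_erase _ _ hy', ← Finset.add_sum_erase _ _ hy']
  have hrest : ∑ i ∈ ((Finset.Icc 1 n).erase x).erase y, (shadeAt F i).card ^ 2
      = ∑ i ∈ ((Finset.Icc 1 n).erase x).erase y, (shadeAt (shiftFam F x y) i).card ^ 2 := by
    apply Finset.sum_congr rfl
    intro i hi
    have hiy : i ≠ y := (Finset.mem_erase.mp hi).1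
    have hix : i ≠ x := (Finset.mem_erase.mp (Finset.mem_erase.mp hi).2).1
    rw [hne i hix hiy]
  rw [hrest]
  have key : (shadeAt F x).card ^ 2 + (shadeAt F y).card ^ 2
      < (shadeAt (shiftFam F x y) x).card ^ 2 + (shadeAt (shiftFam F x y) y).card ^ 2 := by
    set a := (shadeAt F x).card
    set c := (shadeAt (shiftFam F x y) y).card
    set m := D.card
    rw [hcx, ← hcy]
    nlinarith [hshade, hm, hcy]
  omega
end

section
/- Let k ≥ 2 and b ≥ 1 be integers. There exists s₀ = s₀(k, b) such that for all integers s ≥ s₀ with n = k·s ≥ bk + b the following holds: if F is a family of k-element subsets of [n] with |F| > |E(k, n, b)| and B is a blocking set of F with |B| ≤ s/2, then there is no matching in F that covers B. -/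
/-- An admissible choice of the pairwise disjoint `(k-1)`-element sets
`E_1, …, E_{b-1} ⊆ [b+1, n]` used in the construction of `E(k, n, b)`. -/
def AdmissibleChoice (n k b : ℕ) (E : ℕ → Finset ℕ) : Prop :=
  (∀ i ∈ Finset.Icc 1 (b - 1), E i ⊆ Finset.Icc (b + 1) n ∧ (E i).card = k - 1) ∧
    ∀ i ∈ Finset.Icc 1 (b - 1), ∀ j ∈ Finset.Icc 1 (b - 1), i ≠ j → Disjoint (E i) (E j)

/-- The subfamily `𝓔_i`: the set `{i} ∪ E_i` (omitted when `i = b`), together with all sets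
`{i} ∪ S` where `S ⊆ [b+1, n]`, `|S| = k-1` and `S` meets `E_1 ∪ ⋯ ∪ E_{i-1}`. -/
def famEpart (n k b : ℕ) (E : ℕ → Finset ℕ) (i : ℕ) : Finset (Finset ℕ) :=
  (((Finset.Icc (b + 1) n).powersetCard (k - 1)).filter
      (fun S => (i < b ∧ S = E i) ∨ (S ∩ (Finset.Icc 1 (i - 1)).biUnion E).Nonempty)).image
    (fun S => insert i S)

/-- The family `E(k, n, b)`: all `k`-element subsets of `[b+1, n]` together with
`𝓔_1 ∪ ⋯ ∪ 𝓔_b`. -/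
def famE (n k b : ℕ) (E : ℕ → Finset ℕ) : Finset (Finset ℕ) :=
  (Finset.Icc (b + 1) n).powersetCard k ∪ (Finset.Icc 1 b).biUnion (famEpart n k b E)

lemma choose_le_sub_add (b k : ℕ) : ∀ n : ℕ,
    n.choose (k+1) ≤ (n - b).choose (k+1) + b * (n - 1).choose k := by
  induction b with
  | zero => intro n; simp
  | succ b ih =>
    intro n
    match n with
    | 0 => simp
    | n + 1 =>
      have h1 : (n + 1).choose (k + 1) = n.choose k + n.choose (k + 1) :=
        Nat.choose_succ_succ' n k
      have h2 := ih n
      have h3 : (n - 1).choose k ≤ n.choose k := Nat.choose_le_choose _ (by omega)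
      have h4 : n - b = n + 1 - (b + 1) := by omega
      rw [h4] at h2
      have h6 : b * (n-1).choose k ≤ b * n.choose k := Nat.mul_le_mul_left b h3
      have h5 : (b+1) * (n+1-1).choose k = b * n.choose k + n.choose k := by
        simp only [Nat.add_sub_cancel]; ring
      omega

/-- Lemma 2.4: For `s` large enough, if `|F| > |E(k, n, b)|` and `B` is
a blocking set of `F` with `|B| ≤ s/2`, then no matching in `F` covers `B`. -/
theorem statement8 (k b : ℕ) (hk : 2 ≤ k) (hb : 1 ≤ b) :
    ∃ s₀ : ℕ, ∀ s : ℕ, s₀ ≤ s → ∀ n : ℕ, n = k * s → b * k + b ≤ n →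
      ∀ F : Finset (Finset ℕ), IsFamily n k F →
        (∀ E : ℕ → Finset ℕ, AdmissibleChoice n k b E → (famE n k b E).card < F.card) →
        ∀ B : Finset ℕ, IsBlockingSet n s F B → 2 * B.card ≤ s →
          ¬ ∃ M : Finset (Finset ℕ), IsMatchingIn F M ∧ Covers M B := by
  classical
  refine ⟨2 * (Nat.factorial k * b * 4 ^ k) + 4, ?_⟩
  intro s hs n hn hbn F hF hcard B hBlock hB2
  rintro ⟨M, hM, hMB⟩
  obtain ⟨hBsub, hBcard, hBnot⟩ := hBlock
  -- B is nonempty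
  rcases Finset.eq_empty_or_nonempty B with rfl | hBne
  · exact hBnot ⟨∅, ⟨Finset.empty_subset _, by simp⟩, by simp, by simp [Covers]⟩
  have hm1 : 1 ≤ B.card := Finset.card_pos.mpr hBne
  set m := B.card with hmdef
  -- Step 0: |F| > C(n-b, k)
  have hFbig : (n - b).choose k < F.card := by
    set E₀ : ℕ → Finset ℕ := fun i => Finset.Icc (b + (i-1)*(k-1) + 1) (b + i*(k-1)) with hE₀
    have hadm : AdmissibleChoice n k b E₀ := by
      constructor
      · intro i hi
        rw [Finset.mem_Icc] at hi
        have hik : i * (k-1) ≤ (b-1) * (k-1) := Nat.mul_le_mul_right _ (by omega)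
        have hbk : (b-1)*(k-1) + (k - 1) = b * (k-1) := by
          have h : (b - 1) + 1 = b := by omega
          calc (b-1)*(k-1) + (k-1) = ((b-1)+1) * (k-1) := by ring
          _ = b * (k-1) := by rw [h]
        have hbk2 : b * (k - 1) + b = b * k := by
          have h : (k - 1) + 1 = k := by omega
          calc b * (k-1) + b = b * ((k-1)+1) := by ring
          _ = b * k := by rw [h]
        constructor
        · intro x hx
          simp only [hE₀, Finset.mem_Icc] at hx
          rw [Finset.mem_Icc]
          have h2 : (i-1)*(k-1) ≤ i*(k-1) := Nat.mul_le_mul_right _ (by omega)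
          omega
        · have h1 : (i - 1) * (k-1) + (k-1) = i * (k-1) := by
            have h : (i - 1) + 1 = i := by omega
            calc (i-1)*(k-1) + (k-1) = ((i-1)+1)*(k-1) := by ring
            _ = i * (k-1) := by rw [h]
          simp only [hE₀, Nat.card_Icc]
          omega
      · intro i hi j hj hij
        rw [Finset.mem_Icc] at hi hj
        rw [Finset.disjoint_left]
        intro x hxi hxj
        simp only [hE₀, Finset.mem_Icc] at hxi hxj
        rcases Nat.lt_or_ge i j with h | h
        · have : i * (k-1) ≤ (j-1) * (k-1) := Nat.mul_le_mul_right _ (by omega)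
          omega
        · have : j * (k-1) ≤ (i-1) * (k-1) := Nat.mul_le_mul_right _ (by omega)
          omega
    have hlt := hcard E₀ hadm
    have hsub : (Finset.Icc (b+1) n).powersetCard k ⊆ famE n k b E₀ :=
      Finset.subset_union_left
    have hle := Finset.card_le_card hsub
    rw [Finset.card_powersetCard, Nat.card_Icc] at hle
    have hnb : n + 1 - (b + 1) = n - b := by omega
    rw [hnb] at hle
    omega
  -- Step 1: M' ⊆ M consisting of members meeting B; it covers B and |M'| ≤ m
  set M' := M.filter (fun A => (A ∩ B).Nonempty) with hM'def
  have hM'sub : M' ⊆ M := Finset.filter_subset _ _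
  have hM'match : IsMatchingIn F M' :=
    ⟨hM'sub.trans hM.1, hM.2.subset (Finset.coe_subset.mpr hM'sub)⟩
  have hM'cov : Covers M' B := by
    intro x hx
    obtain ⟨A, hA, hxA⟩ := Finset.mem_biUnion.mp (hMB hx)
    exact Finset.mem_biUnion.mpr
      ⟨A, Finset.mem_filter.mpr ⟨hA, ⟨x, Finset.mem_inter.mpr ⟨hxA, hx⟩⟩⟩, hxA⟩
  have hM'card : M'.card ≤ m := by
    refine Finset.card_le_card_of_injOn
      (fun A => if h : (A ∩ B).Nonempty then (A ∩ B).min' h else 0) ?_ ?_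
    · intro A hA
      have h := (Finset.mem_filter.mp hA).2
      simp only [dif_pos h]
      exact (Finset.mem_inter.mp ((A ∩ B).min'_mem h)).2
    · intro A1 h1 A2 h2 heq
      by_contra hne
      rw [Finset.mem_coe] at h1 h2
      have hd : Disjoint (id A1) (id A2) :=
        hM.2 (Finset.mem_coe.mpr (hM'sub h1)) (Finset.mem_coe.mpr (hM'sub h2)) hne
      have hn1 := (Finset.mem_filter.mp h1).2
      have hn2 := (Finset.mem_filter.mp h2).2
      have e1 : (A1 ∩ B).min' hn1 ∈ A1 := (Finset.mem_inter.mp ((A1 ∩ B).min'_mem hn1)).1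
      have e2 : (A2 ∩ B).min' hn2 ∈ A2 := (Finset.mem_inter.mp ((A2 ∩ B).min'_mem hn2)).1
      simp only [dif_pos hn1, dif_pos hn2] at heq
      refine (Finset.disjoint_left.mp hd) e1 ?_
      rw [heq]; exact e2
  -- Step 2: a maximal matching N covering B with |N| ≤ m
  set 𝒮 := F.powerset.filter (fun N => IsMatchingIn F N ∧ Covers N B ∧ N.card ≤ m) with h𝒮
  have hM'mem : M' ∈ 𝒮 :=
    Finset.mem_filter.mpr ⟨Finset.mem_powerset.mpr hM'match.1, hM'match, hM'cov, hM'card⟩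
  obtain ⟨N, hNmem, hNmax⟩ := 𝒮.exists_max_image Finset.card ⟨M', hM'mem⟩
  rw [h𝒮, Finset.mem_filter] at hNmem
  obtain ⟨-, hNmatch, hNcov, hNm⟩ := hNmem
  have hNF : N ⊆ F := hNmatch.1
  have hNlt : N.card < m :=
    lt_of_le_of_ne hNm (fun h => hBnot ⟨N, hNmatch, h, hNcov⟩)
  set U := N.biUnion id with hUdef
  have hUsub : U ⊆ Finset.Icc 1 n :=
    Finset.biUnion_subset.mpr (fun A hA => (hF A (hNF hA)).1)
  have hUmeet : ∀ A ∈ F, (A ∩ U).Nonempty := by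
    intro A hA
    by_contra hcon
    have hdisj : Disjoint A U := by
      rw [Finset.not_nonempty_iff_eq_empty] at hcon
      exact Finset.disjoint_iff_inter_eq_empty.mpr hcon
    have hAk : A.card = k := (hF A hA).2
    have hAne : A ∉ N := by
      intro hAN
      have hsubU : A ⊆ U := Finset.subset_biUnion_of_mem id hAN
      have hAe : A = ∅ := Finset.eq_empty_of_forall_notMem
        (fun x hx => Finset.disjoint_left.mp hdisj hx (hsubU hx))
      rw [hAe] at hAk
      simp at hAk
      omega
    have hins : insert A N ∈ 𝒮 := by
      rw [h𝒮, Finset.mem_filter]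
      refine ⟨Finset.mem_powerset.mpr (Finset.insert_subset hA hNF),
        ⟨Finset.insert_subset hA hNF, ?_⟩, ?_, ?_⟩
      · rw [Finset.coe_insert]
        refine hNmatch.2.insert (fun C hC _ => ?_)
        have hCU : C ⊆ U := Finset.subset_biUnion_of_mem id (Finset.mem_coe.mp hC)
        exact (hdisj.mono_right hCU : Disjoint (id A) (id C))
      · exact fun x hx =>
          Finset.biUnion_subset_biUnion_of_subset_left id (Finset.subset_insert A N) (hNcov hx)
      · rw [Finset.card_insert_of_notMem hAne]; omega
    have := hNmax _ hins
    rw [Finset.card_insert_of_notMem hAne] at this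
    omega
  -- Step 3: |U| ≤ k * (m - 1)
  have hUcard : U.card ≤ k * (m - 1) := by
    calc U.card ≤ ∑ A ∈ N, (id A).card := Finset.card_biUnion_le
    _ = ∑ A ∈ N, k := Finset.sum_congr rfl (fun A hA => (hF A (hNF hA)).2)
    _ = N.card * k := by rw [Finset.sum_const, smul_eq_mul]
    _ ≤ (m-1) * k := Nat.mul_le_mul_right _ (by omega)
    _ = k * (m-1) := Nat.mul_comm _ _
  -- Step 4: counting
  set P := ((Finset.Icc 1 n) \ U).powersetCard k with hPdef
  have hPdisj : Disjoint F P := by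
    rw [Finset.disjoint_left]
    intro A hA hAP
    rw [hPdef, Finset.mem_powersetCard] at hAP
    obtain ⟨x, hx⟩ := hUmeet A hA
    rw [Finset.mem_inter] at hx
    exact (Finset.mem_sdiff.mp (hAP.1 hx.1)).2 hx.2
  have hPn : F ∪ P ⊆ (Finset.Icc 1 n).powersetCard k := by
    intro A hA
    rcases Finset.mem_union.mp hA with h | h
    · exact Finset.mem_powersetCard.mpr ⟨(hF A h).1, (hF A h).2⟩
    · rw [hPdef, Finset.mem_powersetCard] at h
      exact Finset.mem_powersetCard.mpr ⟨h.1.trans Finset.sdiff_subset, h.2⟩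
  have hcount : F.card + P.card ≤ n.choose k := by
    have h1 := Finset.card_le_card hPn
    rw [Finset.card_union_of_disjoint hPdisj] at h1
    have h2 : (Finset.powersetCard k (Finset.Icc 1 n)).card = n.choose k := by
      rw [Finset.card_powersetCard, Nat.card_Icc]
      norm_num
    rw [h2] at h1
    exact h1
  have hPcard : (n - k*(m-1)).choose k ≤ P.card := by
    rw [hPdef, Finset.card_powersetCard, Finset.card_sdiff_of_subset hUsub, Nat.card_Icc]
    refine Nat.choose_le_choose _ ?_
    omega
  have hD : (n - k*(m-1)).choose k < b * (n-1).choose (k-1) := by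
    have hC := choose_le_sub_add b (k-1) n
    have hkk : k - 1 + 1 = k := by omega
    rw [hkk] at hC
    omega
  -- Step 5: numeric contradiction
  set c := s / 2 with hcdef
  have hmc : m ≤ c := by omega
  have hcbig : Nat.factorial k * b * 4^k + 2 ≤ c := by omega
  have hN0 : k*c + k ≤ n - k*(m-1) := by
    refine Nat.le_sub_of_add_le ?_
    have h1 : (c + 1) + (m - 1) ≤ s := by omega
    calc k*c + k + k*(m-1) = k * ((c+1) + (m-1)) := by ring
    _ ≤ k * s := Nat.mul_le_mul_left _ h1
    _ = n := hn.symm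
  have hlow : (k*c+1)^k ≤ Nat.factorial k * ((n - k*(m-1)).choose k) := by
    have h1 := Nat.pow_sub_le_descFactorial (k*c+k) k
    rw [Nat.descFactorial_eq_factorial_mul_choose] at h1
    have h2 : k*c + k + 1 - k = k*c + 1 := by omega
    rw [h2] at h1
    calc (k*c+1)^k ≤ Nat.factorial k * ((k*c+k).choose k) := h1
    _ ≤ Nat.factorial k * ((n - k*(m-1)).choose k) :=
      Nat.mul_le_mul_left _ (Nat.choose_le_choose _ hN0)
  have hup : b * (n-1).choose (k-1) ≤ b * n^(k-1) :=
    Nat.mul_le_mul_left _ ((Nat.choose_le_pow _ _).trans (Nat.pow_le_pow_left (by omega) _))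
  have hc1 : 1 ≤ c := by omega
  have hn3 : n ≤ 3*(k*c) := by
    calc n = k * s := hn
    _ ≤ k * (3*c) := Nat.mul_le_mul_left _ (by omega)
    _ = 3*(k*c) := by ring
  have hnpow : n^(k-1) ≤ 3^(k-1) * (k*c)^(k-1) := by
    calc n^(k-1) ≤ (3*(k*c))^(k-1) := Nat.pow_le_pow_left hn3 _
    _ = 3^(k-1) * (k*c)^(k-1) := mul_pow 3 (k*c) (k-1)
  have hkc1 : 1 ≤ k*c := by
    calc 1 = 1 * 1 := by ring
    _ ≤ k * c := Nat.mul_le_mul (by omega) hc1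
  have hpos : 0 < (k*c)^(k-1) := Nat.pow_pos (by omega)
  have hkey : Nat.factorial k * (b * n^(k-1)) < (k*c+1)^k := by
    have h3 : Nat.factorial k * (b * n^(k-1)) ≤ (Nat.factorial k * b * 3^(k-1)) * (k*c)^(k-1) := by
      calc Nat.factorial k * (b * n^(k-1))
          ≤ Nat.factorial k * (b * (3^(k-1) * (k*c)^(k-1))) :=
            Nat.mul_le_mul_left _ (Nat.mul_le_mul_left _ hnpow)
      _ = (Nat.factorial k * b * 3^(k-1)) * (k*c)^(k-1) := by ring
    have h4 : (Nat.factorial k * b * 3^(k-1)) * (k*c)^(k-1) < (k*c) * (k*c)^(k-1) := by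
      have h5 : (3:ℕ)^(k-1) ≤ 4^k :=
        (Nat.pow_le_pow_left (by norm_num) _).trans (Nat.pow_le_pow_right (by norm_num) (by omega))
      have h6 : Nat.factorial k * b * 3^(k-1) ≤ Nat.factorial k * b * 4^k :=
        Nat.mul_le_mul_left _ h5
      have h7 : c ≤ k*c := Nat.le_mul_of_pos_left c (by omega)
      have h8 : Nat.factorial k * b * 3^(k-1) < k*c := by omega
      exact Nat.mul_lt_mul_of_lt_of_le h8 (le_refl _) hpos
    have h9 : (k*c) * (k*c)^(k-1) ≤ (k*c+1)^k := by
      have h10 : (k*c) * (k*c)^(k-1) = (k*c)^k := by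
        rw [← pow_succ']
        congr 1
        omega
      rw [h10]
      exact Nat.pow_le_pow_left (by omega) _
    omega
  have hfin : b * (n-1).choose (k-1) < (n - k*(m-1)).choose k := by
    have h9 : Nat.factorial k * (b * (n-1).choose (k-1))
        < Nat.factorial k * ((n - k*(m-1)).choose k) := by
      calc Nat.factorial k * (b * (n-1).choose (k-1))
          ≤ Nat.factorial k * (b * n^(k-1)) := Nat.mul_le_mul_left _ hup
      _ < (k*c+1)^k := hkey
      _ ≤ _ := hlow
    exact Nat.lt_of_mul_lt_mul_left h9
  omega
end

section
/- Let k ≥ 2, b ≥ 1 and s ≥ 2 be integers with n = k·s ≥ bk + b. Then, for any admissible choice of the sets E_1, …, E_{b−1}, the set [b] is a blocking set of the family E(k, n, b), and E(k, n, b) has no blocking set of size less than b. -/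
section Aux

open Finset

variable {n k b : ℕ} {E : ℕ → Finset ℕ}

/-- Membership lemma: `insert x (E j)` is in `famE` when `x = b` or `j = x`. -/
lemma mem_famE_of_insert (hk : 2 ≤ k) (hE : AdmissibleChoice n k b E)
    {x j : ℕ} (hx : x ∈ Finset.Icc 1 b) (hj : j ∈ Finset.Icc 1 (b - 1))
    (hcase : x = b ∨ j = x) :
    insert x (E j) ∈ famE n k b E := by
  obtain ⟨hEsub, hEcard⟩ := hE.1 j hj
  refine Finset.mem_union_right _ (Finset.mem_biUnion.2 ⟨x, hx, ?_⟩)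
  unfold famEpart
  refine Finset.mem_image.2 ⟨E j, Finset.mem_filter.2
    ⟨Finset.mem_powersetCard.2 ⟨hEsub, hEcard⟩, ?_⟩, rfl⟩
  rcases hcase with h | h
  · subst h
    right
    have hne : (E j).Nonempty := Finset.card_pos.1 (by omega)
    obtain ⟨e, he⟩ := hne
    exact ⟨e, Finset.mem_inter.2 ⟨he, Finset.mem_biUnion.2 ⟨j, hj, he⟩⟩⟩
  · subst h
    simp only [Finset.mem_Icc] at hj hx
    exact Or.inl ⟨by omega, rfl⟩

/-- Every member of `famE` containing some `i ∈ [1,b]` is of the form `insert i S`. -/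
lemma famE_mem_elim {A : Finset ℕ} (hA : A ∈ famE n k b E)
    {i : ℕ} (hi : i ∈ Finset.Icc 1 b) (hiA : i ∈ A) :
    ∃ S, A = insert i S ∧ S ⊆ Finset.Icc (b + 1) n ∧ S.card = k - 1 ∧
      ((i < b ∧ S = E i) ∨ (S ∩ (Finset.Icc 1 (i - 1)).biUnion E).Nonempty) := by
  simp only [Finset.mem_Icc] at hi
  rcases Finset.mem_union.1 hA with h | h
  · exfalso
    have := (Finset.mem_powersetCard.1 h).1 hiA
    simp only [Finset.mem_Icc] at this
    omega
  · obtain ⟨i', hi', hmem⟩ := Finset.mem_biUnion.1 h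
    unfold famEpart at hmem
    obtain ⟨S, hS, rfl⟩ := Finset.mem_image.1 hmem
    obtain ⟨hSpc, hScond⟩ := Finset.mem_filter.1 hS
    obtain ⟨hSsub, hScard⟩ := Finset.mem_powersetCard.1 hSpc
    have hii' : i = i' := by
      rcases Finset.mem_insert.1 hiA with h' | h'
      · exact h'
      · have := hSsub h'
        simp only [Finset.mem_Icc] at this
        omega
    subst hii'
    exact ⟨S, rfl, hSsub, hScard, hScond⟩

/-- Part 1: no matching in `famE` covers `[1,b]`. -/
lemma no_matching_covers (hk : 2 ≤ k) (hb : 1 ≤ b) (hE : AdmissibleChoice n k b E)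
    (M : Finset (Finset ℕ)) (hM : IsMatchingIn (famE n k b E) M)
    (hcov : Covers M (Finset.Icc 1 b)) : False := by
  have key : ∀ i, i ∈ Finset.Icc 1 b → ∀ A ∈ M, i ∈ A → i < b ∧ E i ⊆ A := by
    intro i
    induction i using Nat.strong_induction_on with
    | _ i ih =>
      intro hi A hAM hiA
      obtain ⟨S, rfl, hSsub, hScard, hcond⟩ := famE_mem_elim (hM.1 hAM) hi hiA
      rcases hcond with ⟨hib, rfl⟩ | ⟨x, hx⟩
      · exact ⟨hib, fun e he => Finset.mem_insert_of_mem he⟩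
      · exfalso
        obtain ⟨hxS, hxU⟩ := Finset.mem_inter.1 hx
        obtain ⟨j, hj, hxEj⟩ := Finset.mem_biUnion.1 hxU
        simp only [Finset.mem_Icc] at hj hi
        have hjb : j ∈ Finset.Icc 1 b := by
          simp only [Finset.mem_Icc]; omega
        obtain ⟨A', hA'M, hjA'⟩ := Finset.mem_biUnion.1 (hcov hjb)
        have hji : j < i := by omega
        obtain ⟨_, hEj⟩ := ih j hji hjb A' hA'M hjA'
        have hxA' : x ∈ A' := hEj hxEj
        have hne : insert i S ≠ A' := by
          intro h
          have hjmem : j ∈ insert i S := h ▸ hjA'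
          rcases Finset.mem_insert.1 hjmem with h' | h'
          · omega
          · have := hSsub h'
            simp only [Finset.mem_Icc] at this
            omega
        have hdisj : Disjoint (insert i S) A' :=
          hM.2 (Finset.mem_coe.2 hAM) (Finset.mem_coe.2 hA'M) hne
        exact Finset.disjoint_left.1 hdisj (Finset.mem_insert_of_mem hxS) hxA'
  have hbmem : b ∈ Finset.Icc 1 b := Finset.mem_Icc.2 ⟨hb, le_rfl⟩
  obtain ⟨A, hAM, hbA⟩ := Finset.mem_biUnion.1 (hcov hbmem)
  exact absurd (key b hbmem A hAM hbA).1 (lt_irrefl b)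

/-- A finset of cardinality `q * k` can be partitioned into `q` sets of size `k`. -/
lemma partition_lemma (k : ℕ) (hk : 1 ≤ k) :
    ∀ (q : ℕ) (W : Finset ℕ), W.card = q * k →
    ∃ M : Finset (Finset ℕ), M.card = q ∧ (∀ A ∈ M, A ⊆ W ∧ A.card = k) ∧
      (M : Set (Finset ℕ)).PairwiseDisjoint id ∧ W ⊆ M.biUnion id := by
  intro q
  induction q with
  | zero =>
    intro W hW
    have : W = ∅ := Finset.card_eq_zero.1 (by simpa using hW)
    subst this
    exact ⟨∅, by simp, by simp, by simp, by simp⟩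
  | succ q ih =>
    intro W hW
    have hkW : k ≤ W.card := by
      rw [hW, Nat.succ_mul]; omega
    obtain ⟨A, hAW, hAcard⟩ := Finset.exists_subset_card_eq hkW
    have hcard' : (W \ A).card = q * k := by
      rw [Finset.card_sdiff_of_subset hAW, hW, hAcard, Nat.succ_mul]; omega
    obtain ⟨M', hM'card, hM'mem, hM'disj, hM'cov⟩ := ih (W \ A) hcard'
    have hAnot : A ∉ M' := by
      intro h
      have hsub := (hM'mem A h).1
      obtain ⟨a, ha⟩ : A.Nonempty := Finset.card_pos.1 (by omega)
      exact (Finset.mem_sdiff.1 (hsub ha)).2 ha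
    refine ⟨insert A M', ?_, ?_, ?_, ?_⟩
    · rw [Finset.card_insert_of_notMem hAnot, hM'card]
    · intro A' hA'
      rcases Finset.mem_insert.1 hA' with rfl | h
      · exact ⟨hAW, hAcard⟩
      · exact ⟨(hM'mem A' h).1.trans Finset.sdiff_subset, (hM'mem A' h).2⟩
    · rw [Finset.coe_insert]
      refine hM'disj.insert ?_
      intro A' hA' _
      refine Finset.disjoint_left.2 fun a haA haA' => ?_
      exact (Finset.mem_sdiff.1 ((hM'mem A' hA').1 haA')).2 haA
    · intro w hw
      by_cases hwA : w ∈ A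
      · exact Finset.mem_biUnion.2 ⟨A, Finset.mem_insert_self _ _, hwA⟩
      · obtain ⟨A', h1, h2⟩ := Finset.mem_biUnion.1 (hM'cov (Finset.mem_sdiff.2 ⟨hw, hwA⟩))
        exact Finset.mem_biUnion.2 ⟨A', Finset.mem_insert_of_mem h1, h2⟩

/-- Part 2: every small set is covered by a matching of its own size. -/
lemma exists_matching_of_small (hk : 2 ≤ k) (hb : 1 ≤ b) (hbn : b * k + b ≤ n)
    (hE : AdmissibleChoice n k b E) (B : Finset ℕ) (hBsub : B ⊆ Finset.Icc 1 n)
    (hBcard : B.card < b) :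
    ∃ M, IsMatchingIn (famE n k b E) M ∧ M.card = B.card ∧ Covers M B := by
  classical
  -- choose a spare index j₀ when b ∈ B
  obtain ⟨j₀, hj₀⟩ : ∃ j₀, b ∈ B → j₀ ∈ Finset.Icc 1 (b - 1) ∧ j₀ ∉ B := by
    by_cases hbB : b ∈ B
    · have hsub : Finset.Icc 1 (b - 1) ∩ B ⊆ B.erase b := by
        intro x hx
        obtain ⟨h2, h1⟩ := Finset.mem_inter.1 hx
        simp only [Finset.mem_Icc] at h2
        exact Finset.mem_erase.2 ⟨by omega, h1⟩
      have hcle := Finset.card_le_card hsub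
      rw [Finset.card_erase_of_mem hbB] at hcle
      have hkey := Finset.card_inter_add_card_sdiff (Finset.Icc 1 (b - 1)) B
      have hcard : (Finset.Icc 1 (b - 1)).card = b - 1 := by
        rw [Nat.card_Icc]; omega
      have hBpos : 1 ≤ B.card := Finset.card_pos.2 ⟨b, hbB⟩
      have hpos : 0 < (Finset.Icc 1 (b - 1) \ B).card := by omega
      obtain ⟨j₀, hj₀⟩ := Finset.card_pos.1 hpos
      obtain ⟨h1, h2⟩ := Finset.mem_sdiff.1 hj₀
      exact ⟨j₀, fun _ => ⟨h1, h2⟩⟩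
    · exact ⟨0, fun h => absurd h hbB⟩
  set m := B.card with hm
  set C := B ∩ Finset.Icc 1 b with hCdef
  set τ : ℕ → ℕ := fun x => if x = b then j₀ else x with hτdef
  have hτmem : ∀ x ∈ C, τ x ∈ Finset.Icc 1 (b - 1) := by
    intro x hx
    obtain ⟨hxB, hxI⟩ := Finset.mem_inter.1 hx
    simp only [Finset.mem_Icc] at hxI
    by_cases h : x = b
    · rw [hτdef]; simp only [if_pos h]
      exact (hj₀ (h ▸ hxB)).1
    · rw [hτdef]; simp only [if_neg h, Finset.mem_Icc]
      omega
  have hτinj : ∀ x ∈ C, ∀ y ∈ C, τ x = τ y → x = y := by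
    intro x hx y hy hxy
    obtain ⟨hxB, _⟩ := Finset.mem_inter.1 hx
    obtain ⟨hyB, _⟩ := Finset.mem_inter.1 hy
    by_cases h1 : x = b <;> by_cases h2 : y = b
    · omega
    · exfalso
      rw [hτdef] at hxy; simp only [if_pos h1, if_neg h2] at hxy
      exact (hj₀ (h1 ▸ hxB)).2 (hxy ▸ hyB)
    · exfalso
      rw [hτdef] at hxy; simp only [if_neg h1, if_pos h2] at hxy
      exact (hj₀ (h2 ▸ hyB)).2 (hxy ▸ hxB)
    · rw [hτdef] at hxy; simpa only [if_neg h1, if_neg h2] using hxy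
  have hmemfam : ∀ x ∈ C, insert x (E (τ x)) ∈ famE n k b E := by
    intro x hx
    refine mem_famE_of_insert hk hE (Finset.mem_inter.1 hx).2 (hτmem x hx) ?_
    by_cases h : x = b
    · exact Or.inl h
    · right; rw [hτdef]; simp only [if_neg h]
  have hEτsub : ∀ x ∈ C, E (τ x) ⊆ Finset.Icc (b + 1) n := fun x hx =>
    (hE.1 (τ x) (hτmem x hx)).1
  have hEτcard : ∀ x ∈ C, (E (τ x)).card = k - 1 := fun x hx =>
    (hE.1 (τ x) (hτmem x hx)).2
  set T1 := C.image (fun x => insert x (E (τ x))) with hT1def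
  set U := C.biUnion (fun x => E (τ x)) with hUdef
  have hUsub : U ⊆ Finset.Icc (b + 1) n := by
    intro z hz
    obtain ⟨x, hx, hzx⟩ := Finset.mem_biUnion.1 hz
    exact hEτsub x hx hzx
  set t := C.card with htdef
  have htm : t ≤ m := Finset.card_le_card Finset.inter_subset_left
  set D := B.filter (fun y => b < y ∧ y ∉ U) with hDdef
  set Pool := Finset.Icc (b + 1) n \ U with hPooldef
  have hDPool : D ⊆ Pool := by
    intro y hy
    have hyf := Finset.mem_filter.1 hy
    obtain ⟨hyB, hyb, hyU⟩ : y ∈ B ∧ b < y ∧ y ∉ U := ⟨hyf.1, hyf.2.1, hyf.2.2⟩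
    have := hBsub hyB
    simp only [Finset.mem_Icc] at this
    exact Finset.mem_sdiff.2 ⟨Finset.mem_Icc.2 ⟨by omega, this.2⟩, hyU⟩
  have hDcard : D.card ≤ m - t := by
    have hsub : D ⊆ B \ C := by
      intro y hy
      have h := Finset.mem_filter.1 hy
      refine Finset.mem_sdiff.2 ⟨h.1, ?_⟩
      intro hyC
      have := (Finset.mem_inter.1 hyC).2
      simp only [Finset.mem_Icc] at this
      omega
    have := Finset.card_le_card hsub
    rwa [Finset.card_sdiff_of_subset Finset.inter_subset_left] at this
  have hUcard : U.card ≤ t * (k - 1) := by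
    calc U.card ≤ ∑ x ∈ C, (E (τ x)).card := Finset.card_biUnion_le
      _ = ∑ _x ∈ C, (k - 1) := Finset.sum_congr rfl (fun x hx => hEτcard x hx)
      _ = t * (k - 1) := by rw [Finset.sum_const, smul_eq_mul]
  have hmk : m * k ≤ n - b := by
    have h1 : (m + 1) * k ≤ b * k := Nat.mul_le_mul_right k (by omega)
    have h2 : m * k + k = (m + 1) * k := by ring
    omega
  have hPoolcard : (m - t) * k ≤ Pool.card := by
    have h1 : (n - b) - U.card ≤ Pool.card := by
      have := Finset.le_card_sdiff U (Finset.Icc (b + 1) n)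
      rwa [Nat.card_Icc, show n + 1 - (b + 1) = n - b by omega] at this
    have h2 : (m - t) * k + t * (k - 1) ≤ m * k := by
      have e1 : (m - t) * k + t * k = m * k := by
        rw [← Nat.add_mul, Nat.sub_add_cancel htm]
      have e2 : t * (k - 1) ≤ t * k := Nat.mul_le_mul_left t (by omega)
      omega
    omega
  have hDW : D.card ≤ (m - t) * k := le_trans hDcard (Nat.le_mul_of_pos_right _ (by omega))
  obtain ⟨W, hDWsub, hWPool, hWcard⟩ :=
    Finset.exists_subsuperset_card_eq hDPool hDW hPoolcard
  obtain ⟨M2, hM2card, hM2mem, hM2disj, hM2cov⟩ :=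
    partition_lemma k (by omega) (m - t) W hWcard
  have hWIcc : W ⊆ Finset.Icc (b + 1) n := hWPool.trans Finset.sdiff_subset
  set M := T1 ∪ M2 with hMdef
  -- T1 members contain their small element
  have hT1elim : ∀ A ∈ T1, ∃ x ∈ C, A = insert x (E (τ x)) := by
    intro A hA
    obtain ⟨x, hx, hAx⟩ := Finset.mem_image.1 hA
    exact ⟨x, hx, hAx.symm⟩
  have hCsmall : ∀ x ∈ C, x ≤ b ∧ 1 ≤ x := by
    intro x hx
    have := (Finset.mem_inter.1 hx).2
    simp only [Finset.mem_Icc] at this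
    exact ⟨this.2, this.1⟩
  have hinsinj : ∀ x ∈ C, ∀ y ∈ C,
      insert x (E (τ x)) = insert y (E (τ y)) → x = y := by
    intro x hx y hy hxy
    have hxmem : x ∈ insert y (E (τ y)) := hxy ▸ Finset.mem_insert_self x _
    rcases Finset.mem_insert.1 hxmem with h | h
    · exact h
    · exfalso
      have := hEτsub y hy h
      simp only [Finset.mem_Icc] at this
      have := hCsmall x hx
      omega
  have hT1card : T1.card = t := by
    rw [hT1def]
    exact Finset.card_image_of_injOn (fun x hx y hy => hinsinj x hx y hy)
  have hM2Icc : ∀ A ∈ M2, A ⊆ Finset.Icc (b + 1) n :=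
    fun A hA => ((hM2mem A hA).1).trans hWIcc
  have hdisjT1M2 : Disjoint T1 M2 := by
    refine Finset.disjoint_left.2 fun A hA hA2 => ?_
    obtain ⟨x, hx, rfl⟩ := hT1elim A hA
    have hxmem := hM2Icc _ hA2 (Finset.mem_insert_self x _)
    simp only [Finset.mem_Icc] at hxmem
    have := hCsmall x hx
    omega
  have hMcard : M.card = m := by
    rw [hMdef, Finset.card_union_of_disjoint hdisjT1M2, hT1card, hM2card]
    omega
  have hT1disjW : ∀ x ∈ C, ∀ A ∈ M2, Disjoint (insert x (E (τ x))) A := by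
    intro x hx A hA
    refine Finset.disjoint_left.2 fun z hz hzA => ?_
    have hzPool : z ∈ Pool := hWPool ((hM2mem A hA).1 hzA)
    obtain ⟨hzIcc, hzU⟩ := Finset.mem_sdiff.1 hzPool
    simp only [Finset.mem_Icc] at hzIcc
    rcases Finset.mem_insert.1 hz with rfl | h
    · have := hCsmall z hx; omega
    · exact hzU (Finset.mem_biUnion.2 ⟨x, hx, h⟩)
  refine ⟨M, ⟨?_, ?_⟩, hMcard, ?_⟩
  · -- M ⊆ famE
    intro A hA
    rcases Finset.mem_union.1 hA with h | h
    · obtain ⟨x, hx, rfl⟩ := hT1elim A h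
      exact hmemfam x hx
    · refine Finset.mem_union_left _ (Finset.mem_powersetCard.2
        ⟨hM2Icc A h, (hM2mem A h).2⟩)
  · -- pairwise disjoint
    intro A hA A' hA' hne
    rw [hMdef, Finset.coe_union] at hA hA'
    rcases hA with hA | hA <;> rcases hA' with hA' | hA'
    · obtain ⟨x, hx, rfl⟩ := hT1elim A hA
      obtain ⟨y, hy, rfl⟩ := hT1elim A' hA'
      have hxy : x ≠ y := fun h => hne (by rw [h])
      have hτxy : τ x ≠ τ y := fun h => hxy (hτinj x hx y hy h)
      refine Finset.disjoint_left.2 fun z hz hz' => ?_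
      rcases Finset.mem_insert.1 hz with rfl | h
      · rcases Finset.mem_insert.1 hz' with h' | h'
        · exact hxy h'
        · have := hEτsub y hy h'
          simp only [Finset.mem_Icc] at this
          have := hCsmall z hx
          omega
      · rcases Finset.mem_insert.1 hz' with rfl | h'
        · have := hEτsub x hx h
          simp only [Finset.mem_Icc] at this
          have := hCsmall z hy
          omega
        · exact Finset.disjoint_left.1
            (hE.2 (τ x) (hτmem x hx) (τ y) (hτmem y hy) hτxy) h h'
    · obtain ⟨x, hx, rfl⟩ := hT1elim A hA
      exact hT1disjW x hx A' hA'
    · obtain ⟨y, hy, rfl⟩ := hT1elim A' hA'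
      exact (hT1disjW y hy A hA).symm
    · exact hM2disj hA hA' hne
  · -- covers B
    intro x hxB
    have hxn := hBsub hxB
    simp only [Finset.mem_Icc] at hxn
    by_cases hxb : x ≤ b
    · have hxC : x ∈ C := Finset.mem_inter.2 ⟨hxB, Finset.mem_Icc.2 ⟨hxn.1, hxb⟩⟩
      exact Finset.mem_biUnion.2 ⟨insert x (E (τ x)),
        Finset.mem_union_left _ (Finset.mem_image_of_mem _ hxC),
        Finset.mem_insert_self x _⟩
    · by_cases hxU : x ∈ U
      · obtain ⟨y, hy, hxy⟩ := Finset.mem_biUnion.1 hxU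
        exact Finset.mem_biUnion.2 ⟨insert y (E (τ y)),
          Finset.mem_union_left _ (Finset.mem_image_of_mem _ hy),
          Finset.mem_insert_of_mem hxy⟩
      · have hxD : x ∈ D := Finset.mem_filter.2 ⟨hxB, by omega, hxU⟩
        obtain ⟨A, hA, hxA⟩ := Finset.mem_biUnion.1 (hM2cov (hDWsub hxD))
        exact Finset.mem_biUnion.2 ⟨A, Finset.mem_union_right _ hA, hxA⟩

end Aux

/-- from Example 1.3: For any admissible choice of `E_1, …, E_{b-1}`,
the set `[b]` is a blocking set of `E(k, n, b)`, and `E(k, n, b)` has no blocking set of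
size less than `b`. -/
theorem statement9 (k b s n : ℕ) (hk : 2 ≤ k) (hb : 1 ≤ b) (hs : 2 ≤ s)
    (hn : n = k * s) (hbn : b * k + b ≤ n)
    (E : ℕ → Finset ℕ) (hE : AdmissibleChoice n k b E) :
    IsBlockingSet n s (famE n k b E) (Finset.Icc 1 b) ∧
    ∀ B : Finset ℕ, IsBlockingSet n s (famE n k b E) B → b ≤ B.card := by
  have hbleb : b ≤ n := le_trans (Nat.le_add_left b (b * k)) hbn
  constructor
  · refine ⟨Finset.Icc_subset_Icc le_rfl hbleb, ?_, ?_⟩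
    · rw [Nat.card_Icc, show b + 1 - 1 = b from rfl]
      have h1 : (k + 1) * b ≤ (k + 1) * s := by
        calc (k + 1) * b = b * k + b := by ring
          _ ≤ n := hbn
          _ = k * s := hn
          _ ≤ (k + 1) * s := Nat.mul_le_mul_right s (by omega)
      exact Nat.le_of_mul_le_mul_left h1 (by omega)
    · rintro ⟨M, hM, _, hcov⟩
      exact no_matching_covers hk hb hE M hM hcov
  · intro B hB
    by_contra h
    push_neg at h
    exact hB.2.2 (exists_matching_of_small hk hb hbn hE B hB.1 h)
end

section
/- Let b ≥ 1 and s ≥ 2 be integers with n = 3·s ≥ 4b. Then the set [b] is a blocking set of the family E′(3, n, b), and E′(3, n, b) has no blocking set of size less than b. -/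
/-- The family `E'(3, n, b)`: all `3`-element subsets `S` of `[n]` with `|S ∩ [b]| = 1`
and `|S ∩ [b+1, 2b-1]| ≥ 1`, together with all `3`-element subsets of `[b+1, n]`. -/
def famE' (n b : ℕ) : Finset (Finset ℕ) :=
  ((Finset.Icc 1 n).powersetCard 3).filter
      (fun S => (S ∩ Finset.Icc 1 b).card = 1 ∧
        1 ≤ (S ∩ Finset.Icc (b + 1) (2 * b - 1)).card) ∪
    (Finset.Icc (b + 1) n).powersetCard 3

lemma mem_famE' {n b : ℕ} {S : Finset ℕ} :
    S ∈ famE' n b ↔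
      (S ⊆ Finset.Icc 1 n ∧ S.card = 3 ∧ (S ∩ Finset.Icc 1 b).card = 1 ∧
        1 ≤ (S ∩ Finset.Icc (b + 1) (2 * b - 1)).card) ∨
      (S ⊆ Finset.Icc (b + 1) n ∧ S.card = 3) := by
  simp only [famE', Finset.mem_union, Finset.mem_filter, Finset.mem_powersetCard]
  tauto

lemma exists_inj_map {s t : Finset ℕ} (h : s.card = t.card) :
    ∃ f : ℕ → ℕ, (∀ x ∈ s, f x ∈ t) ∧ ∀ x ∈ s, ∀ y ∈ s, f x = f y → x = y := by
  classical
  let e := Finset.equivOfCardEq h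
  refine ⟨fun x => if hx : x ∈ s then (e ⟨x, hx⟩ : ℕ) else 0, ?_, ?_⟩
  · intro x hx; simp only [dif_pos hx]; exact (e ⟨x, hx⟩).2
  · intro x hx y hy hxy
    simp only [dif_pos hx, dif_pos hy] at hxy
    have h2 : e ⟨x, hx⟩ = e ⟨y, hy⟩ := Subtype.ext hxy
    have h3 := e.injective h2
    exact congrArg Subtype.val h3

lemma part1 {b n : ℕ} (hb : 1 ≤ b) :
    ¬ ∃ M, IsMatchingIn (famE' n b) M ∧ M.card = (Finset.Icc 1 b).card ∧
        Covers M (Finset.Icc 1 b) := by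
  classical
  rintro ⟨M, ⟨hMF, hMd⟩, -, hcov⟩
  have H : ∀ x ∈ Finset.Icc 1 b, ∃ p : Finset ℕ × ℕ,
      p.1 ∈ M ∧ x ∈ p.1 ∧ (p.1 ∩ Finset.Icc 1 b).card = 1 ∧
      p.2 ∈ p.1 ∧ p.2 ∈ Finset.Icc (b + 1) (2 * b - 1) := by
    intro x hx
    have hx' := hcov hx
    rw [Finset.mem_biUnion] at hx'
    obtain ⟨S, hSM, hxS⟩ := hx'
    have hSF := hMF hSM
    rw [mem_famE'] at hSF
    rcases hSF with ⟨-, -, h1, h2⟩ | ⟨hsub, -⟩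
    · obtain ⟨y, hy⟩ := Finset.card_pos.1 h2
      rw [Finset.mem_inter] at hy
      exact ⟨(S, y), hSM, hxS, h1, hy.1, hy.2⟩
    · exfalso
      have h3 := hsub hxS
      rw [Finset.mem_Icc] at h3 hx
      omega
  set φ : ℕ → ℕ :=
    fun x => if hx : x ∈ Finset.Icc 1 b then (Classical.choose (H x hx)).2 else 0 with hφ
  have hle : (Finset.Icc 1 b).card ≤ (Finset.Icc (b + 1) (2 * b - 1)).card := by
    apply Finset.card_le_card_of_injOn φ
    · intro x hx
      rw [Finset.mem_coe] at hx ⊢; simp only [hφ, dif_pos hx]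
      exact (Classical.choose_spec (H x hx)).2.2.2.2
    · intro x hx y hy hxy
      rw [Finset.mem_coe] at hx hy
      simp only [hφ, dif_pos hx, dif_pos hy] at hxy
      obtain ⟨hS1, hx1, hc1, hm1, -⟩ := Classical.choose_spec (H x hx)
      obtain ⟨hS2, hx2, hc2, hm2, -⟩ := Classical.choose_spec (H y hy)
      set S1 := (Classical.choose (H x hx)).1
      set S2 := (Classical.choose (H y hy)).1
      have hSS : S1 = S2 := by
        by_contra hne
        have hd := hMd hS1 hS2 hne
        rw [Function.onFun, Finset.disjoint_left] at hd
        exact hd hm1 (hxy ▸ hm2)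
      have h1 : x ∈ S1 ∩ Finset.Icc 1 b := Finset.mem_inter.2 ⟨hx1, hx⟩
      have h2 : y ∈ S1 ∩ Finset.Icc 1 b := Finset.mem_inter.2 ⟨hSS ▸ hx2, hy⟩
      exact Finset.card_le_one.1 (le_of_eq hc1) x h1 y h2
  rw [Nat.card_Icc, Nat.card_Icc] at hle
  omega

lemma part2 {b n : ℕ} (hb : 1 ≤ b) (hbn : 4 * b ≤ n) {B : Finset ℕ}
    (hBn : B ⊆ Finset.Icc 1 n) (hcard : B.card < b) :
    ∃ M, IsMatchingIn (famE' n b) M ∧ M.card = B.card ∧ Covers M B := by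
  classical
  set m := B.card with hm
  set B₁ := B ∩ Finset.Icc 1 b with hB₁
  set B₂ := B \ Finset.Icc 1 b with hB₂
  set t := B₁.card with htd
  have ht2 : t + B₂.card = m := Finset.card_inter_add_card_sdiff B _
  set P := Finset.Icc (b + 1) (2 * b - 1) with hP
  set Q := Finset.Icc (b + 1) n with hQ
  have hPcard : P.card = b - 1 := by rw [hP, Nat.card_Icc]; omega
  have hQcard : Q.card = n - b := by rw [hQ, Nat.card_Icc]; omega
  have hPB : (P ∩ B).card ≤ B₂.card := by
    apply Finset.card_le_card
    intro a ha
    rw [Finset.mem_inter] at ha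
    rw [hB₂, Finset.mem_sdiff]
    refine ⟨ha.2, ?_⟩
    have h3 := ha.1
    rw [hP, Finset.mem_Icc] at h3
    rw [Finset.mem_Icc]; omega
  have hPsplit : (P ∩ B).card + (P \ B).card = P.card :=
    Finset.card_inter_add_card_sdiff P B
  have hYex : t ≤ (P \ B).card := by omega
  obtain ⟨Y, hYsub, hYcard⟩ := Finset.exists_subset_card_eq hYex
  have hQB : Q ∩ B = B₂ := by
    ext a
    rw [Finset.mem_inter, hB₂, Finset.mem_sdiff, hQ, Finset.mem_Icc, Finset.mem_Icc]
    constructor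
    · rintro ⟨h1, h2⟩; exact ⟨h2, by omega⟩
    · rintro ⟨h1, h2⟩
      have h3 := hBn h1
      rw [Finset.mem_Icc] at h3
      exact ⟨⟨by omega, h3.2⟩, h1⟩
  have hPQ : P ⊆ Q := Finset.Icc_subset_Icc le_rfl (by omega)
  have hYQB : Y ⊆ Q \ B := hYsub.trans (Finset.sdiff_subset_sdiff hPQ le_rfl)
  have hQsplit : (Q ∩ B).card + (Q \ B).card = Q.card :=
    Finset.card_inter_add_card_sdiff Q B
  have hQBc : (Q ∩ B).card = B₂.card := by rw [hQB]
  set pool := (Q \ B) \ Y with hpooldef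
  have hpoolcard : pool.card = (Q \ B).card - t := by
    rw [hpooldef, Finset.card_sdiff_of_subset hYQB, hYcard]
  have hB₂le : B₂.card ≤ m := by omega
  obtain ⟨Z₁, hZ₁sub, hZ₁card⟩ :=
    Finset.exists_subset_card_eq (show t ≤ pool.card by omega)
  have hp1 : (pool \ Z₁).card = pool.card - t := by
    rw [Finset.card_sdiff_of_subset hZ₁sub, hZ₁card]
  obtain ⟨Z₂, hZ₂sub, hZ₂card⟩ :=
    Finset.exists_subset_card_eq (show B₂.card ≤ (pool \ Z₁).card by omega)
  have hp2 : ((pool \ Z₁) \ Z₂).card = (pool \ Z₁).card - B₂.card := by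
    rw [Finset.card_sdiff_of_subset hZ₂sub, hZ₂card]
  obtain ⟨Z₃, hZ₃sub, hZ₃card⟩ :=
    Finset.exists_subset_card_eq (show B₂.card ≤ ((pool \ Z₁) \ Z₂).card by omega)
  -- element facts
  have hY : ∀ a ∈ Y, a ∈ P ∧ a ∉ B := by
    intro a ha
    have h := hYsub ha
    rw [Finset.mem_sdiff] at h
    exact h
  have hpool : ∀ a ∈ pool, a ∈ Q ∧ a ∉ B ∧ a ∉ Y := by
    intro a ha
    rw [hpooldef, Finset.mem_sdiff, Finset.mem_sdiff] at ha
    exact ⟨ha.1.1, ha.1.2, ha.2⟩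
  have hZ₁ : ∀ a ∈ Z₁, a ∈ Q ∧ a ∉ B ∧ a ∉ Y := fun a ha => hpool a (hZ₁sub ha)
  have hZ₂ : ∀ a ∈ Z₂, (a ∈ Q ∧ a ∉ B ∧ a ∉ Y) ∧ a ∉ Z₁ := by
    intro a ha
    have h := hZ₂sub ha
    rw [Finset.mem_sdiff] at h
    exact ⟨hpool a h.1, h.2⟩
  have hZ₃ : ∀ a ∈ Z₃, ((a ∈ Q ∧ a ∉ B ∧ a ∉ Y) ∧ a ∉ Z₁) ∧ a ∉ Z₂ := by
    intro a ha
    have h := hZ₃sub ha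
    rw [Finset.mem_sdiff, Finset.mem_sdiff] at h
    exact ⟨⟨hpool a h.1.1, h.1.2⟩, h.2⟩
  -- injections
  obtain ⟨f, hf, hfinj⟩ := exists_inj_map (show B₁.card = Y.card from hYcard.symm)
  obtain ⟨g, hg, hginj⟩ := exists_inj_map (show B₁.card = Z₁.card from hZ₁card.symm)
  obtain ⟨k₁, hk₁, hk₁inj⟩ := exists_inj_map (show B₂.card = Z₂.card from hZ₂card.symm)
  obtain ⟨k₂, hk₂, hk₂inj⟩ := exists_inj_map (show B₂.card = Z₃.card from hZ₃card.symm)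
  set T : ℕ → Finset ℕ :=
    fun x => if x ∈ Finset.Icc 1 b then {x, f x, g x} else {x, k₁ x, k₂ x} with hT
  have hx₁ : ∀ x ∈ B, x ∈ Finset.Icc 1 b → x ∈ B₁ :=
    fun x hx h => Finset.mem_inter.2 ⟨hx, h⟩
  have hx₂ : ∀ x ∈ B, x ∉ Finset.Icc 1 b → x ∈ B₂ :=
    fun x hx h => Finset.mem_sdiff.2 ⟨hx, h⟩
  have hxT : ∀ x, x ∈ T x := by
    intro x
    simp only [hT]
    split_ifs <;> simp
  have hclass : ∀ x ∈ B, ∀ a ∈ T x,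
      (a ∈ B ∧ a = x) ∨ (a ∈ Y ∧ x ∈ B₁ ∧ a = f x) ∨ (a ∈ Z₁ ∧ x ∈ B₁ ∧ a = g x) ∨
      (a ∈ Z₂ ∧ x ∈ B₂ ∧ a = k₁ x) ∨ (a ∈ Z₃ ∧ x ∈ B₂ ∧ a = k₂ x) := by
    intro x hx a ha
    simp only [hT] at ha
    split_ifs at ha with hxb
    · have hxB₁ := hx₁ x hx hxb
      simp only [Finset.mem_insert, Finset.mem_singleton] at ha
      rcases ha with rfl | rfl | rfl
      · exact Or.inl ⟨hx, rfl⟩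
      · exact Or.inr (Or.inl ⟨hf x hxB₁, hxB₁, rfl⟩)
      · exact Or.inr (Or.inr (Or.inl ⟨hg x hxB₁, hxB₁, rfl⟩))
    · have hxB₂ := hx₂ x hx hxb
      simp only [Finset.mem_insert, Finset.mem_singleton] at ha
      rcases ha with rfl | rfl | rfl
      · exact Or.inl ⟨hx, rfl⟩
      · exact Or.inr (Or.inr (Or.inr (Or.inl ⟨hk₁ x hxB₂, hxB₂, rfl⟩)))
      · exact Or.inr (Or.inr (Or.inr (Or.inr ⟨hk₂ x hxB₂, hxB₂, rfl⟩)))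
  have key : ∀ x ∈ B, ∀ x' ∈ B, ∀ a, a ∈ T x → a ∈ T x' → x = x' := by
    intro x hx x' hx' a ha ha'
    rcases hclass x hx a ha with ⟨h1, h2⟩ | ⟨h1, hmm, h2⟩ | ⟨h1, hmm, h2⟩ |
        ⟨h1, hmm, h2⟩ | ⟨h1, hmm, h2⟩ <;>
      rcases hclass x' hx' a ha' with ⟨h1', h2'⟩ | ⟨h1', hmm', h2'⟩ | ⟨h1', hmm', h2'⟩ |
        ⟨h1', hmm', h2'⟩ | ⟨h1', hmm', h2'⟩ <;>
    first
    | exact h2.symm.trans h2'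
    | exact hfinj x hmm x' hmm' (h2.symm.trans h2')
    | exact hginj x hmm x' hmm' (h2.symm.trans h2')
    | exact hk₁inj x hmm x' hmm' (h2.symm.trans h2')
    | exact hk₂inj x hmm x' hmm' (h2.symm.trans h2')
    | exact absurd h1 (hY a h1').2
    | exact absurd h1' (hY a h1).2
    | exact absurd h1 (hZ₁ a h1').2.1
    | exact absurd h1' (hZ₁ a h1).2.1
    | exact absurd h1 (hZ₂ a h1').1.2.1
    | exact absurd h1' (hZ₂ a h1).1.2.1
    | exact absurd h1 (hZ₃ a h1').1.1.2.1
    | exact absurd h1' (hZ₃ a h1).1.1.2.1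
    | exact absurd h1 (hZ₁ a h1').2.2
    | exact absurd h1' (hZ₁ a h1).2.2
    | exact absurd h1 (hZ₂ a h1').1.2.2
    | exact absurd h1' (hZ₂ a h1).1.2.2
    | exact absurd h1 (hZ₂ a h1').2
    | exact absurd h1' (hZ₂ a h1).2
    | exact absurd h1 (hZ₃ a h1').1.1.2.2
    | exact absurd h1' (hZ₃ a h1).1.1.2.2
    | exact absurd h1 (hZ₃ a h1').1.2
    | exact absurd h1' (hZ₃ a h1).1.2
    | exact absurd h1 (hZ₃ a h1').2
    | exact absurd h1' (hZ₃ a h1).2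
  refine ⟨B.image T, ⟨?_, ?_⟩, ?_, ?_⟩
  · -- subset of famE'
    intro S hS
    rw [Finset.mem_image] at hS
    obtain ⟨x, hx, rfl⟩ := hS
    rw [mem_famE']
    by_cases hxb : x ∈ Finset.Icc 1 b
    · left
      have hxB₁ := hx₁ x hx hxb
      have hfY := hf x hxB₁
      have hgZ := hg x hxB₁
      have hfP := (hY _ hfY).1
      have hgQ := (hZ₁ _ hgZ).1
      rw [hP, Finset.mem_Icc] at hfP
      rw [hQ, Finset.mem_Icc] at hgQ
      rw [Finset.mem_Icc] at hxb
      have hTx : T x = {x, f x, g x} := by simp only [hT, if_pos (Finset.mem_Icc.2 hxb)]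
      have hne1 : x ≠ f x := by omega
      have hne2 : x ≠ g x := by omega
      have hne3 : f x ≠ g x := by
        intro h
        exact (hZ₁ _ hgZ).2.2 (h ▸ hfY)
      refine ⟨?_, ?_, ?_, ?_⟩
      · rw [hTx]
        intro a ha
        simp only [Finset.mem_insert, Finset.mem_singleton] at ha
        rw [Finset.mem_Icc]
        have hxn := hBn hx
        rw [Finset.mem_Icc] at hxn
        rcases ha with rfl | rfl | rfl <;> omega
      · rw [hTx, Finset.card_eq_three]
        exact ⟨x, f x, g x, hne1, hne2, hne3, rfl⟩
      · have heq : T x ∩ Finset.Icc 1 b = {x} := by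
          rw [hTx]
          ext a
          simp only [Finset.mem_inter, Finset.mem_insert, Finset.mem_singleton,
            Finset.mem_Icc]
          constructor
          · rintro ⟨rfl | rfl | rfl, h⟩
            · rfl
            · omega
            · omega
          · rintro rfl
            exact ⟨Or.inl rfl, hxb⟩
        rw [heq, Finset.card_singleton]
      · apply Finset.card_pos.2
        refine ⟨f x, Finset.mem_inter.2 ⟨?_, ?_⟩⟩
        · rw [hTx]; simp
        · rw [Finset.mem_Icc]; omega
    · right
      have hxB₂ := hx₂ x hx hxb
      have hk₁Z := hk₁ x hxB₂
      have hk₂Z := hk₂ x hxB₂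
      have h1Q := (hZ₂ _ hk₁Z).1.1
      have h2Q := (hZ₃ _ hk₂Z).1.1.1
      rw [hQ, Finset.mem_Icc] at h1Q h2Q
      have hxn := hBn hx
      rw [Finset.mem_Icc] at hxn
      rw [Finset.mem_Icc] at hxb
      have hTx : T x = {x, k₁ x, k₂ x} := by
        simp only [hT, if_neg (show x ∉ Finset.Icc 1 b from fun h => hxb (Finset.mem_Icc.1 h))]
      have hne1 : x ≠ k₁ x := fun h => (hZ₂ _ hk₁Z).1.2.1 (h ▸ hx)
      have hne2 : x ≠ k₂ x := fun h => (hZ₃ _ hk₂Z).1.1.2.1 (h ▸ hx)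
      have hne3 : k₁ x ≠ k₂ x := fun h => (hZ₃ _ hk₂Z).2 (h ▸ hk₁Z)
      constructor
      · rw [hTx]
        intro a ha
        simp only [Finset.mem_insert, Finset.mem_singleton] at ha
        rw [Finset.mem_Icc]
        rcases ha with rfl | rfl | rfl <;> omega
      · rw [hTx, Finset.card_eq_three]
        exact ⟨x, k₁ x, k₂ x, hne1, hne2, hne3, rfl⟩
  · -- pairwise disjoint
    intro S hS S' hS' hne
    rw [Finset.mem_coe, Finset.mem_image] at hS hS'
    obtain ⟨x, hx, rfl⟩ := hS
    obtain ⟨x', hx', rfl⟩ := hS'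
    simp only [Function.onFun, id]
    rw [Finset.disjoint_left]
    intro a ha ha'
    exact hne (by rw [key x hx x' hx' a ha ha'])
  · -- card
    rw [Finset.card_image_of_injOn]
    intro x hx x' hx' he
    rw [Finset.mem_coe] at hx hx'
    exact key x hx x' hx' x (hxT x) (he ▸ hxT x)
  · -- covers
    intro a ha
    rw [Finset.mem_biUnion]
    exact ⟨T a, Finset.mem_image_of_mem _ ha, hxT a⟩

/-- from Example 1.4: `[b]` is a blocking set of `E'(3, n, b)`, and
`E'(3, n, b)` has no blocking set of size less than `b`. -/
theorem statement11 (b s n : ℕ) (hb : 1 ≤ b) (hs : 2 ≤ s) (hn : n = 3 * s)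
    (hbn : 4 * b ≤ n) :
    IsBlockingSet n s (famE' n b) (Finset.Icc 1 b) ∧
    ∀ B : Finset ℕ, IsBlockingSet n s (famE' n b) B → b ≤ B.card := by
  constructor
  · refine ⟨Finset.Icc_subset_Icc le_rfl (by omega), ?_, part1 hb⟩
    rw [Nat.card_Icc]; omega
  · intro B hB
    by_contra h
    push_neg at h
    exact hB.2.2 (part2 hb hbn hB.1 h)
end

section
/- For all integers b ≥ 1 and n ≥ 4b, |E′(3, n, b)| − |E(3, n, b)| = (b³ − 7b + 6)/6. In particular, |E′(3, n, b)| > |E(3, n, b)| whenever b > 2. -/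
open Finset

private lemma card_image_insert_aux {i : ℕ} {F : Finset (Finset ℕ)} (h : ∀ S ∈ F, i ∉ S) :
    (F.image (insert i)).card = F.card := by
  apply card_image_of_injOn
  intro S hS T hT hST
  have h1 : S = (insert i S).erase i := (erase_insert (h S hS)).symm
  rw [h1, hST, erase_insert (h T hT)]

private lemma filter_disjoint_pc (s T : Finset ℕ) (k : ℕ) :
    ((s.powersetCard k).filter (fun S => ¬ (S ∩ T).Nonempty)) = (s \ T).powersetCard k := by
  ext S
  simp only [mem_filter, mem_powersetCard, subset_sdiff, not_nonempty_iff_eq_empty,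
    ← disjoint_iff_inter_eq_empty]
  tauto

private lemma card_filter_meets (s T : Finset ℕ) (hT : T ⊆ s) (k : ℕ) :
    ((s.powersetCard k).filter (fun S => (S ∩ T).Nonempty)).card
      = s.card.choose k - (s.card - T.card).choose k := by
  have h := Finset.card_filter_add_card_filter_not
    (s := s.powersetCard k) (p := fun S => (S ∩ T).Nonempty)
  rw [filter_disjoint_pc, card_powersetCard, card_powersetCard, card_sdiff_of_subset hT] at h
  have hle : ((s.card - T.card).choose k) ≤ s.card.choose k :=
    Nat.choose_le_choose k (Nat.sub_le _ _)
  omega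

private lemma choose2_cast (x : ℕ) : ((x.choose 2 : ℕ) : ℤ) * 2 = (x : ℤ) * ((x : ℤ) - 1) := by
  cases x with
  | zero => simp
  | succ y =>
      rw [Nat.choose_two_right]
      have hd : 2 ∣ (y + 1) * (y + 1 - 1) := by
        simpa [Nat.mul_comm] using (Nat.even_mul_succ_self y).two_dvd
      rw [show ((y+1) * (y+1-1) / 2 : ℕ) * (2:ℤ) = (((y+1)*(y+1-1)/2 * 2 : ℕ) : ℤ) by
        push_cast; ring]
      rw [Nat.div_mul_cancel hd]
      push_cast; ring

private lemma sum3 (m : ℤ) (b : ℕ) :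
    3 * ∑ j ∈ Finset.range b, ((m : ℤ) - 2*j) * ((m:ℤ) - 2*j - 1)
      = 3*b*m^2 - 6*m*b*(b-1) + 2*b*(b-1)*(2*b-1) - 3*b*m + 3*b*(b-1) := by
  induction b with
  | zero => simp
  | succ k ih =>
      rw [Finset.sum_range_succ, mul_add, ih]
      push_cast
      ring

private lemma card_famEpart (b n : ℕ) (hb : 1 ≤ b) (hn : 4 * b ≤ n) (E : ℕ → Finset ℕ)
    (hE : AdmissibleChoice n 3 b E) {i : ℕ} (hi : i ∈ Finset.Icc 1 b) :
    (famEpart n 3 b E i).card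
      = (if i < b then 1 else 0) + ((n - b).choose 2 - (n - b - 2*(i-1)).choose 2) := by
  obtain ⟨hi1, hi2⟩ := mem_Icc.mp hi
  set s := Finset.Icc (b+1) n with hs
  set U := (Finset.Icc 1 (i-1)).biUnion E with hU
  have hjb : ∀ j ∈ Finset.Icc 1 (i-1), j ∈ Finset.Icc 1 (b-1) := by
    intro j hj; rw [mem_Icc] at hj ⊢; omega
  have hUs : U ⊆ s := by
    intro y hy
    obtain ⟨j, hj, hyj⟩ := mem_biUnion.mp hy
    exact (hE.1 j (hjb j hj)).1 hyj
  have hUcard : U.card = 2 * (i - 1) := by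
    rw [hU, card_biUnion]
    · rw [Finset.sum_congr rfl (fun j hj => (hE.1 j (hjb j hj)).2)]
      simp [Nat.card_Icc]; ring
    · intro x hx y hy hxy
      exact hE.2 x (hjb x hx) y (hjb y hy) hxy
  have hscard : s.card = n - b := by rw [hs, Nat.card_Icc]; omega
  have hinot : ∀ S ∈ (s.powersetCard 2).filter
      (fun S => (i < b ∧ S = E i) ∨ (S ∩ U).Nonempty), i ∉ S := by
    intro S hS hiS
    have := (mem_powersetCard.mp (mem_filter.mp hS).1).1 hiS
    rw [hs, mem_Icc] at this; omega
  rw [famEpart]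
  have h3 : (3:ℕ) - 1 = 2 := rfl
  rw [h3, ← hs, ← hU, card_image_insert_aux hinot, filter_or]
  rw [card_union_of_disjoint, card_filter_meets s U hUs 2, hscard, hUcard]
  · congr 1
    by_cases hib : i < b
    · have hiE : i ∈ Finset.Icc 1 (b-1) := by rw [mem_Icc]; omega
      have hEi : E i ∈ s.powersetCard 2 := by
        rw [mem_powersetCard]
        exact ⟨(hE.1 i hiE).1, (hE.1 i hiE).2⟩
      have : (s.powersetCard 2).filter (fun S => i < b ∧ S = E i) = {E i} := by
        ext S
        simp only [mem_filter, mem_singleton]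
        constructor
        · rintro ⟨_, _, rfl⟩; rfl
        · rintro rfl; exact ⟨hEi, hib, rfl⟩
      rw [this]; simp [hib]
    · have : (s.powersetCard 2).filter (fun S => i < b ∧ S = E i) = ∅ := by
        apply filter_false_of_mem; intro S _ h; exact hib h.1
      rw [this]; simp [hib]
  · rw [disjoint_left]
    intro S hS1 hS2
    obtain ⟨_, hib, rfl⟩ := mem_filter.mp hS1
    obtain ⟨-, z, hz⟩ := mem_filter.mp hS2
    rw [mem_inter] at hz
    obtain ⟨j, hj, hzj⟩ := mem_biUnion.mp hz.2
    have hiE : i ∈ Finset.Icc 1 (b-1) := by rw [mem_Icc]; omega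
    have hmj : j ≠ i := by rw [mem_Icc] at hj; omega
    have hdis := hE.2 j (hjb j hj) i hiE hmj
    rw [disjoint_left] at hdis
    exact hdis hzj hz.1

private lemma mem_famEpart_elem {n k b i : ℕ} {E : ℕ → Finset ℕ} {A : Finset ℕ}
    (hA : A ∈ famEpart n k b E i) : i ∈ A ∧ ∀ y ∈ A, y ≠ i → b + 1 ≤ y := by
  obtain ⟨S, hS, rfl⟩ := mem_image.mp hA
  have hSs := (mem_powersetCard.mp (mem_filter.mp hS).1).1
  refine ⟨mem_insert_self i S, fun y hy hyi => ?_⟩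
  rcases mem_insert.mp hy with h | h
  · exact absurd h hyi
  · exact (mem_Icc.mp (hSs h)).1

private lemma card_famE (b n : ℕ) (E : ℕ → Finset ℕ) :
    (famE n 3 b E).card
      = (n - b).choose 3 + ∑ i ∈ Finset.Icc 1 b, (famEpart n 3 b E i).card := by
  rw [famE, card_union_of_disjoint, card_powersetCard, Nat.card_Icc,
    show n + 1 - (b + 1) = n - b by omega, card_biUnion]
  · intro x hx y hy hxy
    rw [Function.onFun, disjoint_left]
    intro A hAx hAy
    obtain ⟨hxA, hother⟩ := mem_famEpart_elem hAx
    obtain ⟨hyA, -⟩ := mem_famEpart_elem hAy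
    have := hother y hyA (fun h => hxy h.symm)
    rw [Finset.mem_coe, mem_Icc] at hy; omega
  · rw [disjoint_left]
    intro A hA1 hA2
    obtain ⟨i, hi, hAi⟩ := mem_biUnion.mp hA2
    have hiA := (mem_famEpart_elem hAi).1
    have := (mem_powersetCard.mp hA1).1 hiA
    rw [mem_Icc] at this hi; omega

private lemma card_famE' (b n : ℕ) (hb : 1 ≤ b) (hn : 4 * b ≤ n) :
    (famE' n b).card
      = b * ((n - b).choose 2 - ((n - b) - (b - 1)).choose 2) + (n - b).choose 3 := by
  classical
  set F2 : Finset (Finset ℕ) := ((Finset.Icc (b+1) n).powersetCard 2).filter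
      (fun S => (S ∩ Finset.Icc (b + 1) (2 * b - 1)).Nonempty) with hF2
  have hmemF2 : ∀ S ∈ F2, S ⊆ Finset.Icc (b+1) n ∧ S.card = 2 ∧
      (S ∩ Finset.Icc (b + 1) (2 * b - 1)).Nonempty := by
    intro S hS
    obtain ⟨h1, h2⟩ := mem_filter.mp hS
    obtain ⟨h3, h4⟩ := mem_powersetCard.mp h1
    exact ⟨h3, h4, h2⟩
  have key : ((Finset.Icc 1 n).powersetCard 3).filter
      (fun S => (S ∩ Finset.Icc 1 b).card = 1 ∧
        1 ≤ (S ∩ Finset.Icc (b + 1) (2 * b - 1)).card)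
      = (Finset.Icc 1 b).biUnion (fun x => F2.image (insert x)) := by
    ext A
    simp only [mem_filter, mem_powersetCard, mem_biUnion, mem_image]
    constructor
    · rintro ⟨⟨hsub, hcard⟩, h1, h2⟩
      obtain ⟨x, hx⟩ := card_eq_one.mp h1
      have hxA : x ∈ A ∧ x ∈ Finset.Icc 1 b := by
        have : x ∈ A ∩ Finset.Icc 1 b := hx ▸ mem_singleton_self x
        exact mem_inter.mp this
      refine ⟨x, hxA.2, A.erase x, ?_, insert_erase hxA.1⟩
      have herasesub : A.erase x ⊆ Finset.Icc (b+1) n := by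
        intro y hy
        obtain ⟨hyx, hyA⟩ := mem_erase.mp hy
        have hy1 := mem_Icc.mp (hsub hyA)
        rw [mem_Icc]
        rcases Nat.lt_or_ge b y with h | h
        · omega
        · exfalso
          have : y ∈ A ∩ Finset.Icc 1 b := mem_inter.mpr ⟨hyA, mem_Icc.mpr ⟨hy1.1, h⟩⟩
          rw [hx, mem_singleton] at this
          exact hyx this
      rw [hF2, mem_filter, mem_powersetCard]
      refine ⟨⟨herasesub, ?_⟩, ?_⟩
      · rw [card_erase_of_mem hxA.1, hcard]
      · obtain ⟨z, hz⟩ := card_pos.mp (lt_of_lt_of_le Nat.zero_lt_one h2)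
        obtain ⟨hzA, hzI⟩ := mem_inter.mp hz
        have hzb := (mem_Icc.mp hzI).1
        have hxb := (mem_Icc.mp hxA.2).2
        refine ⟨z, mem_inter.mpr ⟨mem_erase.mpr ⟨by omega, hzA⟩, hzI⟩⟩
    · rintro ⟨x, hx, T, hT, rfl⟩
      obtain ⟨hTsub, hTcard, hTne⟩ := hmemF2 T hT
      obtain ⟨hx1, hx2⟩ := mem_Icc.mp hx
      have hxT : x ∉ T := by
        intro h
        have := (mem_Icc.mp (hTsub h)).1; omega
      have hTnotb : ∀ y ∈ T, y ∉ Finset.Icc 1 b := by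
        intro y hy hyb
        have := (mem_Icc.mp (hTsub hy)).1
        have := (mem_Icc.mp hyb).2; omega
      refine ⟨⟨?_, ?_⟩, ?_, ?_⟩
      · intro y hy
        rcases mem_insert.mp hy with rfl | h
        · rw [mem_Icc]; omega
        · have := mem_Icc.mp (hTsub h); rw [mem_Icc]; omega
      · rw [card_insert_of_notMem hxT, hTcard]
      · have : insert x T ∩ Finset.Icc 1 b = {x} := by
          ext y
          rw [mem_inter, mem_insert, mem_singleton]
          constructor
          · rintro ⟨rfl | hyT, hyb⟩
            · rfl
            · exact absurd hyb (hTnotb y hyT)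
          · rintro rfl; exact ⟨Or.inl rfl, hx⟩
        rw [this, card_singleton]
      · obtain ⟨z, hz⟩ := hTne
        obtain ⟨hzT, hzI⟩ := mem_inter.mp hz
        have : z ∈ insert x T ∩ Finset.Icc (b+1) (2*b-1) :=
          mem_inter.mpr ⟨mem_insert_of_mem hzT, hzI⟩
        exact card_pos.mpr ⟨z, this⟩
  have hF2card : F2.card = (n - b).choose 2 - ((n - b) - (b - 1)).choose 2 := by
    rw [hF2, card_filter_meets _ _ (by
      intro y hy; rw [mem_Icc] at hy ⊢; omega) 2, Nat.card_Icc, Nat.card_Icc]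
    congr 2 <;> omega
  rw [famE', card_union_of_disjoint, key, card_biUnion, card_powersetCard, Nat.card_Icc]
  · rw [Finset.sum_congr rfl (fun x hxmem => by
      rw [card_image_insert_aux (fun S hS h => by
        have := (mem_Icc.mp ((hmemF2 S hS).1 h)).1
        rw [mem_Icc] at hxmem; omega)])]
    rw [Finset.sum_const, Nat.card_Icc, hF2card, smul_eq_mul]
    congr 2
    omega
  · intro x hx y hy hxy
    rw [Function.onFun, disjoint_left]
    intro A hAx hAy
    obtain ⟨S, hS, rfl⟩ := mem_image.mp hAx
    obtain ⟨S', hS', hA'⟩ := mem_image.mp hAy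
    have hyA : y ∈ insert x S := hA' ▸ mem_insert_self y S'
    rcases mem_insert.mp hyA with h | h
    · exact hxy h.symm
    · have := (mem_Icc.mp ((hmemF2 S hS).1 h)).1
      rw [Finset.mem_coe, mem_Icc] at hy; omega
  · rw [disjoint_left]
    intro A hA1 hA2
    have hsub3 := (mem_powersetCard.mp hA2).1
    have h1 := (mem_filter.mp hA1).2.1
    have : A ∩ Finset.Icc 1 b = ∅ := by
      apply eq_empty_of_forall_notMem
      intro y hy
      obtain ⟨hyA, hyb⟩ := mem_inter.mp hy
      have := (mem_Icc.mp (hsub3 hyA)).1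
      have := (mem_Icc.mp hyb).2
      omega
    rw [this, card_empty] at h1
    exact absurd h1 one_ne_zero.symm

/-- size comparison, Section 2.1: For `b ≥ 1` and `n ≥ 4b`,
`|E'(3, n, b)| - |E(3, n, b)| = (b³ - 7b + 6)/6`; in particular `|E'(3, n, b)| >
|E(3, n, b)|` whenever `b > 2`. -/
theorem statement12 (b n : ℕ) (hb : 1 ≤ b) (hn : 4 * b ≤ n)
    (E : ℕ → Finset ℕ) (hE : AdmissibleChoice n 3 b E) :
    ((famE' n b).card : ℤ) - ((famE n 3 b E).card : ℤ) =
        ((b : ℤ) ^ 3 - 7 * b + 6) / 6 ∧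
      (2 < b → (famE n 3 b E).card < (famE' n b).card) := by
  have hm : 3 * b ≤ n - b := by omega
  set m := n - b with hmdef
  have hc2 : ∀ t : ℕ, (m - t).choose 2 ≤ m.choose 2 :=
    fun t => Nat.choose_le_choose 2 (Nat.sub_le m t)
  have hEcard : (famE n 3 b E).card
      = m.choose 3 + ((b - 1) + ∑ j ∈ Finset.range b,
          (m.choose 2 - (m - 2*j).choose 2)) := by
    rw [card_famE b n E,
      Finset.sum_congr rfl (fun i hi => card_famEpart b n hb hn E hE hi)]
    rw [Finset.sum_add_distrib]
    congr 2
    · rw [Finset.sum_boole]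
      have : (Finset.Icc 1 b).filter (· < b) = Finset.Icc 1 (b-1) := by
        ext x; simp only [Finset.mem_filter, Finset.mem_Icc]; omega
      rw [this, Nat.card_Icc]
      simp only [Nat.cast_id]
      omega
    · rw [← Finset.Ico_add_one_right_eq_Icc, Finset.sum_Ico_eq_sum_range]
      apply Finset.sum_congr (by simp)
      intro j hj
      congr 2
      omega
  have hkey : 6 * (((famE' n b).card : ℤ) - ((famE n 3 b E).card : ℤ))
      = (b : ℤ)^3 - 7*b + 6 := by
    rw [card_famE' b n hb hn, hEcard, ← hmdef]
    have e1 : ((b * (m.choose 2 - (m - (b-1)).choose 2) + m.choose 3 : ℕ) : ℤ)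
        = b * ((m.choose 2 : ℤ) - ((m - (b-1)).choose 2 : ℤ)) + (m.choose 3 : ℤ) := by
      push_cast [Nat.cast_sub (hc2 (b-1))]; ring
    have e2 : ((m.choose 3 + ((b - 1) + ∑ j ∈ Finset.range b,
          (m.choose 2 - (m - 2*j).choose 2)) : ℕ) : ℤ)
        = (m.choose 3 : ℤ) + (((b : ℤ) - 1) + ∑ j ∈ Finset.range b,
          ((m.choose 2 : ℤ) - ((m - 2*j).choose 2 : ℤ))) := by
      push_cast [Nat.cast_sub (hc2 _), Nat.cast_sub hb]
      ring
    rw [e1, e2]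
    have h6 : ∀ x : ℕ, 6 * ((x.choose 2 : ℕ) : ℤ) = 3 * ((x:ℤ) * ((x:ℤ)-1)) := by
      intro x; have := choose2_cast x; linarith
    have hcB : ((m - (b-1) : ℕ) : ℤ) = (m:ℤ) - (b:ℤ) + 1 := by
      rw [Nat.cast_sub (by omega)]; push_cast [Nat.cast_sub hb]; ring
    have hterm : ∀ j ∈ Finset.range b, 6 * ((m.choose 2 : ℤ) - ((m - 2*j).choose 2 : ℤ))
        = 6 * (m.choose 2 : ℤ) - 3 * (((m:ℤ) - 2*j) * ((m:ℤ) - 2*j - 1)) := by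
      intro j hj
      rw [Finset.mem_range] at hj
      have := h6 (m - 2*j)
      rw [Nat.cast_sub (by omega : 2*j ≤ m)] at this
      push_cast at this ⊢
      linarith
    have hsum6 : 6 * ∑ j ∈ Finset.range b, ((m.choose 2 : ℤ) - ((m - 2*j).choose 2 : ℤ))
        = 6 * b * (m.choose 2 : ℤ)
          - 3 * ∑ j ∈ Finset.range b, ((m:ℤ) - 2*j) * ((m:ℤ) - 2*j - 1) := by
      rw [Finset.mul_sum, Finset.sum_congr rfl hterm, Finset.sum_sub_distrib,
        Finset.sum_const, Finset.card_range, ← Finset.mul_sum, nsmul_eq_mul]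
      ring
    have hs3 := sum3 (m : ℤ) b
    have h6B := h6 (m - (b-1))
    rw [hcB] at h6B
    nlinarith [hsum6, hs3, h6 m, h6B]
  constructor
  · rw [← hkey, Int.mul_ediv_cancel_left _ (by norm_num : (6:ℤ) ≠ 0)]
  · intro hb2
    have h3 : (3 : ℤ) ≤ (b : ℤ) := by exact_mod_cast hb2
    have hprod : 0 < ((b:ℤ) - 1) * ((b:ℤ) - 2) * ((b:ℤ) + 3) :=
      mul_pos (mul_pos (by linarith) (by linarith)) (by linarith)
    have hfac : (b:ℤ)^3 - 7*b + 6 = ((b:ℤ) - 1) * ((b:ℤ) - 2) * ((b:ℤ) + 3) := by ring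
    have hpos : 0 < (b:ℤ)^3 - 7*b + 6 := by rw [hfac]; exact hprod
    rw [← hkey] at hpos
    have : ((famE n 3 b E).card : ℤ) < ((famE' n b).card : ℤ) := by linarith
    exact_mod_cast this
end

section
/- For all integers k ≥ 2, b ≥ 1 and n ≥ bk + b, and for any admissible choice of the sets E_1, …, E_{b−1}: |E(k, n, b)| = C(n−b, k) + b·C(n−b, k−1) − Σ_{i=1}^{b} C(n−b−(k−1)(i−1), k−1) + (b−1), where C(m, j) denotes the binomial coefficient. -/
/-- size formula, Section 2.1: For any admissible choice of the `E_i`,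
`|E(k, n, b)| = C(n-b, k) + b·C(n-b, k-1) - Σ_{i=1}^b C(n-b-(k-1)(i-1), k-1) + (b-1)`
(stated with the subtracted sum moved to the left-hand side). -/
theorem statement13 (k b n : ℕ) (hk : 2 ≤ k) (hb : 1 ≤ b) (hbn : b * k + b ≤ n)
    (E : ℕ → Finset ℕ) (hE : AdmissibleChoice n k b E) :
    (famE n k b E).card
        + ∑ i ∈ Finset.Icc 1 b, Nat.choose (n - b - (k - 1) * (i - 1)) (k - 1)
      = Nat.choose (n - b) k + b * Nat.choose (n - b) (k - 1) + (b - 1) := by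
  obtain ⟨hE1, hE2⟩ := hE
  have hIcard : (Finset.Icc (b+1) n).card = n - b := by
    rw [Nat.card_Icc]; omega
  have hnotmem : ∀ i, i ≤ b → ∀ S : Finset ℕ, S ⊆ Finset.Icc (b+1) n → i ∉ S := by
    intro i hi S hS hmem
    have := hS hmem
    rw [Finset.mem_Icc] at this
    omega
  have key : ∀ i ∈ Finset.Icc 1 b,
      (famEpart n k b E i).card + Nat.choose (n - b - (k-1)*(i-1)) (k-1)
        = Nat.choose (n-b) (k-1) + (if i < b then 1 else 0) := by
    intro i hi
    rw [Finset.mem_Icc] at hi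
    set U := (Finset.Icc 1 (i-1)).biUnion E with hU
    have hmem' : ∀ j ∈ Finset.Icc 1 (i-1), j ∈ Finset.Icc 1 (b-1) := by
      intro j hj; rw [Finset.mem_Icc] at *; omega
    have hUsub : U ⊆ Finset.Icc (b+1) n := by
      intro x hx
      rw [hU, Finset.mem_biUnion] at hx
      obtain ⟨j, hj, hxj⟩ := hx
      exact (hE1 j (hmem' j hj)).1 hxj
    have hUcard : U.card = (k-1)*(i-1) := by
      rw [hU, Finset.card_biUnion]
      · rw [Finset.sum_congr rfl (fun j hj => (hE1 j (hmem' j hj)).2), Finset.sum_const,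
          Nat.card_Icc]
        simp [Nat.add_sub_cancel, Nat.mul_comm]
      · intro x hx y hy hxy
        exact hE2 x (hmem' x hx) y (hmem' y hy) hxy
    have hneg : (((Finset.Icc (b+1) n).powersetCard (k-1)).filter
        (fun S => ¬(S ∩ U).Nonempty)) = (Finset.Icc (b+1) n \ U).powersetCard (k-1) := by
      ext S
      simp only [Finset.mem_filter, Finset.mem_powersetCard, Finset.subset_sdiff,
        Finset.not_nonempty_iff_eq_empty, ← Finset.disjoint_iff_inter_eq_empty]
      tauto
    have hnegcard : (((Finset.Icc (b+1) n).powersetCard (k-1)).filter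
        (fun S => ¬(S ∩ U).Nonempty)).card = Nat.choose (n - b - (k-1)*(i-1)) (k-1) := by
      rw [hneg, Finset.card_powersetCard, Finset.card_sdiff_of_subset hUsub, hIcard, hUcard]
    have hsplit := Finset.card_filter_add_card_filter_not
      (s := (Finset.Icc (b+1) n).powersetCard (k-1)) (p := fun S => (S ∩ U).Nonempty)
    rw [Finset.card_powersetCard, hIcard, hnegcard] at hsplit
    have himg : (famEpart n k b E i).card
        = (((Finset.Icc (b+1) n).powersetCard (k-1)).filter
            (fun S => (i < b ∧ S = E i) ∨ (S ∩ U).Nonempty)).card := by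
      rw [famEpart, hU, Finset.card_image_of_injOn]
      intro S hS T hT hST
      simp only [Finset.coe_filter, Set.mem_setOf_eq, Finset.mem_powersetCard] at hS hT
      have hiS : i ∉ S := hnotmem i hi.2 S hS.1.1
      have hiT : i ∉ T := hnotmem i hi.2 T hT.1.1
      have := congrArg (fun A : Finset ℕ => A.erase i) hST
      simpa [Finset.erase_insert, hiS, hiT] using this
    by_cases hib : i < b
    · have hi' : i ∈ Finset.Icc 1 (b-1) := by rw [Finset.mem_Icc]; omega
      have hEi : E i ∈ (Finset.Icc (b+1) n).powersetCard (k-1) := by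
        rw [Finset.mem_powersetCard]; exact ⟨(hE1 i hi').1, (hE1 i hi').2⟩
      have hEiU : ¬ (E i ∩ U).Nonempty := by
        rw [Finset.not_nonempty_iff_eq_empty, ← Finset.disjoint_iff_inter_eq_empty, hU,
          Finset.disjoint_biUnion_right]
        intro j hj
        exact hE2 i hi' j (hmem' j hj) (by rw [Finset.mem_Icc] at hj; omega)
      have hins : (((Finset.Icc (b+1) n).powersetCard (k-1)).filter
          (fun S => (i < b ∧ S = E i) ∨ (S ∩ U).Nonempty))
          = insert (E i) (((Finset.Icc (b+1) n).powersetCard (k-1)).filter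
              (fun S => (S ∩ U).Nonempty)) := by
        ext S
        simp only [Finset.mem_filter, Finset.mem_insert]
        constructor
        · rintro ⟨hSpc, (⟨-, rfl⟩ | hQ)⟩
          · exact Or.inl rfl
          · exact Or.inr ⟨hSpc, hQ⟩
        · rintro (rfl | ⟨hSpc, hQ⟩)
          · exact ⟨hEi, Or.inl ⟨hib, rfl⟩⟩
          · exact ⟨hSpc, Or.inr hQ⟩
      have hnotin : E i ∉ ((Finset.Icc (b+1) n).powersetCard (k-1)).filter
          (fun S => (S ∩ U).Nonempty) := by
        simp only [Finset.mem_filter]; tauto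
      rw [himg, hins, Finset.card_insert_of_notMem hnotin, if_pos hib]
      omega
    · have hfe : (((Finset.Icc (b+1) n).powersetCard (k-1)).filter
          (fun S => (i < b ∧ S = E i) ∨ (S ∩ U).Nonempty))
          = ((Finset.Icc (b+1) n).powersetCard (k-1)).filter
              (fun S => (S ∩ U).Nonempty) := by
        apply Finset.filter_congr
        intro S hS
        simp [hib]
      rw [himg, hfe, if_neg hib]
      omega
  have hcontains : ∀ i, ∀ T ∈ famEpart n k b E i, i ∈ T ∧ ∀ x ∈ T, x = i ∨ b + 1 ≤ x := by
    intro i T hT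
    rw [famEpart, Finset.mem_image] at hT
    obtain ⟨S, hS, rfl⟩ := hT
    rw [Finset.mem_filter, Finset.mem_powersetCard] at hS
    refine ⟨Finset.mem_insert_self _ _, ?_⟩
    intro x hx
    rcases Finset.mem_insert.mp hx with rfl | hx
    · exact Or.inl rfl
    · exact Or.inr (by have := hS.1.1 hx; rw [Finset.mem_Icc] at this; omega)
  have hdisjAB : Disjoint ((Finset.Icc (b+1) n).powersetCard k)
      ((Finset.Icc 1 b).biUnion (famEpart n k b E)) := by
    rw [Finset.disjoint_left]
    intro T hT hT'
    rw [Finset.mem_powersetCard] at hT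
    rw [Finset.mem_biUnion] at hT'
    obtain ⟨i, hi, hTi⟩ := hT'
    rw [Finset.mem_Icc] at hi
    have hiT := (hcontains i T hTi).1
    have := hT.1 hiT
    rw [Finset.mem_Icc] at this
    omega
  have hcard : (famE n k b E).card
      = Nat.choose (n-b) k + ∑ i ∈ Finset.Icc 1 b, (famEpart n k b E i).card := by
    rw [famE, Finset.card_union_of_disjoint hdisjAB, Finset.card_powersetCard, hIcard,
      Finset.card_biUnion]
    intro i hi j hj hij
    rw [Function.onFun, Finset.disjoint_left]
    intro T hTi hTj
    rw [Finset.mem_coe, Finset.mem_Icc] at hi hj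
    have h1 := (hcontains i T hTi).1
    have h2 := (hcontains j T hTj).2 i h1
    omega
  have hsum : ∑ i ∈ Finset.Icc 1 b, (if i < b then 1 else 0) = b - 1 := by
    rw [← Finset.sum_filter]
    have hfil : (Finset.Icc 1 b).filter (fun i => i < b) = Finset.Icc 1 (b-1) := by
      ext x
      simp only [Finset.mem_filter, Finset.mem_Icc]
      omega
    rw [hfil, Finset.sum_const, Nat.card_Icc]
    simp
  have hsum2 : ∑ i ∈ Finset.Icc 1 b, ((famEpart n k b E i).card
      + Nat.choose (n - b - (k-1)*(i-1)) (k-1))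
      = b * Nat.choose (n-b) (k-1) + (b-1) := by
    rw [Finset.sum_congr rfl key, Finset.sum_add_distrib, Finset.sum_const, Nat.card_Icc,
      hsum]
    simp [Nat.add_sub_cancel, Nat.mul_comm]
  rw [hcard, add_assoc, ← Finset.sum_add_distrib, hsum2]
  ring
end

section
/- Let k ≥ 2, b ≥ 1 and c ≥ 0 be integers. There exists s₀ = s₀(k, b, c) such that for all integers s ≥ s₀ with n = k·s the following holds: if F is a family of k-element subsets of [n] that has no perfect matching, has no blocking set of size less than b, is shifted on [n − c] (i.e., on the set {1, …, n−c}), and satisfies |F| > |E(k, n, b)|, then F has a blocking set of size exactly b. -/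
section Aux

lemma exc {F : Finset (Finset ℕ)} {w : ℕ} (hS : ShiftedOn F (Finset.Icc 1 w))
    {x y : ℕ} (hx1 : 1 ≤ x) (hxy : x < y) (hyw : y ≤ w)
    {A : Finset ℕ} (hA : A ∈ F) (hyA : y ∈ A) (hxA : x ∉ A) :
    insert x (A.erase y) ∈ F := by
  have hx : x ∈ Finset.Icc 1 w := Finset.mem_Icc.mpr ⟨hx1, le_trans hxy.le hyw⟩
  have hy : y ∈ Finset.Icc 1 w := Finset.mem_Icc.mpr ⟨le_trans hx1 hxy.le, hyw⟩
  by_contra hnot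
  have hcard := hS.1 x hx y hy hxy.le
  have heq := hS.2 x hx y hy hxy.ne hcard
  have hmem : shiftSet F x y A ∈ shiftFam F x y := Finset.mem_image_of_mem _ hA
  rw [heq] at hmem
  rw [shiftSet, if_pos ⟨hyA, hxA, hnot⟩] at hmem
  exact hnot hmem

def domi (A D : Finset ℕ) : Prop :=
  ∀ m : ℕ, (D.filter (fun v => m ≤ v)).card ≤ (A.filter (fun v => m ≤ v)).card

lemma exchain {F : Finset (Finset ℕ)} {w : ℕ}
    (hexc : ∀ x y : ℕ, 1 ≤ x → x < y → y ≤ w → ∀ A ∈ F, y ∈ A → x ∉ A →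
      insert x (A.erase y) ∈ F) :
    ∀ N : ℕ, ∀ A D : Finset ℕ, A.sum id ≤ N → A ⊆ Finset.Icc 1 w → D ⊆ Finset.Icc 1 w →
      A.card = D.card → domi A D → A ∈ F → D ∈ F := by
  intro N
  induction N with
  | zero =>
    intro A D hsum hAw hDw hcard _ hAF
    have hA0 : A = ∅ := by
      by_contra hne
      obtain ⟨a, ha⟩ := Finset.nonempty_iff_ne_empty.mpr hne
      have h1 : 1 ≤ a := (Finset.mem_Icc.mp (hAw ha)).1
      have : 1 ≤ A.sum id := le_trans h1 (Finset.single_le_sum (fun i _ => Nat.zero_le (id i)) ha)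
      omega
    subst hA0
    have : D = ∅ := Finset.card_eq_zero.mp (by rw [Finset.card_empty] at hcard; omega)
    rwa [this]
  | succ N ih =>
    intro A D hsum hAw hDw hcard hdom hAF
    by_cases heq : A = D
    · rwa [heq] at hAF
    have hDA : (D \ A).Nonempty := by
      rw [Finset.sdiff_nonempty]
      intro hsub
      exact heq (Finset.eq_of_subset_of_card_le hsub (le_of_eq hcard)).symm
    have hAD : (A \ D).Nonempty := by
      rw [Finset.sdiff_nonempty]
      intro hsub
      exact heq (Finset.eq_of_subset_of_card_le hsub (ge_of_eq hcard))
    set x := (D \ A).max' hDA with hxdef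
    set y := (A \ D).max' hAD with hydef
    have hxD : x ∈ D := (Finset.mem_sdiff.mp ((D \ A).max'_mem hDA)).1
    have hxA : x ∉ A := (Finset.mem_sdiff.mp ((D \ A).max'_mem hDA)).2
    have hyA : y ∈ A := (Finset.mem_sdiff.mp ((A \ D).max'_mem hAD)).1
    have hyD : y ∉ D := (Finset.mem_sdiff.mp ((A \ D).max'_mem hAD)).2
    have hxy : x < y := by
      by_contra hle
      push_neg at hle
      have hssub : A.filter (fun v => x ≤ v) ⊂ D.filter (fun v => x ≤ v) := by
        constructor
        · intro v hv
          obtain ⟨hvA, hvx⟩ := Finset.mem_filter.mp hv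
          refine Finset.mem_filter.mpr ⟨?_, hvx⟩
          by_contra hvD
          have : v ≤ y := Finset.le_max' _ v (Finset.mem_sdiff.mpr ⟨hvA, hvD⟩)
          have : v = x := le_antisymm (le_trans this hle) hvx
          exact hxA (this ▸ hvA)
        · intro hsub
          have : x ∈ A.filter (fun v => x ≤ v) :=
            hsub (Finset.mem_filter.mpr ⟨hxD, le_refl x⟩)
          exact hxA (Finset.mem_filter.mp this).1
      have := Finset.card_lt_card hssub
      have := hdom x
      omega
    have hx1 : 1 ≤ x := (Finset.mem_Icc.mp (hDw hxD)).1
    have hyw : y ≤ w := (Finset.mem_Icc.mp (hAw hyA)).2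
    set A' := insert x (A.erase y) with hA'def
    have hA'F : A' ∈ F := hexc x y hx1 hxy hyw A hAF hyA hxA
    have hxnotin : x ∉ A.erase y := fun h => hxA (Finset.mem_of_mem_erase h)
    have hA'card : A'.card = A.card := by
      rw [hA'def, Finset.card_insert_of_notMem hxnotin, Finset.card_erase_of_mem hyA]
      have : 1 ≤ A.card := Finset.card_pos.mpr ⟨y, hyA⟩
      omega
    have hA'w : A' ⊆ Finset.Icc 1 w :=
      Finset.insert_subset (hDw hxD) (le_trans (Finset.erase_subset _ _) hAw)
    have hA'sum : A'.sum id ≤ N := by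
      have h1 : (A.erase y).sum id + y = A.sum id := Finset.sum_erase_add A id hyA
      have h2 : A'.sum id = x + (A.erase y).sum id := Finset.sum_insert hxnotin
      omega
    refine ih A' D hA'sum hA'w hDw (by omega) ?_ hA'F
    intro m
    have hdm := hdom m
    rcases le_or_gt m x with hmx | hxm
    · have : A'.filter (fun v => m ≤ v) = insert x ((A.filter (fun v => m ≤ v)).erase y) := by
        rw [hA'def, Finset.filter_insert, if_pos hmx, Finset.filter_erase]
      rw [this]
      have hyf : y ∈ A.filter (fun v => m ≤ v) :=
        Finset.mem_filter.mpr ⟨hyA, le_trans hmx hxy.le⟩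
      have hxf : x ∉ (A.filter (fun v => m ≤ v)).erase y :=
        fun h => hxA (Finset.mem_filter.mp (Finset.mem_of_mem_erase h)).1
      rw [Finset.card_insert_of_notMem hxf, Finset.card_erase_of_mem hyf]
      have : 1 ≤ (A.filter (fun v => m ≤ v)).card := Finset.card_pos.mpr ⟨y, hyf⟩
      omega
    · rcases le_or_gt m y with hmy | hym
      · have hfe : A'.filter (fun v => m ≤ v) = (A.filter (fun v => m ≤ v)).erase y := by
          rw [hA'def, Finset.filter_insert, if_neg (by omega), Finset.filter_erase]
        have hyf : y ∈ A.filter (fun v => m ≤ v) := Finset.mem_filter.mpr ⟨hyA, hmy⟩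
        have hsub : insert y (D.filter (fun v => m ≤ v)) ⊆ A.filter (fun v => m ≤ v) := by
          intro v hv
          rcases Finset.mem_insert.mp hv with rfl | hv
          · exact hyf
          · obtain ⟨hvD, hvm⟩ := Finset.mem_filter.mp hv
            refine Finset.mem_filter.mpr ⟨?_, hvm⟩
            by_contra hvA
            have : v ≤ x := Finset.le_max' _ v (Finset.mem_sdiff.mpr ⟨hvD, hvA⟩)
            omega
        have hynf : y ∉ D.filter (fun v => m ≤ v) := fun h => hyD (Finset.mem_filter.mp h).1
        have hcards : (D.filter (fun v => m ≤ v)).card + 1 ≤ (A.filter (fun v => m ≤ v)).card := by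
          have := Finset.card_le_card hsub
          rwa [Finset.card_insert_of_notMem hynf] at this
        rw [hfe, Finset.card_erase_of_mem hyf]
        omega
      · have hfe : A'.filter (fun v => m ≤ v) = A.filter (fun v => m ≤ v) := by
          rw [hA'def, Finset.filter_insert, if_neg (by omega), Finset.filter_erase,
            Finset.erase_eq_of_notMem (fun h => by
              have := (Finset.mem_filter.mp h).2; omega)]
        rw [hfe]; exact hdm

lemma desc_diff_le (M : ℕ) : ∀ r m : ℕ, r ≤ m → m ≤ M →
    M.descFactorial r ≤ m.descFactorial r + (M - m) * r * M ^ (r - 1) := by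
  intro r
  induction r with
  | zero => intro m _ _; simp
  | succ r ih =>
    intro m hrm hmM
    rcases Nat.eq_zero_or_pos r with hr0 | hrpos
    · subst hr0
      simp [Nat.descFactorial]
      omega
    have ihm := ih m (by omega) hmM
    rw [Nat.descFactorial_succ, Nat.descFactorial_succ]
    have hdesc_le : m.descFactorial r ≤ M ^ r :=
      le_trans (Nat.descFactorial_le_pow m r) (Nat.pow_le_pow_left hmM r)
    have e1 : (M - r) * M.descFactorial r ≤
        (M - r) * (m.descFactorial r + (M - m) * r * M ^ (r - 1)) :=
      Nat.mul_le_mul_left _ ihm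
    have e2 : (M - r) * m.descFactorial r ≤
        (m - r) * m.descFactorial r + (M - m) * M ^ r := by
      have h1 : M - r ≤ (m - r) + (M - m) := by omega
      calc (M - r) * m.descFactorial r ≤ ((m - r) + (M - m)) * m.descFactorial r :=
            Nat.mul_le_mul_right _ h1
        _ = (m - r) * m.descFactorial r + (M - m) * m.descFactorial r := by ring
        _ ≤ (m - r) * m.descFactorial r + (M - m) * M ^ r := by
            exact Nat.add_le_add_left (Nat.mul_le_mul_left _ hdesc_le) _
    have e3 : (M - r) * ((M - m) * r * M ^ (r - 1)) ≤ (M - m) * r * M ^ r := by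
      calc (M - r) * ((M - m) * r * M ^ (r - 1)) ≤ M * ((M - m) * r * M ^ (r - 1)) :=
            Nat.mul_le_mul_right _ (Nat.sub_le M r)
        _ = (M - m) * r * (M ^ (r - 1) * M) := by ring
        _ = (M - m) * r * M ^ r := by
            rw [← pow_succ]
            have h : r - 1 + 1 = r := by omega
            rw [h]
    calc (M - r) * M.descFactorial r
        ≤ (M - r) * m.descFactorial r + (M - r) * ((M - m) * r * M ^ (r - 1)) := by
          rw [← Nat.mul_add]; exact e1
      _ ≤ ((m - r) * m.descFactorial r + (M - m) * M ^ r) + (M - m) * r * M ^ r :=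
          Nat.add_le_add e2 e3
      _ = (m - r) * m.descFactorial r + (M - m) * (r + 1) * M ^ (r + 1 - 1) := by
          rw [Nat.add_sub_cancel]; ring

lemma rho_pow_le_choose (k ρ : ℕ) (hρ : 1 ≤ ρ) : ρ ^ k ≤ Nat.choose (k * ρ) k := by
  have step : ∀ r : ℕ, ρ ^ r * k.descFactorial r ≤ (k * ρ).descFactorial r := by
    intro r
    induction r with
    | zero => simp
    | succ r ih =>
      rw [Nat.descFactorial_succ, Nat.descFactorial_succ]
      rcases le_or_gt k r with hkr | hrk
      · simp [Nat.sub_eq_zero_of_le hkr]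
      have h1 : ρ * (k - r) ≤ k * ρ - r := by
        have : ρ * (k - r) + r ≤ ρ * (k - r) + r * ρ := by
          nlinarith
        have h2 : ρ * (k - r) + r * ρ = k * ρ := by
          have : (k - r) + r = k := by omega
          nlinarith [this]
        omega
      calc ρ ^ (r + 1) * ((k - r) * k.descFactorial r)
          = (ρ * (k - r)) * (ρ ^ r * k.descFactorial r) := by ring
        _ ≤ (k * ρ - r) * (k * ρ).descFactorial r := Nat.mul_le_mul h1 ih
  have := step k
  rw [Nat.descFactorial_self, Nat.descFactorial_eq_factorial_mul_choose] at this
  have hfac : 0 < k.factorial := Nat.factorial_pos k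
  rw [mul_comm] at this
  exact Nat.le_of_mul_le_mul_left this hfac

lemma choose_le_pow' (m r : ℕ) : Nat.choose m r ≤ m ^ r := by
  have h := Nat.descFactorial_le_pow m r
  rw [Nat.descFactorial_eq_factorial_mul_choose] at h
  have : Nat.choose m r ≤ r.factorial * Nat.choose m r :=
    Nat.le_mul_of_pos_left _ (Nat.factorial_pos r)
  omega

lemma pascal_telescope {n k : ℕ} (hk : 1 ≤ k) :
    ∀ b : ℕ, b ≤ n → Nat.choose n k ≤ Nat.choose (n - b) k + b * Nat.choose (n - 1) (k - 1) := by
  intro b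
  induction b with
  | zero => simp
  | succ b ih =>
    intro hbn
    have h1 := ih (by omega)
    obtain ⟨k', rfl⟩ : ∃ k', k = k' + 1 := ⟨k - 1, by omega⟩
    have hsplit : Nat.choose (n - b) (k' + 1) =
        Nat.choose (n - b - 1) k' + Nat.choose (n - b - 1) (k' + 1) := by
      have h : n - b = (n - b - 1) + 1 := by omega
      conv_lhs => rw [h]
      exact Nat.choose_succ_succ' _ _
    have hmono : Nat.choose (n - b - 1) k' ≤ Nat.choose (n - 1) k' :=
      Nat.choose_le_choose _ (by omega)
    have hidx : n - b - 1 = n - (b + 1) := by omega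
    simp only [Nat.add_sub_cancel] at h1 ⊢
    calc Nat.choose n (k' + 1) ≤ Nat.choose (n - b) (k' + 1) + b * Nat.choose (n - 1) k' := h1
      _ = Nat.choose (n - b - 1) k' + Nat.choose (n - b - 1) (k' + 1)
            + b * Nat.choose (n - 1) k' := by rw [hsplit]
      _ ≤ Nat.choose (n - 1) k' + Nat.choose (n - (b + 1)) (k' + 1)
            + b * Nat.choose (n - 1) k' := by
          rw [hidx]
          exact Nat.add_le_add_right (Nat.add_le_add_right hmono _) _
      _ = Nat.choose (n - (b + 1)) (k' + 1) + (b + 1) * Nat.choose (n - 1) k' := by ring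

lemma key_ineq (b r N₂ M : ℕ) (hr : 1 ≤ r) (hN : r ≤ N₂) (hNM : N₂ ≤ M)
    (h4 : M ≤ 4 * (N₂ + 1 - r))
    (hbig : (2 * b + 1) * ((M - N₂) * r * 4 ^ (r - 1)) ≤ N₂ + 1 - r) :
    b * Nat.choose M r < (b + 1) * Nat.choose N₂ r := by
  set G := N₂ + 1 - r with hG
  have hGpos : 1 ≤ G := by omega
  have d1 : M.descFactorial r ≤ N₂.descFactorial r + (M - N₂) * r * M ^ (r - 1) :=
    desc_diff_le M r N₂ hN hNM
  have d2 : G ^ r ≤ N₂.descFactorial r := Nat.pow_sub_le_descFactorial N₂ r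
  have d3 : M ^ (r - 1) ≤ 4 ^ (r - 1) * G ^ (r - 1) := by
    calc M ^ (r - 1) ≤ (4 * G) ^ (r - 1) := Nat.pow_le_pow_left h4 _
      _ = 4 ^ (r - 1) * G ^ (r - 1) := mul_pow 4 G (r - 1)
  have d4 : (2 * b + 1) * ((M - N₂) * r * M ^ (r - 1)) ≤ N₂.descFactorial r := by
    calc (2 * b + 1) * ((M - N₂) * r * M ^ (r - 1))
        ≤ (2 * b + 1) * ((M - N₂) * r * (4 ^ (r - 1) * G ^ (r - 1))) := by
          exact Nat.mul_le_mul_left _ (Nat.mul_le_mul_left _ d3)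
      _ = ((2 * b + 1) * ((M - N₂) * r * 4 ^ (r - 1))) * G ^ (r - 1) := by ring
      _ ≤ G * G ^ (r - 1) := Nat.mul_le_mul_right _ hbig
      _ = G ^ r := by
          rw [← pow_succ']
          have h : r - 1 + 1 = r := by omega
          rw [h]
      _ ≤ N₂.descFactorial r := d2
  have hdescle : (2 * b + 1) * M.descFactorial r ≤ (2 * (b + 1)) * N₂.descFactorial r := by
    calc (2 * b + 1) * M.descFactorial r
        ≤ (2 * b + 1) * N₂.descFactorial r + (2 * b + 1) * ((M - N₂) * r * M ^ (r - 1)) := by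
          rw [← Nat.mul_add]; exact Nat.mul_le_mul_left _ d1
      _ ≤ (2 * b + 1) * N₂.descFactorial r + N₂.descFactorial r := Nat.add_le_add_left d4 _
      _ = (2 * (b + 1)) * N₂.descFactorial r := by ring
  rw [Nat.descFactorial_eq_factorial_mul_choose, Nat.descFactorial_eq_factorial_mul_choose]
    at hdescle
  have hfac : 0 < r.factorial := Nat.factorial_pos r
  have hch : (2 * b + 1) * Nat.choose M r ≤ (2 * (b + 1)) * Nat.choose N₂ r := by
    have h' : r.factorial * ((2 * b + 1) * Nat.choose M r) ≤
        r.factorial * ((2 * (b + 1)) * Nat.choose N₂ r) := by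
      calc r.factorial * ((2 * b + 1) * Nat.choose M r)
          = (2 * b + 1) * (r.factorial * Nat.choose M r) := by ring
        _ ≤ (2 * (b + 1)) * (r.factorial * Nat.choose N₂ r) := hdescle
        _ = r.factorial * ((2 * (b + 1)) * Nat.choose N₂ r) := by ring
    exact Nat.le_of_mul_le_mul_left h' hfac
  have hCpos : 1 ≤ Nat.choose N₂ r := Nat.choose_pos hN
  have hCle : Nat.choose N₂ r ≤ Nat.choose M r := Nat.choose_le_choose r hNM
  by_contra hcon
  push_neg at hcon
  nlinarith

lemma exists_partition (k : ℕ) (hk : 0 < k) : ∀ m : ℕ, ∀ R : Finset ℕ, R.card = k * m →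
    ∃ P : Finset (Finset ℕ), (↑P : Set (Finset ℕ)).PairwiseDisjoint id ∧
      P.biUnion id = R ∧ ∀ A ∈ P, A.card = k ∧ A ⊆ R := by
  intro m
  induction m with
  | zero =>
    intro R hR
    refine ⟨∅, by simp, ?_, by simp⟩
    simp only [Finset.biUnion_empty]
    exact (Finset.card_eq_zero.mp (by omega)).symm
  | succ m ih =>
    intro R hR
    obtain ⟨A, hAsub, hAcard⟩ := Finset.exists_subset_card_eq (s := R) (n := k)
      (by rw [hR]; exact Nat.le_mul_of_pos_right k (by omega))
    obtain ⟨P, hPdisj, hPunion, hPmem⟩ := ih (R \ A) (by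
      rw [Finset.card_sdiff_of_subset hAsub, hAcard, hR]
      have : k * (m + 1) = k * m + k := by ring
      omega)
    have hAnotP : A ∉ P := by
      intro hAP
      have hsub : A ⊆ R \ A := (hPmem A hAP).2
      have : A.Nonempty := Finset.card_pos.mp (by omega)
      obtain ⟨a, ha⟩ := this
      exact (Finset.mem_sdiff.mp (hsub ha)).2 ha
    refine ⟨insert A P, ?_, ?_, ?_⟩
    · rw [Finset.coe_insert]
      refine Set.PairwiseDisjoint.insert hPdisj ?_
      intro B hBP _
      have hBsub : B ⊆ R \ A := (hPmem B hBP).2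
      rw [Finset.disjoint_left]
      intro a haA haB
      exact (Finset.mem_sdiff.mp (hBsub haB)).2 haA
    · rw [Finset.biUnion_insert, hPunion]
      simp only [id]
      rw [Finset.union_sdiff_of_subset hAsub]
    · intro B hB
      rcases Finset.mem_insert.mp hB with rfl | hBP
      · exact ⟨hAcard, hAsub⟩
      · exact ⟨(hPmem B hBP).1, le_trans (hPmem B hBP).2 (Finset.sdiff_subset)⟩

end Aux

set_option maxHeartbeats 2000000

/-- Section 4: For `s` large enough, a family `F` of `k`-subsets of
`[n]` with no perfect matching, no blocking set of size less than `b`, shifted on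
`[n - c]`, and with `|F| > |E(k, n, b)|`, has a blocking set of size exactly `b`. -/
theorem statement15 (k b c : ℕ) (hk : 2 ≤ k) (hb : 1 ≤ b) :
    ∃ s₀ : ℕ, ∀ s : ℕ, s₀ ≤ s → ∀ n : ℕ, n = k * s →
      ∀ F : Finset (Finset ℕ), IsFamily n k F →
        ¬ HasPerfectMatching n F →
        (∀ B : Finset ℕ, IsBlockingSet n s F B → b ≤ B.card) →
        ShiftedOn F (Finset.Icc 1 (n - c)) →
        (∀ E : ℕ → Finset ℕ, AdmissibleChoice n k b E → (famE n k b E).card < F.card) →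
        ∃ B : Finset ℕ, IsBlockingSet n s F B ∧ B.card = b := by
  classical
  refine ⟨b * (8 * (2 * b + 1) * k ^ 3 * 4 ^ k) ^ k + 2 * (8 * (2 * b + 1) * k ^ 3 * 4 ^ k) +
    3 * (5 * ((2 * b + 1) * k * 4 ^ k) * (c * k + c + b + 2 * k + 2)) + (b + c + k + 2) ^ 2 + 2,
    ?_⟩
  intro s hs n hn F hFam hnoPM hblock hshift hcard
  by_contra hcon
  push_neg at hcon
  -- abbreviations for the big constants
  set T : ℕ := (2 * b + 1) * k * 4 ^ k with hTdef
  set m2 : ℕ := 8 * (2 * b + 1) * k ^ 3 * 4 ^ k with hm2def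
  have hm2T : m2 = 8 * k ^ 2 * T := by rw [hm2def, hTdef]; ring
  have hT3 : 3 ≤ T := by
    have h4k : 16 ≤ 4 ^ k := by
      calc (16 : ℕ) = 4 ^ 2 := by norm_num
        _ ≤ 4 ^ k := Nat.pow_le_pow_right (by norm_num) hk
    have : 2 * b + 1 ≥ 3 := by omega
    calc (3 : ℕ) ≤ 3 * (2 * 16) := by norm_num
      _ ≤ (2 * b + 1) * (k * 4 ^ k) := by
          exact Nat.mul_le_mul (by omega) (Nat.mul_le_mul (by omega) h4k)
      _ = T := by rw [hTdef]; ring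
  have hsn : s ≤ n := by
    rw [hn]; exact Nat.le_mul_of_pos_left s (by omega)
  have hs0 : b * m2 ^ k + 2 * m2 + 3 * (5 * T * (c * k + c + b + 2 * k + 2)) +
      (b + c + k + 2) ^ 2 + 2 ≤ s := by
    rw [hm2def, hTdef]; exact hs
  have hsmalls : (b + c + k + 2) ^ 2 + 2 ≤ n := by
    have := le_trans hs0 hsn; omega
  have hbcn : b + c + k + 2 ≤ n := by nlinarith [hsmalls]
  -- the admissible choice of E
  have hbkn : b + (b - 1) * (k - 1) ≤ n := by
    have h1 : (b - 1) * (k - 1) ≤ b * k := Nat.mul_le_mul (Nat.sub_le _ _) (Nat.sub_le _ _)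
    have h2 : b + b * k ≤ (b + c + k + 2) ^ 2 := by nlinarith
    omega
  have hEadm : AdmissibleChoice n k b
      (fun i => Finset.Icc (b + 1 + (i - 1) * (k - 1)) (b + i * (k - 1))) := by
    constructor
    · intro i hi
      obtain ⟨hi1, hib⟩ := Finset.mem_Icc.mp hi
      obtain ⟨i', rfl⟩ : ∃ i', i = i' + 1 := ⟨i - 1, by omega⟩
      constructor
      · apply Finset.Icc_subset_Icc (by omega)
        have h1 : (i' + 1) * (k - 1) ≤ (b - 1) * (k - 1) :=
          Nat.mul_le_mul_right _ (by omega)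
        omega
      · rw [Nat.card_Icc]
        have h2 : (i' + 1) * (k - 1) = i' * (k - 1) + (k - 1) := by ring
        simp only [Nat.add_sub_cancel]
        omega
    · have hkey : ∀ i j : ℕ, 1 ≤ i → i < j → j ≤ b - 1 →
          Disjoint (Finset.Icc (b + 1 + (i - 1) * (k - 1)) (b + i * (k - 1)))
            (Finset.Icc (b + 1 + (j - 1) * (k - 1)) (b + j * (k - 1))) := by
        intro i j hi1 hij hjb
        rw [Finset.disjoint_left]
        intro v hv1 hv2
        obtain ⟨_, hv1b⟩ := Finset.mem_Icc.mp hv1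
        obtain ⟨hv2a, _⟩ := Finset.mem_Icc.mp hv2
        have h1 : i * (k - 1) ≤ (j - 1) * (k - 1) := Nat.mul_le_mul_right _ (by omega)
        omega
      intro i hi j hj hij
      obtain ⟨hi1, hib⟩ := Finset.mem_Icc.mp hi
      obtain ⟨hj1, hjb⟩ := Finset.mem_Icc.mp hj
      rcases lt_or_gt_of_ne hij with h | h
      · exact hkey i j hi1 h hjb
      · exact (hkey j i hj1 h hib).symm
  -- |F| exceeds the number of k-subsets of [b+1, n]
  have hFbig : Nat.choose (n - b) k < F.card := by
    have h := hcard _ hEadm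
    have hsub : (Finset.Icc (b + 1) n).powersetCard k ⊆
        famE n k b (fun i => Finset.Icc (b + 1 + (i - 1) * (k - 1)) (b + i * (k - 1))) :=
      Finset.subset_union_left
    have h2 := Finset.card_le_card hsub
    rw [Finset.card_powersetCard, Nat.card_Icc] at h2
    have he : n + 1 - (b + 1) = n - b := by omega
    rw [he] at h2
    omega
  -- F sits inside the k-subsets of [1, n]
  have hFsubP : F ⊆ (Finset.Icc 1 n).powersetCard k := by
    intro A hA
    exact Finset.mem_powersetCard.mpr ⟨(hFam A hA).1, (hFam A hA).2⟩
  have hpcard : ((Finset.Icc 1 n).powersetCard k).card = Nat.choose n k := by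
    rw [Finset.card_powersetCard, Nat.card_Icc]
    norm_num
  have hsd : (((Finset.Icc 1 n).powersetCard k) \ F).card + F.card = Nat.choose n k := by
    rw [Finset.card_sdiff_add_card_eq_card hFsubP, hpcard]
  -- the budget inequality
  have hbudget : Nat.choose n k ≤ Nat.choose (n - b) k + b * Nat.choose (n - 1) (k - 1) :=
    pascal_telescope (by omega) b (by omega)
  -- choose ρ
  have hPex : ∃ ρ : ℕ, b * n ^ (k - 1) < ρ ^ k := by
    refine ⟨n, ?_⟩
    have h1 : n ^ k = n ^ (k - 1) * n := by
      conv_lhs => rw [show k = (k - 1) + 1 by omega]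
      rw [pow_succ]
    calc b * n ^ (k - 1) < n * n ^ (k - 1) := by
          have : 0 < n ^ (k - 1) := Nat.pow_pos (by omega)
          have hbn : b < n := by omega
          exact (Nat.mul_lt_mul_right this).mpr hbn
      _ = n ^ k := by rw [h1]; ring
  obtain ⟨ρ, hρ1, hρspec, hρmin⟩ : ∃ ρ : ℕ, 1 ≤ ρ ∧ b * n ^ (k - 1) < ρ ^ k ∧
      (ρ - 1) ^ k ≤ b * n ^ (k - 1) := by
    have h0 : ¬ (b * n ^ (k - 1) < 0 ^ k) := by
      rw [Nat.zero_pow (by omega)]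
      omega
    have hne : Nat.find hPex ≠ 0 := fun h => h0 (h ▸ Nat.find_spec hPex)
    have h1 : 1 ≤ Nat.find hPex := by omega
    have hmin := Nat.find_min hPex (m := Nat.find hPex - 1) (by omega)
    exact ⟨Nat.find hPex, h1, Nat.find_spec hPex, by omega⟩
  -- ρ is not too large
  have hρbound : m2 * (ρ - 1) ≤ n := by
    by_contra h
    push_neg at h
    have h1 : (n + 1) ^ k ≤ (m2 * (ρ - 1)) ^ k := Nat.pow_le_pow_left (by omega) k
    have h2 : (m2 * (ρ - 1)) ^ k = m2 ^ k * (ρ - 1) ^ k := mul_pow _ _ _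
    have h3 : m2 ^ k * (ρ - 1) ^ k ≤ m2 ^ k * (b * n ^ (k - 1)) :=
      Nat.mul_le_mul_left _ hρmin
    have h4 : n ^ k ≤ (n + 1) ^ k := Nat.pow_le_pow_left (by omega) k
    have h5 : n ^ k = n * n ^ (k - 1) := by
      conv_lhs => rw [show k = (k - 1) + 1 by omega]
      rw [pow_succ]; ring
    have h6 : n * n ^ (k - 1) ≤ (m2 ^ k * b) * n ^ (k - 1) := by
      calc n * n ^ (k - 1) = n ^ k := h5.symm
        _ ≤ (n + 1) ^ k := h4
        _ ≤ m2 ^ k * (b * n ^ (k - 1)) := le_trans h1 (le_trans (le_of_eq h2) h3)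
        _ = (m2 ^ k * b) * n ^ (k - 1) := by ring
    have h7 : n ≤ m2 ^ k * b := by
      have hpos : 0 < n ^ (k - 1) := Nat.pow_pos (by omega)
      exact Nat.le_of_mul_le_mul_right h6 hpos
    have h8 : b * m2 ^ k + 1 ≤ s := by omega
    have h9 : m2 ^ k * b = b * m2 ^ k := Nat.mul_comm _ _
    have := hsn
    omega
  -- the cut point X
  set X : ℕ := c + k * ρ with hXdef
  -- master numeric inequality
  have hG1 : 4 * ((2 * b + 1) * ((X * k + b) * k * 4 ^ k)) + (X * k + b + k + 2) +
      (X + X * k + k) ≤ n := by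
    have hm2ρ : m2 * ρ ≤ n + m2 := by
      have h1 : m2 * ρ = m2 * (ρ - 1) + m2 := by
        have : ρ - 1 + 1 = ρ := by omega
        calc m2 * ρ = m2 * ((ρ - 1) + 1) := by rw [this]
          _ = m2 * (ρ - 1) + m2 := by ring
      omega
    have hLHSeq : 4 * ((2 * b + 1) * ((X * k + b) * k * 4 ^ k)) + (X * k + b + k + 2) +
        (X + X * k + k) =
        ρ * (4 * T * k ^ 2 + 2 * k ^ 2 + k) +
          (4 * T * (c * k + b) + 2 * c * k + c + b + 2 * k + 2) := by
      rw [hXdef, hTdef]; ring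
    have hcoeff : 4 * T * k ^ 2 + 2 * k ^ 2 + k ≤ 5 * T * k ^ 2 := by nlinarith
    have hK0 : 4 * T * (c * k + b) + 2 * c * k + c + b + 2 * k + 2 ≤
        5 * T * (c * k + c + b + 2 * k + 2) := by
      have e7 : 2 * c * k = 2 * (c * k) := by ring
      have h1 : 2 * (c * k) + c + b + 2 * k + 2 ≤ 3 * (c * k + c + b + 2 * k + 2) := by
        omega
      have h2 : 3 * (c * k + c + b + 2 * k + 2) ≤ T * (c * k + c + b + 2 * k + 2) :=
        Nat.mul_le_mul_right _ hT3
      have h3 : T * (c * k + b) ≤ T * (c * k + c + b + 2 * k + 2) :=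
        Nat.mul_le_mul_left _ (by omega)
      have h4 : 5 * (T * (c * k + c + b + 2 * k + 2)) =
          4 * (T * (c * k + c + b + 2 * k + 2)) + T * (c * k + c + b + 2 * k + 2) := by ring
      have h5 : 5 * T * (c * k + c + b + 2 * k + 2) =
          5 * (T * (c * k + c + b + 2 * k + 2)) := by ring
      have h6 : 4 * T * (c * k + b) = 4 * (T * (c * k + b)) := by ring
      omega
    have h8m : 8 * (ρ * (5 * T * k ^ 2)) = 5 * (m2 * ρ) := by rw [hm2T]; ring
    have hmain : 8 * (ρ * (4 * T * k ^ 2 + 2 * k ^ 2 + k) +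
        (4 * T * (c * k + b) + 2 * c * k + c + b + 2 * k + 2)) ≤ 8 * n := by
      have e1 : ρ * (4 * T * k ^ 2 + 2 * k ^ 2 + k) ≤ ρ * (5 * T * k ^ 2) :=
        Nat.mul_le_mul_left _ hcoeff
      have e2 : 8 * (ρ * (5 * T * k ^ 2)) ≤ 5 * n + 5 * m2 := by
        rw [h8m]
        omega
      have e3 : 5 * m2 + 8 * (5 * T * (c * k + c + b + 2 * k + 2)) ≤ 3 * n := by
        have h1 : 2 * m2 + 3 * (5 * T * (c * k + c + b + 2 * k + 2)) ≤ n := by omega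
        omega
      calc 8 * (ρ * (4 * T * k ^ 2 + 2 * k ^ 2 + k) +
            (4 * T * (c * k + b) + 2 * c * k + c + b + 2 * k + 2))
          = 8 * (ρ * (4 * T * k ^ 2 + 2 * k ^ 2 + k)) +
            8 * (4 * T * (c * k + b) + 2 * c * k + c + b + 2 * k + 2) := by ring
        _ ≤ 8 * (ρ * (5 * T * k ^ 2)) + 8 * (5 * T * (c * k + c + b + 2 * k + 2)) := by
            have := Nat.mul_le_mul_left 8 e1
            have := Nat.mul_le_mul_left 8 hK0
            omega
        _ ≤ (5 * n + 5 * m2) + 8 * (5 * T * (c * k + c + b + 2 * k + 2)) := by omega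
        _ ≤ 8 * n := by omega
    rw [hLHSeq]
    omega
  -- simple consequences
  have hXc : c ≤ X := by rw [hXdef]; omega
  have hXn : X + X * k + k ≤ n := by omega
  have hXkb : X * k + b + k + 2 ≤ n := by omega
  have hXs : X ≤ s := by
    have h1 : X * 1 ≤ X * k := Nat.mul_le_mul_left _ (by omega)
    by_contra h
    push_neg at h
    have h2 : (s + 1) * k ≤ X * k := Nat.mul_le_mul_right _ (by omega)
    have h3 : n = s * k := by rw [hn]; ring
    nlinarith
  -- exchange property
  have hexc' : ∀ x y : ℕ, 1 ≤ x → x < y → y ≤ n - c → ∀ A ∈ F, y ∈ A → x ∉ A →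
      insert x (A.erase y) ∈ F := fun x y h1 h2 h3 A hA hy hx => exc hshift h1 h2 h3 hA hy hx
  -- every k-subset of [1, n - X] belongs to F
  have hP1 : ∀ D : Finset ℕ, D ⊆ Finset.Icc 1 (n - X) → D.card = k → D ∈ F := by
    intro D hDsub hDk
    by_contra hDF
    have hkey : ∀ A ∈ (Finset.Icc (n - X) (n - c)).powersetCard k, A ∉ F := by
      intro A hA hAF
      rw [Finset.mem_powersetCard] at hA
      apply hDF
      refine exchain hexc' (A.sum id) A D le_rfl ?_ ?_ ?_ ?_ hAF
      · exact le_trans hA.1 (Finset.Icc_subset_Icc (by omega) le_rfl)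
      · exact le_trans hDsub (Finset.Icc_subset_Icc le_rfl (by omega))
      · rw [hA.2, hDk]
      · intro m
        rcases le_or_gt m (n - X) with hm | hm
        · have hfA : A.filter (fun v => m ≤ v) = A :=
            Finset.filter_true_of_mem (fun v hv =>
              le_trans hm (Finset.mem_Icc.mp (hA.1 hv)).1)
          rw [hfA, hA.2, ← hDk]
          exact Finset.card_filter_le D _
        · have hfD : D.filter (fun v => m ≤ v) = ∅ :=
            Finset.filter_false_of_mem (fun v hv => by
              have := (Finset.mem_Icc.mp (hDsub hv)).2
              omega)
          rw [hfD]
          simp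
    have hsub2 : (Finset.Icc (n - X) (n - c)).powersetCard k ⊆
        ((Finset.Icc 1 n).powersetCard k) \ F := by
      intro A hA
      rw [Finset.mem_sdiff]
      refine ⟨?_, hkey A hA⟩
      rw [Finset.mem_powersetCard] at hA ⊢
      exact ⟨le_trans hA.1 (Finset.Icc_subset_Icc (by omega) (by omega)), hA.2⟩
    have hc1 : ((Finset.Icc (n - X) (n - c)).powersetCard k).card =
        Nat.choose (k * ρ + 1) k := by
      rw [Finset.card_powersetCard, Nat.card_Icc]
      congr 1
      omega
    have hge := Finset.card_le_card hsub2
    rw [hc1] at hge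
    have hρle : ρ ^ k ≤ Nat.choose (k * ρ + 1) k :=
      le_trans (rho_pow_le_choose k ρ hρ1) (Nat.choose_le_choose k (by omega))
    have hbn2 : b * Nat.choose (n - 1) (k - 1) ≤ b * n ^ (k - 1) :=
      Nat.mul_le_mul_left _ (le_trans (choose_le_pow' _ _)
        (Nat.pow_le_pow_left (by omega) _))
    omega
  -- [1, s] is a blocking set
  have hIccS : IsBlockingSet n s F (Finset.Icc 1 s) := by
    refine ⟨Finset.Icc_subset_Icc le_rfl hsn, by rw [Nat.card_Icc]; omega, ?_⟩
    rintro ⟨M, hM, hMcard, -⟩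
    apply hnoPM
    refine ⟨M, hM, ?_⟩
    have hdisj : ∀ x ∈ M, ∀ y ∈ M, x ≠ y → Disjoint (id x) (id y) :=
      fun x hx y hy hxy => hM.2 hx hy hxy
    have hbU : (M.biUnion id).card = n := by
      rw [Finset.card_biUnion hdisj]
      have : ∀ A ∈ M, (id A).card = k := fun A hA => (hFam A (hM.1 hA)).2
      rw [Finset.sum_congr rfl this, Finset.sum_const, smul_eq_mul]
      rw [hMcard, Nat.card_Icc, hn]
      have : s + 1 - 1 = s := by omega
      rw [this, Nat.mul_comm]
    have hsubn : M.biUnion id ⊆ Finset.Icc 1 n := by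
      intro x hx
      obtain ⟨A, hA, hxA⟩ := Finset.mem_biUnion.mp hx
      exact (hFam A (hM.1 hA)).1 hxA
    have heqn : M.biUnion id = Finset.Icc 1 n :=
      Finset.eq_of_subset_of_card_le hsubn (by rw [hbU, Nat.card_Icc]; omega)
    rw [Covers, heqn]
  -- minimal size of a blocking set
  have hQex : ∃ m : ℕ, ∃ B : Finset ℕ, IsBlockingSet n s F B ∧ B.card = m :=
    ⟨s, Finset.Icc 1 s, hIccS, by rw [Nat.card_Icc]; omega⟩
  obtain ⟨t, ⟨Bm, hBm, hBmcard⟩, htmin⟩ : ∃ t : ℕ,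
      (∃ B : Finset ℕ, IsBlockingSet n s F B ∧ B.card = t) ∧
      ∀ m < t, ¬ ∃ B : Finset ℕ, IsBlockingSet n s F B ∧ B.card = m :=
    ⟨Nat.find hQex, Nat.find_spec hQex, fun m hm => Nat.find_min hQex hm⟩
  have hts : t ≤ s := by
    by_contra h
    exact htmin s (by omega) ⟨Finset.Icc 1 s, hIccS, by rw [Nat.card_Icc]; omega⟩
  have hbt : b ≤ t := hBmcard ▸ hblock Bm hBm
  have htb : t ≠ b := fun h => hcon Bm hBm (by omega)
  have hbt1 : b + 1 ≤ t := by omega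
  -- every small set is coverable
  have hcover : ∀ C : Finset ℕ, C ⊆ Finset.Icc 1 n → C.card < t → C.card ≤ s →
      ∃ M, IsMatchingIn F M ∧ M.card = C.card ∧ Covers M C := by
    intro C hCsub hCt hCs
    by_contra hno
    exact htmin C.card hCt ⟨C, ⟨hCsub, hCs, hno⟩, rfl⟩
  -- a matching together with an extra disjoint member of F covering Bm contradicts blocking
  have hnotblock : ∀ M : Finset (Finset ℕ), IsMatchingIn F M → M.card = t →
      Covers M Bm → False := by
    intro M h1 h2 h3
    exact hBm.2.2 ⟨M, h1, by rw [h2, hBmcard], h3⟩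
  rcases le_or_gt t X with htX | hXt
  · -- Branch 1 : t ≤ X, counting contradiction
    obtain ⟨V, hVsub, hVcard⟩ := Finset.exists_subset_card_eq (s := Bm) (n := b + 1) (by omega)
    have hVIcc : V ⊆ Finset.Icc 1 n := le_trans hVsub hBm.1
    have hMv : ∀ v : ℕ, ∃ M : Finset (Finset ℕ), v ∈ V →
        IsMatchingIn F M ∧ M.card = t - 1 ∧ Covers M (Bm.erase v) := by
      intro v
      by_cases hv : v ∈ V
      · have hvB : v ∈ Bm := hVsub hv
        have hec : (Bm.erase v).card = t - 1 := by
          rw [Finset.card_erase_of_mem hvB, hBmcard]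
        obtain ⟨M, h1, h2, h3⟩ := hcover (Bm.erase v)
          (le_trans (Finset.erase_subset _ _) hBm.1) (by omega) (by omega)
        exact ⟨M, fun _ => ⟨h1, by omega, h3⟩⟩
      · exact ⟨∅, fun h => absurd h hv⟩
    choose Mv hMv using hMv
    -- support bound
    have hSvcard : ∀ v ∈ V, ((Mv v).biUnion id).card ≤ (t - 1) * k := by
      intro v hv
      calc ((Mv v).biUnion id).card ≤ ∑ A ∈ Mv v, (id A).card := Finset.card_biUnion_le
        _ = ∑ A ∈ Mv v, k := Finset.sum_congr rfl
            (fun A hA => (hFam A ((hMv v hv).1.1 hA)).2)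
        _ = (t - 1) * k := by rw [Finset.sum_const, smul_eq_mul, (hMv v hv).2.1]
    -- v not in its own support
    have hvSv : ∀ v ∈ V, v ∉ (Mv v).biUnion id := by
      intro v hv hvin
      have hcard2 : k ≤ (Finset.Icc 1 (n - X) \ (Mv v).biUnion id).card := by
        have h1 := Finset.le_card_sdiff ((Mv v).biUnion id) (Finset.Icc 1 (n - X))
        have h2 := hSvcard v hv
        rw [Nat.card_Icc] at h1
        have h3 : (t - 1) * k ≤ X * k := Nat.mul_le_mul_right _ (by omega)
        omega
      obtain ⟨Z, hZsub, hZcard⟩ := Finset.exists_subset_card_eq (s := Finset.Icc 1 (n - X) \ (Mv v).biUnion id)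
        (n := k) hcard2
      have hZF : Z ∈ F := hP1 Z (le_trans hZsub Finset.sdiff_subset) hZcard
      have hZdisj : ∀ A ∈ Mv v, Disjoint Z A := by
        intro A hA
        rw [Finset.disjoint_left]
        intro a haZ haA
        exact (Finset.mem_sdiff.mp (hZsub haZ)).2
          (Finset.mem_biUnion.mpr ⟨A, hA, haA⟩)
      have hZnot : Z ∉ Mv v := by
        intro hZin
        have hZne : Z.Nonempty := Finset.card_pos.mp (by omega)
        obtain ⟨z, hz⟩ := hZne
        exact (Finset.disjoint_left.mp (hZdisj Z hZin) hz) hz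
      apply hnotblock (insert Z (Mv v))
      · constructor
        · exact Finset.insert_subset hZF (hMv v hv).1.1
        · rw [Finset.coe_insert]
          exact Set.PairwiseDisjoint.insert (hMv v hv).1.2
            (fun B hB _ => hZdisj B hB)
      · rw [Finset.card_insert_of_notMem hZnot, (hMv v hv).2.1]
        omega
      · intro x hx
        rw [Finset.biUnion_insert]
        by_cases hxv : x = v
        · subst hxv
          exact Finset.mem_union_right _ hvin
        · exact Finset.mem_union_right _
            ((hMv v hv).2.2 (Finset.mem_erase.mpr ⟨hxv, hx⟩))
    -- the families of missing sets
    set Av : ℕ → Finset (Finset ℕ) := fun v =>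
      ((Finset.Icc 1 n \ ((Mv v).biUnion id ∪ V)).powersetCard (k - 1)).image (insert v)
      with hAvdef
    have hAvspec : ∀ v ∈ V, ∀ D ∈ Av v,
        v ∈ D ∧ D ∈ (Finset.Icc 1 n).powersetCard k ∧ D ∉ F := by
      intro v hv D hD
      rw [hAvdef] at hD
      obtain ⟨S, hS, rfl⟩ := Finset.mem_image.mp hD
      rw [Finset.mem_powersetCard] at hS
      have hvS : v ∉ S := fun h =>
        (Finset.mem_sdiff.mp (hS.1 h)).2 (Finset.mem_union_right _ hv)
      have hcardD : (insert v S).card = k := by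
        rw [Finset.card_insert_of_notMem hvS, hS.2]
        omega
      refine ⟨Finset.mem_insert_self _ _, Finset.mem_powersetCard.mpr
        ⟨Finset.insert_subset (hVIcc hv) (le_trans hS.1 Finset.sdiff_subset), hcardD⟩, ?_⟩
      intro hDF
      have hDdisj : ∀ A ∈ Mv v, Disjoint (insert v S) A := by
        intro A hA
        rw [Finset.disjoint_left]
        intro a haD haA
        have haSv : a ∈ (Mv v).biUnion id := Finset.mem_biUnion.mpr ⟨A, hA, haA⟩
        rcases Finset.mem_insert.mp haD with h | haS
        · exact hvSv v hv (h ▸ haSv)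
        · exact (Finset.mem_sdiff.mp (hS.1 haS)).2 (Finset.mem_union_left _ haSv)
      have hDnot : insert v S ∉ Mv v := by
        intro hin
        exact (Finset.disjoint_left.mp (hDdisj _ hin) (Finset.mem_insert_self v S))
          (Finset.mem_insert_self v S)
      apply hnotblock (insert (insert v S) (Mv v))
      · constructor
        · exact Finset.insert_subset hDF (hMv v hv).1.1
        · rw [Finset.coe_insert]
          exact Set.PairwiseDisjoint.insert (hMv v hv).1.2
            (fun B hB _ => hDdisj B hB)
      · rw [Finset.card_insert_of_notMem hDnot, (hMv v hv).2.1]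
        omega
      · intro x hx
        rw [Finset.biUnion_insert]
        by_cases hxv : x = v
        · subst hxv
          exact Finset.mem_union_left _ (Finset.mem_insert_self _ _)
        · exact Finset.mem_union_right _
            ((hMv v hv).2.2 (Finset.mem_erase.mpr ⟨hxv, hx⟩))
    -- cardinality of each Av
    have hAvcard : ∀ v ∈ V, Nat.choose (n - (X * k + b + 1)) (k - 1) ≤ (Av v).card := by
      intro v hv
      rw [hAvdef]
      have hinj : Set.InjOn (insert v)
          ((Finset.Icc 1 n \ ((Mv v).biUnion id ∪ V)).powersetCard (k - 1) : Set (Finset ℕ)) := by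
        intro S1 hS1 S2 hS2 hins
        have hv1 : v ∉ S1 := fun h =>
          (Finset.mem_sdiff.mp ((Finset.mem_powersetCard.mp hS1).1 h)).2
            (Finset.mem_union_right _ hv)
        have hv2 : v ∉ S2 := fun h =>
          (Finset.mem_sdiff.mp ((Finset.mem_powersetCard.mp hS2).1 h)).2
            (Finset.mem_union_right _ hv)
        calc S1 = (insert v S1).erase v := (Finset.erase_insert hv1).symm
          _ = (insert v S2).erase v := by rw [hins]
          _ = S2 := Finset.erase_insert hv2
      rw [Finset.card_image_of_injOn hinj, Finset.card_powersetCard]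
      apply Nat.choose_le_choose
      have h1 := Finset.le_card_sdiff ((Mv v).biUnion id ∪ V) (Finset.Icc 1 n)
      have h2 : ((Mv v).biUnion id ∪ V).card ≤ (t - 1) * k + (b + 1) := by
        calc ((Mv v).biUnion id ∪ V).card ≤ ((Mv v).biUnion id).card + V.card :=
              Finset.card_union_le _ _
          _ ≤ (t - 1) * k + (b + 1) := by
              have := hSvcard v hv
              omega
      rw [Nat.card_Icc] at h1
      have h3 : (t - 1) * k ≤ X * k := Nat.mul_le_mul_right _ (by omega)
      omega
    -- the union of the Av is a set of missing k-subsets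
    have hAvsub : V.biUnion Av ⊆ ((Finset.Icc 1 n).powersetCard k) \ F := by
      intro D hD
      obtain ⟨v, hv, hDv⟩ := Finset.mem_biUnion.mp hD
      obtain ⟨_, h2, h3⟩ := hAvspec v hv D hDv
      exact Finset.mem_sdiff.mpr ⟨h2, h3⟩
    have hAvdisj : ∀ u ∈ V, ∀ w ∈ V, u ≠ w → Disjoint (Av u) (Av w) := by
      intro u hu w hw huw
      rw [Finset.disjoint_left]
      intro D hDu hDw
      have h1 := (hAvspec u hu D hDu).1
      rw [hAvdef] at hDw
      obtain ⟨S, hS, rfl⟩ := Finset.mem_image.mp hDw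
      rcases Finset.mem_insert.mp h1 with h | h
      · exact huw h
      · exact (Finset.mem_sdiff.mp ((Finset.mem_powersetCard.mp hS).1 h)).2
          (Finset.mem_union_right _ hu)
    have hsumcard : (b + 1) * Nat.choose (n - (X * k + b + 1)) (k - 1) ≤
        (V.biUnion Av).card := by
      rw [Finset.card_biUnion hAvdisj]
      calc (b + 1) * Nat.choose (n - (X * k + b + 1)) (k - 1)
          = ∑ _v ∈ V, Nat.choose (n - (X * k + b + 1)) (k - 1) := by
            rw [Finset.sum_const, smul_eq_mul, hVcard]
        _ ≤ ∑ v ∈ V, (Av v).card := Finset.sum_le_sum hAvcard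
    -- apply the key inequality
    have hkey : b * Nat.choose (n - 1) (k - 1) <
        (b + 1) * Nat.choose (n - (X * k + b + 1)) (k - 1) := by
      apply key_ineq b (k - 1) (n - (X * k + b + 1)) (n - 1) (by omega) (by omega) (by omega)
      · omega
      · have hcoef : (2 * b + 1) * ((X * k + b) * (k - 1) * 4 ^ (k - 1 - 1)) ≤
            (2 * b + 1) * ((X * k + b) * k * 4 ^ k) := by
          apply Nat.mul_le_mul_left
          apply Nat.mul_le_mul
          · exact Nat.mul_le_mul_left _ (by omega)
          · exact Nat.pow_le_pow_right (by norm_num) (by omega)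
        have harg : (n - 1) - (n - (X * k + b + 1)) = X * k + b := by omega
        rw [harg]
        omega
    have hfinal := Finset.card_le_card hAvsub
    have := le_trans hsumcard hfinal
    omega
  · -- Branch 2 : X < t, construct a perfect matching
    have hBTsub : Finset.Icc (n - X + 1) n ⊆ Finset.Icc 1 n :=
      Finset.Icc_subset_Icc (by omega) le_rfl
    have hBTcard : (Finset.Icc (n - X + 1) n).card = X := by
      rw [Nat.card_Icc]; omega
    obtain ⟨MT, hMT, hMTcard, hMTcov⟩ := hcover (Finset.Icc (n - X + 1) n) hBTsub
      (by rw [hBTcard]; omega) (by rw [hBTcard]; omega)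
    rw [hBTcard] at hMTcard
    have hMTdisj : ∀ x ∈ MT, ∀ y ∈ MT, x ≠ y → Disjoint (id x) (id y) :=
      fun x hx y hy hxy => hMT.2 hx hy hxy
    have hsuppcard : (MT.biUnion id).card = X * k := by
      rw [Finset.card_biUnion hMTdisj]
      have : ∀ A ∈ MT, (id A).card = k := fun A hA => (hFam A (hMT.1 hA)).2
      rw [Finset.sum_congr rfl this, Finset.sum_const, smul_eq_mul, hMTcard]
    have hsuppsub : MT.biUnion id ⊆ Finset.Icc 1 n := by
      intro x hx
      obtain ⟨A, hA, hxA⟩ := Finset.mem_biUnion.mp hx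
      exact (hFam A (hMT.1 hA)).1 hxA
    have hRsub : Finset.Icc 1 n \ MT.biUnion id ⊆ Finset.Icc 1 (n - X) := by
      intro v hv
      obtain ⟨hvI, hvS⟩ := Finset.mem_sdiff.mp hv
      obtain ⟨h1v, hvn⟩ := Finset.mem_Icc.mp hvI
      refine Finset.mem_Icc.mpr ⟨h1v, ?_⟩
      by_contra h
      push_neg at h
      exact hvS (hMTcov (Finset.mem_Icc.mpr ⟨by omega, hvn⟩))
    have hRcard : (Finset.Icc 1 n \ MT.biUnion id).card = k * (s - X) := by
      rw [Finset.card_sdiff_of_subset hsuppsub, hsuppcard, Nat.card_Icc]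
      have h1 : k * (s - X) + X * k = k * s := by
        rw [Nat.mul_comm X k, ← Nat.mul_add]
        congr 1
        omega
      omega
    obtain ⟨P, hPdisj, hPunion, hPmem⟩ := exists_partition k (by omega) (s - X)
      (Finset.Icc 1 n \ MT.biUnion id) hRcard
    apply hnoPM
    refine ⟨MT ∪ P, ⟨?_, ?_⟩, ?_⟩
    · intro A hA
      rcases Finset.mem_union.mp hA with h | h
      · exact hMT.1 h
      · exact hP1 A (le_trans (hPmem A h).2 hRsub) (hPmem A h).1
    · intro A hA B hB hAB
      simp only [Finset.coe_union, Set.mem_union, Finset.mem_coe] at hA hB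
      have hcross : ∀ A' ∈ MT, ∀ B' ∈ P, Disjoint (id A') (id B') := by
        intro A' hA' B' hB'
        rw [Finset.disjoint_left]
        intro a haA haB
        have h1 : a ∈ MT.biUnion id := Finset.mem_biUnion.mpr ⟨A', hA', haA⟩
        have h2 : a ∈ Finset.Icc 1 n \ MT.biUnion id := (hPmem B' hB').2 haB
        exact (Finset.mem_sdiff.mp h2).2 h1
      rcases hA with hA | hA <;> rcases hB with hB | hB
      · exact hMT.2 hA hB hAB
      · exact hcross A hA B hB
      · exact (hcross B hB A hA).symm
      · exact hPdisj hA hB hAB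
    · intro x hx
      by_cases hxs : x ∈ MT.biUnion id
      · obtain ⟨A, hA, hxA⟩ := Finset.mem_biUnion.mp hxs
        exact Finset.mem_biUnion.mpr ⟨A, Finset.mem_union_left _ hA, hxA⟩
      · have hxR : x ∈ Finset.Icc 1 n \ MT.biUnion id := Finset.mem_sdiff.mpr ⟨hx, hxs⟩
        rw [← hPunion] at hxR
        obtain ⟨A, hA, hxA⟩ := Finset.mem_biUnion.mp hxR
        exact Finset.mem_biUnion.mpr ⟨A, Finset.mem_union_right _ hA, hxA⟩
end

section
/- Let k ≥ 2, b ≥ 1 and c ≥ 0 be integers. There exists s₀ = s₀(k, b, c) such that for all integers s ≥ s₀ with n = k·s the following holds: if F is a family of k-element subsets of [n] that is shifted on [n − c] and satisfies |F| > |E(k, n, b)|, and b′ is an integer with s/2 < b′ ≤ s, then F contains every k-element subset of [n − b′ + 1]. -/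
lemma swap_mem {F : Finset (Finset ℕ)} {M : ℕ} (hF : ShiftedOn F (Finset.Icc 1 M))
    {x y : ℕ} (hx1 : 1 ≤ x) (hyM : y ≤ M) (hxy : x < y)
    {A : Finset ℕ} (hA : A ∈ F) (hyA : y ∈ A) (hxA : x ∉ A) :
    insert x (A.erase y) ∈ F := by
  have hx : x ∈ Finset.Icc 1 M := Finset.mem_Icc.2 ⟨hx1, by omega⟩
  have hy : y ∈ Finset.Icc 1 M := Finset.mem_Icc.2 ⟨by omega, hyM⟩
  have h1 := hF.1 x hx y hy hxy.le
  have heq := hF.2 x hx y hy hxy.ne h1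
  by_cases hin : insert x (A.erase y) ∈ F
  · exact hin
  · have hmem : shiftSet F x y A ∈ shiftFam F x y := Finset.mem_image_of_mem _ hA
    rw [heq] at hmem
    rw [shiftSet, if_pos ⟨hyA, hxA, hin⟩] at hmem
    exact absurd hmem hin

lemma dominance {F : Finset (Finset ℕ)} {M : ℕ} (hF : ShiftedOn F (Finset.Icc 1 M)) :
    ∀ (N : ℕ) (A T : Finset ℕ), A.sum id ≤ N → A ∈ F → A ⊆ Finset.Icc 1 M →
      T ⊆ Finset.Icc 1 M → T.card = A.card →
      (∀ j, (A.filter (· ≤ j)).card ≤ (T.filter (· ≤ j)).card) → T ∈ F := by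
  intro N
  induction N with
  | zero =>
    intro A T hsum hA hAM hTM hcard _
    have hAe : A = ∅ := by
      by_contra h
      obtain ⟨a, ha⟩ := Finset.nonempty_iff_ne_empty.2 h
      have h1 : 1 ≤ a := (Finset.mem_Icc.1 (hAM ha)).1
      have h2 : a ≤ A.sum id := Finset.single_le_sum (f := id) (fun i _ => Nat.zero_le i) ha
      omega
    have hTe : T = ∅ := by
      rw [← Finset.card_eq_zero, hcard, hAe]; simp
    rw [hTe, ← hAe]; exact hA
  | succ N ih =>
    intro A T hsum hA hAM hTM hcard hdom
    by_cases hAT : T = A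
    · rw [hAT]; exact hA
    have hTA : (T \ A).Nonempty := by
      rw [Finset.sdiff_nonempty]
      intro hsub
      exact hAT (Finset.eq_of_subset_of_card_le hsub hcard.ge)
    have hATn : (A \ T).Nonempty := by
      rw [Finset.sdiff_nonempty]
      intro hsub
      exact hAT (Finset.eq_of_subset_of_card_le hsub hcard.le).symm
    set x := (T \ A).min' hTA with hxdef
    have hxTA : x ∈ T \ A := Finset.min'_mem _ _
    have hxT : x ∈ T := (Finset.mem_sdiff.1 hxTA).1
    have hxA : x ∉ A := (Finset.mem_sdiff.1 hxTA).2
    have hx1 : 1 ≤ x := (Finset.mem_Icc.1 (hTM hxT)).1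
    have hprefix : T.filter (fun z => z ≤ x - 1) ⊆ A.filter (fun z => z ≤ x - 1) := by
      intro t ht
      have htT := (Finset.mem_filter.1 ht).1
      have htle := (Finset.mem_filter.1 ht).2
      have htA : t ∈ A := by
        by_contra h
        have hmem : t ∈ T \ A := Finset.mem_sdiff.2 ⟨htT, h⟩
        have := Finset.min'_le _ t hmem
        omega
      exact Finset.mem_filter.2 ⟨htA, htle⟩
    set y := (A \ T).min' hATn with hydef
    have hyAT : y ∈ A \ T := Finset.min'_mem _ _
    have hyA : y ∈ A := (Finset.mem_sdiff.1 hyAT).1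
    have hyT : y ∉ T := (Finset.mem_sdiff.1 hyAT).2
    have hxy : x < y := by
      rcases lt_trichotomy x y with h | h | h
      · exact h
      · exact absurd (h ▸ hyA) hxA
      · exfalso
        have hss : T.filter (fun z => z ≤ x - 1) ⊂ A.filter (fun z => z ≤ x - 1) := by
          refine ⟨hprefix, fun hsub => ?_⟩
          have hmem : y ∈ T.filter (fun z => z ≤ x - 1) :=
            hsub (Finset.mem_filter.2 ⟨hyA, by omega⟩)
          exact hyT (Finset.mem_filter.1 hmem).1
        have h1 := Finset.card_lt_card hss
        have h2 := hdom (x - 1)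
        omega
    have hyM : y ≤ M := (Finset.mem_Icc.1 (hAM hyA)).2
    have hB : insert x (A.erase y) ∈ F := swap_mem hF hx1 hyM hxy hA hyA hxA
    set B := insert x (A.erase y) with hBdef
    have hxE : x ∉ A.erase y := fun h => hxA (Finset.mem_of_mem_erase h)
    have hBM : B ⊆ Finset.Icc 1 M := by
      intro z hz
      rcases Finset.mem_insert.1 hz with rfl | hz
      · exact hTM hxT
      · exact hAM (Finset.mem_of_mem_erase hz)
    have hBcard : B.card = A.card := by
      rw [hBdef, Finset.card_insert_of_notMem hxE, Finset.card_erase_of_mem hyA]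
      have : 1 ≤ A.card := Finset.card_pos.2 ⟨y, hyA⟩
      omega
    have hsumB : B.sum id ≤ N := by
      have h1 : (A.erase y).sum id + y = A.sum id := by
        have := Finset.sum_erase_add A id hyA
        simpa using this
      have h2 : B.sum id = x + (A.erase y).sum id := by
        rw [hBdef, Finset.sum_insert hxE]; rfl
      omega
    refine ih B T hsumB hB hBM hTM (hcard.trans hBcard.symm) ?_
    intro j
    by_cases hjx : j < x
    · have heq : B.filter (· ≤ j) = A.filter (· ≤ j) := by
        ext z
        simp only [hBdef, Finset.mem_filter, Finset.mem_insert, Finset.mem_erase]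
        constructor
        · rintro ⟨rfl | ⟨hzy, hzA⟩, hzj⟩
          · omega
          · exact ⟨hzA, hzj⟩
        · rintro ⟨hzA, hzj⟩
          exact ⟨Or.inr ⟨by omega, hzA⟩, hzj⟩
      rw [heq]; exact hdom j
    by_cases hjy : y ≤ j
    · have hyf : y ∈ A.filter (· ≤ j) := Finset.mem_filter.2 ⟨hyA, hjy⟩
      have hxf : x ∉ (A.filter (· ≤ j)).erase y := fun h =>
        hxA (Finset.mem_filter.1 (Finset.mem_of_mem_erase h)).1
      have heq : B.filter (· ≤ j) = insert x ((A.filter (· ≤ j)).erase y) := by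
        ext z
        simp only [hBdef, Finset.mem_filter, Finset.mem_insert, Finset.mem_erase]
        constructor
        · rintro ⟨rfl | ⟨hzy, hzA⟩, hzj⟩
          · exact Or.inl rfl
          · exact Or.inr ⟨hzy, hzA, hzj⟩
        · rintro (rfl | ⟨hzy, hzA, hzj⟩)
          · exact ⟨Or.inl rfl, by omega⟩
          · exact ⟨Or.inr ⟨hzy, hzA⟩, hzj⟩
      rw [heq, Finset.card_insert_of_notMem hxf, Finset.card_erase_of_mem hyf]
      have h1 := hdom j
      have h2 : 1 ≤ (A.filter (· ≤ j)).card := Finset.card_pos.2 ⟨y, hyf⟩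
      omega
    · push_neg at hjx hjy
      have hxAf : x ∉ A.filter (· ≤ j) := fun h => hxA (Finset.mem_filter.1 h).1
      have heq : B.filter (· ≤ j) = insert x (A.filter (· ≤ j)) := by
        ext z
        simp only [hBdef, Finset.mem_filter, Finset.mem_insert, Finset.mem_erase]
        constructor
        · rintro ⟨rfl | ⟨hzy, hzA⟩, hzj⟩
          · exact Or.inl rfl
          · exact Or.inr ⟨hzA, hzj⟩
        · rintro (rfl | ⟨hzA, hzj⟩)
          · exact ⟨Or.inl rfl, hjx⟩
          · exact ⟨Or.inr ⟨by omega, hzA⟩, hzj⟩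
      rw [heq, Finset.card_insert_of_notMem hxAf]
      have splitA := Finset.card_filter_add_card_filter_not
        (s := A.filter (· ≤ j)) (p := fun z => z ≤ x - 1)
      have splitT := Finset.card_filter_add_card_filter_not
        (s := T.filter (· ≤ j)) (p := fun z => z ≤ x - 1)
      have eA : (A.filter (· ≤ j)).filter (fun z => z ≤ x - 1) = A.filter (· ≤ x - 1) := by
        ext z
        simp only [Finset.mem_filter]
        constructor
        · rintro ⟨⟨hz, _⟩, h2⟩; exact ⟨hz, h2⟩
        · rintro ⟨hz, h2⟩; exact ⟨⟨hz, by omega⟩, h2⟩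
      have eT : (T.filter (· ≤ j)).filter (fun z => z ≤ x - 1) = T.filter (· ≤ x - 1) := by
        ext z
        simp only [Finset.mem_filter]
        constructor
        · rintro ⟨⟨hz, _⟩, h2⟩; exact ⟨hz, h2⟩
        · rintro ⟨hz, h2⟩; exact ⟨⟨hz, by omega⟩, h2⟩
      have hmidsub : (A.filter (· ≤ j)).filter (fun z => ¬ z ≤ x - 1) ⊆
          (T.filter (· ≤ j)).filter (fun z => ¬ z ≤ x - 1) := by
        intro z hz
        simp only [Finset.mem_filter] at hz ⊢
        obtain ⟨⟨hzA, hzj⟩, hzx⟩ := hz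
        have hzT : z ∈ T := by
          by_contra h
          have hmem : z ∈ A \ T := Finset.mem_sdiff.2 ⟨hzA, h⟩
          have := Finset.min'_le _ z hmem
          omega
        exact ⟨⟨hzT, hzj⟩, hzx⟩
      have hxmid : x ∈ (T.filter (· ≤ j)).filter (fun z => ¬ z ≤ x - 1) := by
        simp only [Finset.mem_filter]
        exact ⟨⟨hxT, hjx⟩, by omega⟩
      have hxnot : x ∉ (A.filter (· ≤ j)).filter (fun z => ¬ z ≤ x - 1) := by
        simp only [Finset.mem_filter]
        exact fun h => hxA h.1.1
      have hss : (A.filter (· ≤ j)).filter (fun z => ¬ z ≤ x - 1) ⊂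
          (T.filter (· ≤ j)).filter (fun z => ¬ z ≤ x - 1) :=
        ⟨hmidsub, fun hsub => hxnot (hsub hxmid)⟩
      have hcardlt := Finset.card_lt_card hss
      have hlow := hdom (x - 1)
      rw [eA] at splitA
      rw [eT] at splitT
      omega

lemma choose_sub_le {k : ℕ} (hk : 1 ≤ k) (a b : ℕ) :
    a.choose k ≤ (a - b).choose k + b * a.choose (k - 1) := by
  induction b with
  | zero => simp
  | succ b ih =>
    have hstep : (a - b).choose k ≤ (a - (b + 1)).choose k + a.choose (k - 1) := by
      obtain ⟨k', rfl⟩ : ∃ k', k = k' + 1 := ⟨k - 1, by omega⟩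
      rcases Nat.eq_zero_or_pos (a - b) with h | h
      · have h2 : a - (b + 1) = 0 := by omega
        simp [h, h2]
      · obtain ⟨t, ht⟩ : ∃ t, a - b = t + 1 := ⟨a - b - 1, by omega⟩
        have h2 : a - (b + 1) = t := by omega
        rw [ht, h2, Nat.choose_succ_succ]
        have h3 : t.choose k' ≤ a.choose k' := Nat.choose_le_choose _ (by omega)
        simp only [Nat.add_sub_cancel, Nat.succ_eq_add_one]
        omega
    calc a.choose k ≤ (a - b).choose k + b * a.choose (k - 1) := ih
      _ ≤ (a - (b + 1)).choose k + a.choose (k - 1) + b * a.choose (k - 1) := by omega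
      _ = (a - (b + 1)).choose k + (b + 1) * a.choose (k - 1) := by ring

/-- Lemma 4.1: For `s` large enough, if `F` is shifted on `[n - c]`
and `|F| > |E(k, n, b)|`, and `s/2 < b' ≤ s`, then `F` contains every `k`-element subset
of `[n - b' + 1]`. -/
theorem statement16 (k b c : ℕ) (hk : 2 ≤ k) (hb : 1 ≤ b) :
    ∃ s₀ : ℕ, ∀ s : ℕ, s₀ ≤ s → ∀ n : ℕ, n = k * s →
      ∀ F : Finset (Finset ℕ), IsFamily n k F →
        ShiftedOn F (Finset.Icc 1 (n - c)) →
        (∀ E : ℕ → Finset ℕ, AdmissibleChoice n k b E → (famE n k b E).card < F.card) →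
        ∀ b' : ℕ, s < 2 * b' → b' ≤ s →
          ∀ T : Finset ℕ, T ⊆ Finset.Icc 1 (n - b' + 1) → T.card = k → T ∈ F := by
  refine ⟨2 * (b * k.factorial * (4 * k) ^ (k - 1) + b * k + b + 2 * c + k + 12), ?_⟩
  intro s hs n hn F hFam hShift hE b' hb'1 hb'2 T hT hTk
  by_contra hTF
  set P := b * k.factorial * (4 * k) ^ (k - 1) with hPdef
  set bk := b * k with hbkdef
  -- numeric facts
  have hn2s : 2 * s ≤ n := by rw [hn]; exact Nat.mul_le_mul hk le_rfl
  have hb'big : P + bk + b + 2 * c + k + 12 < b' := by omega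
  have hcb' : c + 1 ≤ b' := by omega
  have hnb' : b' + k + c + 2 ≤ n := by omega
  -- the excluded interval J
  set J := Finset.Icc (n - b' - k + 2) (n - c) with hJdef
  have hJcard : J.card = b' + k - 1 - c := by rw [hJdef, Nat.card_Icc]; omega
  have hJsub1n : J ⊆ Finset.Icc 1 n := by
    rw [hJdef]; exact Finset.Icc_subset_Icc (by omega) (by omega)
  have hJsubM : J ⊆ Finset.Icc 1 (n - c) := by
    rw [hJdef]; exact Finset.Icc_subset_Icc (by omega) (by omega)
  -- every k-subset of J is excluded from F
  have hexcl : ∀ A ∈ J.powersetCard k, A ∉ F := by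
    intro A hAp hAF
    obtain ⟨hAJ, hAk⟩ := Finset.mem_powersetCard.1 hAp
    apply hTF
    refine dominance hShift (A.sum id) A T le_rfl hAF (hAJ.trans hJsubM)
      (hT.trans (Finset.Icc_subset_Icc le_rfl (by omega))) (by rw [hTk, hAk]) ?_
    intro j
    by_cases hj : n - b' + 1 ≤ j
    · have hTfull : T.filter (· ≤ j) = T := by
        apply Finset.filter_true_of_mem
        intro z hz
        have := Finset.mem_Icc.1 (hT hz)
        omega
      rw [hTfull, hTk]
      calc (A.filter (· ≤ j)).card ≤ A.card := Finset.card_filter_le _ _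
        _ = k := hAk
    · push_neg at hj
      have hA1 : (A.filter (· ≤ j)).card ≤ j + 1 - (n - b' - k + 2) := by
        have hsub : A.filter (· ≤ j) ⊆ Finset.Icc (n - b' - k + 2) j := by
          intro z hz
          obtain ⟨hzA, hzj⟩ := Finset.mem_filter.1 hz
          have hzJ := Finset.mem_Icc.1 (hAJ hzA)
          exact Finset.mem_Icc.2 ⟨hzJ.1, hzj⟩
        calc (A.filter (· ≤ j)).card ≤ (Finset.Icc (n - b' - k + 2) j).card :=
              Finset.card_le_card hsub
          _ = j + 1 - (n - b' - k + 2) := Nat.card_Icc _ _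
      have hT1 : (T.filter (· ≤ j)).card + (n - b' + 1 - j) ≥ k := by
        have hsplit := Finset.card_filter_add_card_filter_not (s := T) (p := (· ≤ j))
        have hsub : T.filter (fun z => ¬ z ≤ j) ⊆ Finset.Icc (j + 1) (n - b' + 1) := by
          intro z hz
          obtain ⟨hzT, hzj⟩ := Finset.mem_filter.1 hz
          have := Finset.mem_Icc.1 (hT hzT)
          exact Finset.mem_Icc.2 (by omega)
        have hle : (T.filter (fun z => ¬ z ≤ j)).card ≤ n - b' + 1 + 1 - (j + 1) :=
          (Finset.card_le_card hsub).trans_eq (Nat.card_Icc _ _)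
        omega
      omega
  -- upper bound for |F|
  have hFsub : F ⊆ (Finset.Icc 1 n).powersetCard k \ J.powersetCard k := by
    intro A hAF
    rw [Finset.mem_sdiff]
    obtain ⟨h1, h2⟩ := hFam A hAF
    exact ⟨Finset.mem_powersetCard.2 ⟨h1, h2⟩, fun hp => hexcl A hp hAF⟩
  have hcard1 : (Finset.Icc 1 n).card = n := by rw [Nat.card_Icc]; omega
  have hup : F.card ≤ n.choose k - (b' + k - 1 - c).choose k := by
    have hJP : J.powersetCard k ⊆ (Finset.Icc 1 n).powersetCard k :=
      Finset.powersetCard_mono hJsub1n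
    calc F.card ≤ ((Finset.Icc 1 n).powersetCard k \ J.powersetCard k).card :=
          Finset.card_le_card hFsub
      _ = ((Finset.Icc 1 n).powersetCard k).card - (J.powersetCard k).card :=
          Finset.card_sdiff_of_subset hJP
      _ = n.choose k - (b' + k - 1 - c).choose k := by
          rw [Finset.card_powersetCard, Finset.card_powersetCard, hcard1, hJcard]
  -- an admissible choice and the lower bound for |F|
  set E0 : ℕ → Finset ℕ := fun i => Finset.Icc (b + (i - 1) * (k - 1) + 1) (b + i * (k - 1))
    with hE0
  have hadm : AdmissibleChoice n k b E0 := by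
    constructor
    · intro i hi
      obtain ⟨hi1, hi2⟩ := Finset.mem_Icc.1 hi
      have hmul : i * (k - 1) ≤ (b - 1) * (k - 1) := Nat.mul_le_mul hi2 le_rfl
      have hbk2 : (b - 1) * (k - 1) ≤ b * k := Nat.mul_le_mul (by omega) (by omega)
      have hmul2 : i * (k - 1) = (i - 1) * (k - 1) + (k - 1) := by
        obtain ⟨i', rfl⟩ : ∃ i', i = i' + 1 := ⟨i - 1, by omega⟩
        simp [Nat.add_mul]
      constructor
      · intro z hz
        have := Finset.mem_Icc.1 hz
        exact Finset.mem_Icc.2 ⟨by omega, by omega⟩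
      · rw [hE0]; rw [Nat.card_Icc]; omega
    · intro i hi j hj hij
      obtain ⟨hi1, hi2⟩ := Finset.mem_Icc.1 hi
      obtain ⟨hj1, hj2⟩ := Finset.mem_Icc.1 hj
      rw [Finset.disjoint_left]
      intro z hzi hzj
      have h1 := Finset.mem_Icc.1 hzi
      have h2 := Finset.mem_Icc.1 hzj
      rcases Nat.lt_or_ge i j with h | h
      · have : i * (k - 1) ≤ (j - 1) * (k - 1) := Nat.mul_le_mul (by omega) le_rfl
        omega
      · have hji : j < i := by omega
        have : j * (k - 1) ≤ (i - 1) * (k - 1) := Nat.mul_le_mul (by omega) le_rfl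
        omega
  have hlowE : (n - b).choose k ≤ (famE n k b E0).card := by
    have hsub : (Finset.Icc (b + 1) n).powersetCard k ⊆ famE n k b E0 :=
      Finset.subset_union_left
    have h1 : (Finset.Icc (b + 1) n).card = n - b := by rw [Nat.card_Icc]; omega
    calc (n - b).choose k = ((Finset.Icc (b + 1) n).powersetCard k).card := by
          rw [Finset.card_powersetCard, h1]
      _ ≤ _ := Finset.card_le_card hsub
  have hlow : (n - b).choose k < F.card := lt_of_le_of_lt hlowE (hE E0 hadm)
  -- the arithmetic contradiction
  set m := b' + k - 1 - c with hmdef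
  set q := b' - c with hqdef
  have hq_eq : m + 1 - k = q := by omega
  have hd : q ^ k ≤ k.factorial * m.choose k := by
    have h1 := Nat.pow_sub_le_descFactorial m k
    rw [Nat.descFactorial_eq_factorial_mul_choose] at h1
    rwa [hq_eq] at h1
  have hPq : P ≤ q := by omega
  have hcq : c ≤ q := by omega
  have hn4 : n ≤ 4 * k * q := by
    calc n = k * s := hn
      _ ≤ k * (4 * q) := Nat.mul_le_mul le_rfl (by omega)
      _ = 4 * k * q := by ring
  have hpow : q ^ k = q * q ^ (k - 1) := by
    obtain ⟨k', rfl⟩ : ∃ k', k = k' + 1 := ⟨k - 1, by omega⟩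
    rw [pow_succ]
    simp [Nat.mul_comm]
  have h3 : b * n ^ (k - 1) ≤ m.choose k := by
    have hfact : 0 < k.factorial := Nat.factorial_pos k
    refine Nat.le_of_mul_le_mul_right ?_ hfact
    calc b * n ^ (k - 1) * k.factorial
        ≤ b * (4 * k * q) ^ (k - 1) * k.factorial :=
          Nat.mul_le_mul (Nat.mul_le_mul le_rfl (Nat.pow_le_pow_left hn4 (k - 1))) le_rfl
      _ = (b * k.factorial * (4 * k) ^ (k - 1)) * q ^ (k - 1) := by rw [mul_pow]; ring
      _ ≤ q * q ^ (k - 1) := Nat.mul_le_mul hPq le_rfl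
      _ = q ^ k := hpow.symm
      _ ≤ k.factorial * m.choose k := hd
      _ = m.choose k * k.factorial := Nat.mul_comm _ _
  have hmain : n.choose k ≤ (n - b).choose k + m.choose k := by
    calc n.choose k ≤ (n - b).choose k + b * n.choose (k - 1) := choose_sub_le (by omega) n b
      _ ≤ (n - b).choose k + b * n ^ (k - 1) :=
          Nat.add_le_add_left (Nat.mul_le_mul le_rfl (Nat.choose_le_pow n (k - 1))) _
      _ ≤ (n - b).choose k + m.choose k := Nat.add_le_add_left h3 _
  omega
end

section
/- Let k ≥ 2, b ≥ 1, c ≥ 0 and s ≥ 2 be integers with n = k·s ≥ b + c + bk. Let F be a family of k-element subsets of [n] that is shifted on the interval [b + c + 1, n]. Suppose M is a collection of at most b members of F whose union contains [b], and such that no two distinct members of M contain a common vertex belonging to [b + c + bk] (i.e., to {1, …, b+c+bk}). Then there exists a matching in F that covers [b]. -/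
/-- Key consequence of shiftedness: `F` is closed under replacing a larger element `y ∈ Y`
by a smaller element `x ∈ Y`. -/
lemma shiftedOn_closed {F : Finset (Finset ℕ)} {Y : Finset ℕ} (h : ShiftedOn F Y)
    {x y : ℕ} (hx : x ∈ Y) (hy : y ∈ Y) (hxy : x < y) {A : Finset ℕ}
    (hA : A ∈ F) (hyA : y ∈ A) (hxA : x ∉ A) : insert x (A.erase y) ∈ F := by
  by_contra hcon
  have hc := h.1 x hx y hy hxy.le
  have heq := h.2 x hx y hy hxy.ne hc
  have hmem : shiftSet F x y A ∈ shiftFam F x y := Finset.mem_image_of_mem _ hA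
  rw [heq] at hmem
  rw [shiftSet, if_pos ⟨hyA, hxA, hcon⟩] at hmem
  exact hcon hmem

/-- Fact 5.0 / "no covering G": Let `F` be shifted on `[b+c+1, n]`.
If `M` is a collection of at most `b` members of `F` covering `[b]` such that no two
distinct members of `M` share a vertex of `[b+c+bk]`, then some matching in `F` covers
`[b]`. -/
theorem statement17 (k b c s n : ℕ) (hk : 2 ≤ k) (hb : 1 ≤ b) (hs : 2 ≤ s)
    (hn : n = k * s) (hbig : b + c + b * k ≤ n)
    (F : Finset (Finset ℕ)) (hF : IsFamily n k F)
    (hshift : ShiftedOn F (Finset.Icc (b + c + 1) n))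
    (M : Finset (Finset ℕ)) (hMF : M ⊆ F) (hMcard : M.card ≤ b)
    (hMcover : Finset.Icc 1 b ⊆ M.biUnion id)
    (hMsep : ∀ S ∈ M, ∀ T ∈ M, S ≠ T →
      ∀ v ∈ Finset.Icc 1 (b + c + b * k), v ∈ S → v ∉ T) :
    ∃ M' : Finset (Finset ℕ), IsMatchingIn F M' ∧ Covers M' (Finset.Icc 1 b) := by
  set W := b + c + b * k with hWdef
  -- Induct on the total number of "high" elements (those > W) in members of M.
  suffices h : ∀ m (M : Finset (Finset ℕ)),
      (∑ S ∈ M, (S.filter (fun v => W < v)).card) = m →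
      M ⊆ F → M.card ≤ b → Finset.Icc 1 b ⊆ M.biUnion id →
      (∀ S ∈ M, ∀ T ∈ M, S ≠ T → ∀ v ∈ Finset.Icc 1 W, v ∈ S → v ∉ T) →
      ∃ M', IsMatchingIn F M' ∧ Covers M' (Finset.Icc 1 b) by
    exact h _ M rfl hMF hMcard hMcover hMsep
  intro m
  induction m with
  | zero =>
    intro M hsum hMF hMcard hMcover hMsep
    refine ⟨M, ⟨hMF, ?_⟩, hMcover⟩
    intro A hA B hB hAB
    rw [Finset.sum_eq_zero_iff] at hsum
    show Disjoint A B
    rw [Finset.disjoint_left]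
    intro v hvA
    have hAmem : A ∈ M := hA
    have hBmem : B ∈ M := hB
    have hAn := (hF A (hMF hAmem)).1 hvA
    rw [Finset.mem_Icc] at hAn
    have hlow : ¬ W < v := by
      intro hlt
      have := hsum A hAmem
      rw [Finset.card_eq_zero] at this
      have : v ∈ A.filter (fun v => W < v) := Finset.mem_filter.2 ⟨hvA, hlt⟩
      simp_all
      exact absurd (this hvA) (not_le.2 hlt)
    exact hMsep A hAmem B hBmem hAB v (Finset.mem_Icc.2 ⟨hAn.1, not_lt.1 hlow⟩) hvA
  | succ m ih =>
    intro M hsum hMF hMcard hMcover hMsep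
    -- Find a set S ∈ M containing a high element y.
    have hpos : ∃ S ∈ M, 0 < (S.filter (fun v => W < v)).card := by
      by_contra hcon
      push_neg at hcon
      have : (∑ S ∈ M, (S.filter (fun v => W < v)).card) = 0 :=
        Finset.sum_eq_zero (fun S hS => Nat.le_zero.1 (hcon S hS))
      omega
    obtain ⟨S, hSM, hScard⟩ := hpos
    obtain ⟨y, hy⟩ := Finset.card_pos.1 hScard
    rw [Finset.mem_filter] at hy
    obtain ⟨hyS, hyW⟩ := hy
    have hSn := hF S (hMF hSM)
    have hyn : y ≤ n := (Finset.mem_Icc.1 (hSn.1 hyS)).2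
    -- Find a fresh element x in the window [b+c+1, W] not used by any member of M.
    have hwin : ∃ x ∈ Finset.Icc (b + c + 1) W, ∀ T ∈ M, x ∉ T := by
      set U := M.biUnion (fun T => T.filter (fun v => b + c + 1 ≤ v ∧ v ≤ W)) with hU
      have hUcard : U.card < b * k := by
        have h1 : U.card ≤ ∑ T ∈ M, (T.filter (fun v => b + c + 1 ≤ v ∧ v ≤ W)).card :=
          Finset.card_biUnion_le
      -- window + high parts of each T are disjoint subsets of T, |T| = k
        have h2 : ∀ T ∈ M, (T.filter (fun v => b + c + 1 ≤ v ∧ v ≤ W)).card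
            + (T.filter (fun v => W < v)).card ≤ k := by
          intro T hT
          have hTk := (hF T (hMF hT)).2
          calc (T.filter (fun v => b + c + 1 ≤ v ∧ v ≤ W)).card
              + (T.filter (fun v => W < v)).card
              = ((T.filter (fun v => b + c + 1 ≤ v ∧ v ≤ W))
                ∪ (T.filter (fun v => W < v))).card := by
                rw [Finset.card_union_of_disjoint]
                rw [Finset.disjoint_left]
                intro a ha hb
                rw [Finset.mem_filter] at ha hb
                omega
            _ ≤ T.card := Finset.card_le_card (by
                intro a ha
                rcases Finset.mem_union.1 ha with h | h <;>
                  exact (Finset.mem_filter.1 h).1)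
            _ = k := hTk
        have h3 : (∑ T ∈ M, (T.filter (fun v => b + c + 1 ≤ v ∧ v ≤ W)).card)
            + (∑ T ∈ M, (T.filter (fun v => W < v)).card) ≤ M.card * k := by
          rw [← Finset.sum_add_distrib]
          calc _ ≤ ∑ _T ∈ M, k := Finset.sum_le_sum h2
            _ = M.card * k := by rw [Finset.sum_const, smul_eq_mul]
        have h4 : M.card * k ≤ b * k := Nat.mul_le_mul_right k hMcard
        omega
      have hIcc : (Finset.Icc (b + c + 1) W).card = b * k := by
        rw [Nat.card_Icc]; omega
      have : U.card < (Finset.Icc (b + c + 1) W).card := by omega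
      have hns : ¬ Finset.Icc (b + c + 1) W ⊆ U :=
        fun hsub => absurd (Finset.card_le_card hsub) (by omega)
      obtain ⟨x, hx1, hx2⟩ := Finset.not_subset.1 hns
      refine ⟨x, hx1, fun T hT hxT => hx2 ?_⟩
      rw [hU, Finset.mem_biUnion]
      rw [Finset.mem_Icc] at hx1
      exact ⟨T, hT, Finset.mem_filter.2 ⟨hxT, hx1.1, hx1.2⟩⟩
    obtain ⟨x, hxIcc, hxfresh⟩ := hwin
    rw [Finset.mem_Icc] at hxIcc
    have hxS : x ∉ S := hxfresh S hSM
    have hxy : x < y := by omega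
    -- Replace y by x in S.
    set S' := insert x (S.erase y) with hS'
    have hS'F : S' ∈ F := by
      refine shiftedOn_closed hshift ?_ ?_ hxy (hMF hSM) hyS hxS
      · rw [Finset.mem_Icc]; omega
      · rw [Finset.mem_Icc]; omega
    have hxS' : x ∈ S' := Finset.mem_insert_self _ _
    have hS'new : ∀ T ∈ M, S' ≠ T := by
      intro T hT heq
      exact hxfresh T hT (heq ▸ hxS')
    have hS'notem : S' ∉ M.erase S := fun h => hS'new S' (Finset.mem_of_mem_erase h) rfl
    set M' := insert S' (M.erase S) with hM'
    -- apply the induction hypothesis to M'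
    refine ih M' ?_ ?_ ?_ ?_ ?_
    · -- sum decreases by one
      have e1 : (∑ T ∈ M', (T.filter (fun v => W < v)).card)
          = (S'.filter (fun v => W < v)).card
            + ∑ T ∈ M.erase S, (T.filter (fun v => W < v)).card := by
        rw [hM', Finset.sum_insert hS'notem]
      have e2 : (∑ T ∈ M.erase S, (T.filter (fun v => W < v)).card)
          + (S.filter (fun v => W < v)).card = m + 1 := by
        rw [Finset.sum_erase_add _ _ hSM, hsum]
      have e3 : (S'.filter (fun v => W < v)).card
          = (S.filter (fun v => W < v)).card - 1 := by
        have : S'.filter (fun v => W < v) = (S.filter (fun v => W < v)).erase y := by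
          rw [hS', Finset.filter_insert, if_neg (by omega), Finset.filter_erase]
        rw [this, Finset.card_erase_of_mem (Finset.mem_filter.2 ⟨hyS, hyW⟩)]
      omega
    · -- M' ⊆ F
      intro T hT
      rcases Finset.mem_insert.1 hT with h | h
      · exact h ▸ hS'F
      · exact hMF (Finset.mem_of_mem_erase h)
    · -- card
      rw [hM']
      have := Finset.card_insert_le S' (M.erase S)
      have := Finset.card_erase_of_mem hSM
      have : 1 ≤ M.card := Finset.card_pos.2 ⟨S, hSM⟩
      omega
    · -- cover
      intro v hv
      obtain ⟨T, hT, hvT⟩ := Finset.mem_biUnion.1 (hMcover hv)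
      rw [Finset.mem_Icc] at hv
      rw [Finset.mem_biUnion]
      by_cases hTS : T = S
      · refine ⟨S', Finset.mem_insert_self _ _, ?_⟩
        have hvy : v ≠ y := by omega
        exact Finset.mem_insert_of_mem (Finset.mem_erase.2 ⟨hvy, hTS ▸ hvT⟩)
      · exact ⟨T, Finset.mem_insert_of_mem (Finset.mem_erase.2 ⟨hTS, hT⟩), hvT⟩
    · -- separation
      intro A hA B hB hAB v hv hvA
      rw [Finset.mem_Icc] at hv
      rcases Finset.mem_insert.1 hA with hA' | hA' <;>
        rcases Finset.mem_insert.1 hB with hB' | hB'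
      · exact absurd (hA'.trans hB'.symm) hAB
      · -- A = S', B ∈ M.erase S
        subst hA'
        have hBM := Finset.mem_of_mem_erase hB'
        have hBS : B ≠ S := Finset.ne_of_mem_erase hB'
        rcases Finset.mem_insert.1 hvA with hvx | hvS
        · subst hvx; exact hxfresh B hBM
        · exact hMsep S hSM B hBM (Ne.symm hBS) v (Finset.mem_Icc.2 hv)
            (Finset.mem_of_mem_erase hvS)
      · -- A ∈ M.erase S, B = S'
        subst hB'
        have hAM := Finset.mem_of_mem_erase hA'
        have hAS : A ≠ S := Finset.ne_of_mem_erase hA'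
        intro hvB
        rcases Finset.mem_insert.1 hvB with hvx | hvS
        · exact hxfresh A hAM (hvx ▸ hvA)
        · exact hMsep A hAM S hSM hAS v (Finset.mem_Icc.2 hv) hvA
            (Finset.mem_of_mem_erase hvS)
      · exact hMsep A (Finset.mem_of_mem_erase hA') B (Finset.mem_of_mem_erase hB')
          hAB v (Finset.mem_Icc.2 hv) hvA
end
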